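/- arXiv:2101.00512 — 12 statements merged into one kernel-verified Lean document; each statement's English description precedes it below -/
import Mathlib

section
/- Let η > 0, δ > 0, β ∈ ℝ, and set γ* := (η² + β²)/δ. Let L be a real n×n matrix satisfying x·(Lx) ≤ 0 for every x ∈ ℝⁿ. Then for every w ∈ ℝⁿ, ‖((ηI − L)² + β²I)w‖ ≤ ‖(δI − L)(γ*I − L)w‖, where ‖·‖ is the Euclidean norm on ℝⁿ. -/
open Matrix
open scoped RealInnerProductSpace

lemma stmt2_aux {E : Type*} [NormedAddCommGroup E] [InnerProductSpace ℝ E]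
    (a m : E) (c : ℝ) (hc : 0 ≤ c) (h : 0 ≤ ⟪a, m⟫) : ‖a‖ ≤ ‖a + c • m‖ := by
  have key : ‖a‖ ^ 2 ≤ ‖a + c • m‖ ^ 2 := by
    rw [norm_add_sq_real, real_inner_smul_right]
    nlinarith [mul_nonneg hc h, sq_nonneg ‖c • m‖]
  exact (pow_le_pow_iff_left₀ (norm_nonneg _) (norm_nonneg _) two_ne_zero).mp key

/-- For `η, δ > 0`, `β ∈ ℝ`, `γ* := (η² + β²)/δ`, and a real matrix `L` with
`x ⬝ (L x) ≤ 0` for all `x`, one has `‖((ηI - L)² + β² I) w‖ ≤ ‖(δI - L)(γ* I - L) w‖`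
for every `w` (Euclidean norm). -/
theorem stmt2 {n : ℕ} (η δ β : ℝ) (hη : 0 < η) (hδ : 0 < δ)
    (L : Matrix (Fin n) (Fin n) ℝ)
    (hL : ∀ x : EuclideanSpace ℝ (Fin n), ⟪x, toEuclideanCLM (𝕜 := ℝ) L x⟫ ≤ 0) :
    ∀ w : EuclideanSpace ℝ (Fin n),
      ‖toEuclideanCLM (𝕜 := ℝ)
          ((η • (1 : Matrix (Fin n) (Fin n) ℝ) - L) ^ 2 + β ^ 2 • 1) w‖ ≤
      ‖toEuclideanCLM (𝕜 := ℝ)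
          ((δ • (1 : Matrix (Fin n) (Fin n) ℝ) - L) *
            (((η ^ 2 + β ^ 2) / δ) • (1 : Matrix (Fin n) (Fin n) ℝ) - L)) w‖ := by
  intro w
  set γ : ℝ := (η ^ 2 + β ^ 2) / δ with hγdef
  set c : ℝ := δ + γ - 2 * η with hcdef
  have hδγ : δ * γ = η ^ 2 + β ^ 2 := by
    rw [hγdef]; field_simp [hδ.ne']
  have hc : 0 ≤ c := by
    have h1 : c * δ = (δ - η) ^ 2 + β ^ 2 := by
      have : c * δ = δ * δ + δ * γ - 2 * η * δ := by rw [hcdef]; ring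
      rw [this, hδγ]; ring
    nlinarith [sq_nonneg (δ - η), sq_nonneg β]
  have hmat : (δ • (1 : Matrix (Fin n) (Fin n) ℝ) - L) * (γ • 1 - L)
      = ((η • (1 : Matrix (Fin n) (Fin n) ℝ) - L) ^ 2 + β ^ 2 • 1) + c • (-L) := by
    have expand : (δ • (1 : Matrix (Fin n) (Fin n) ℝ) - L) * (γ • 1 - L)
        = (δ * γ) • (1 : Matrix (Fin n) (Fin n) ℝ) - (δ + γ) • L + L * L := by
      simp only [sub_mul, mul_sub, smul_mul_assoc, mul_smul_comm, smul_smul,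
        Matrix.one_mul, Matrix.mul_one]
      module
    have expand2 : ((η • (1 : Matrix (Fin n) (Fin n) ℝ) - L) ^ 2 + β ^ 2 • 1) + c • (-L)
        = (η ^ 2 + β ^ 2) • (1 : Matrix (Fin n) (Fin n) ℝ) - (2 * η + c) • L + L * L := by
      simp only [pow_two, sub_mul, mul_sub, smul_mul_assoc, mul_smul_comm, smul_smul,
        Matrix.one_mul, Matrix.mul_one]
      module
    rw [expand, expand2, hδγ]
    have : δ + γ = 2 * η + c := by rw [hcdef]; ring
    rw [this]
  rw [hmat]
  set T := toEuclideanCLM (𝕜 := ℝ) L with hT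
  have hmapA : toEuclideanCLM (𝕜 := ℝ)
      ((η • (1 : Matrix (Fin n) (Fin n) ℝ) - L) ^ 2 + β ^ 2 • 1)
      = ((η • (1 : EuclideanSpace ℝ (Fin n) →L[ℝ] EuclideanSpace ℝ (Fin n)) - T) ^ 2
          + β ^ 2 • 1) := by
    simp only [map_add, map_sub, _root_.map_smul, map_pow, _root_.map_one, hT]
  have hmap : toEuclideanCLM (𝕜 := ℝ)
      (((η • (1 : Matrix (Fin n) (Fin n) ℝ) - L) ^ 2 + β ^ 2 • 1) + c • (-L))
      = ((η • (1 : EuclideanSpace ℝ (Fin n) →L[ℝ] EuclideanSpace ℝ (Fin n)) - T) ^ 2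
          + β ^ 2 • 1) + c • (-T) := by
    simp only [map_add, _root_.map_smul, map_neg, hmapA, hT]
  rw [hmap, hmapA]
  set A := (η • (1 : EuclideanSpace ℝ (Fin n) →L[ℝ] EuclideanSpace ℝ (Fin n)) - T) ^ 2
      + β ^ 2 • 1 with hA
  have hAw : A w = (η ^ 2 + β ^ 2) • w - (2 * η) • T w + T (T w) := by
    rw [hA]
    simp only [pow_two, ContinuousLinearMap.mul_apply, ContinuousLinearMap.add_apply,
      ContinuousLinearMap.sub_apply, ContinuousLinearMap.smul_apply,
      ContinuousLinearMap.one_apply, map_sub, _root_.map_smul]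
    module
  have happly : (A + c • (-T)) w = A w + c • (-(T w)) := by
    simp [ContinuousLinearMap.add_apply, ContinuousLinearMap.smul_apply,
      ContinuousLinearMap.neg_apply]
  rw [happly]
  have h1 : ⟪w, T w⟫ ≤ 0 := hL w
  have h2 : ⟪T w, T (T w)⟫ ≤ 0 := hL (T w)
  have hinner : 0 ≤ ⟪A w, -(T w)⟫ := by
    rw [hAw]
    simp only [inner_neg_right, inner_add_left, inner_sub_left, real_inner_smul_left]
    rw [real_inner_comm (T w) (T (T w))]
    have h3 : (0:ℝ) ≤ ⟪T w, T w⟫ := real_inner_self_nonneg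
    have hβ : (0:ℝ) ≤ β ^ 2 := sq_nonneg β
    nlinarith
  exact stmt2_aux (A w) (-(T w)) c hc hinner
end

section
/- Let η > 0, δ > 0, β ∈ ℝ, and set γ* := (η² + β²)/δ. Let L be a real n×n matrix satisfying x·(Lx) ≤ 0 for every x ∈ ℝⁿ. Then for every w ∈ ℝⁿ, 2η·‖(δI − L)(γ*I − L)w‖ ≤ (δ + γ*)·‖((ηI − L)² + β²I)w‖, where ‖·‖ is the Euclidean norm on ℝⁿ. -/
open Matrix
open scoped RealInnerProductSpace

private lemma vec_key {E : Type*} [NormedAddCommGroup E] [InnerProductSpace ℝ E]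
    (a u : E) (s t : ℝ) (ht : 0 ≤ t) (hst : t ≤ s) (hau : ⟪a, u⟫ ≤ 0) :
    t * ‖a - s • u‖ ≤ s * ‖a - t • u‖ := by
  have hs : 0 ≤ s := ht.trans hst
  have h1 : ‖a - s • u‖ ^ 2 = ‖a‖ ^ 2 - 2 * s * ⟪a, u⟫ + s ^ 2 * ‖u‖ ^ 2 := by
    rw [norm_sub_sq_real, real_inner_smul_right, norm_smul, Real.norm_eq_abs,
      abs_of_nonneg hs, mul_pow]
    ring
  have h2 : ‖a - t • u‖ ^ 2 = ‖a‖ ^ 2 - 2 * t * ⟪a, u⟫ + t ^ 2 * ‖u‖ ^ 2 := by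
    rw [norm_sub_sq_real, real_inner_smul_right, norm_smul, Real.norm_eq_abs,
      abs_of_nonneg ht, mul_pow]
    ring
  have hsq : (t * ‖a - s • u‖) ^ 2 ≤ (s * ‖a - t • u‖) ^ 2 := by
    rw [mul_pow, mul_pow, h1, h2]
    nlinarith [mul_nonneg (mul_nonneg (mul_nonneg hs ht) (sub_nonneg.2 hst))
        (neg_nonneg.2 hau),
      mul_nonneg (mul_nonneg (sub_nonneg.2 hst) (add_nonneg hs ht)) (sq_nonneg ‖a‖)]
  have h3 : 0 ≤ t * ‖a - s • u‖ := mul_nonneg ht (norm_nonneg _)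
  have h4 : 0 ≤ s * ‖a - t • u‖ := mul_nonneg hs (norm_nonneg _)
  nlinarith [hsq, h3, h4]

/-- For `η, δ > 0`, `β ∈ ℝ`, `γ* := (η² + β²)/δ`, and a real matrix `L` with
`x ⬝ (L x) ≤ 0` for all `x`, one has
`2η ‖(δI - L)(γ* I - L) w‖ ≤ (δ + γ*) ‖((ηI - L)² + β² I) w‖` for every `w`
(Euclidean norm). -/
theorem stmt3 {n : ℕ} (η δ β : ℝ) (hη : 0 < η) (hδ : 0 < δ)
    (L : Matrix (Fin n) (Fin n) ℝ)
    (hL : ∀ x : EuclideanSpace ℝ (Fin n), ⟪x, toEuclideanCLM (𝕜 := ℝ) L x⟫ ≤ 0) :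
    ∀ w : EuclideanSpace ℝ (Fin n),
      2 * η * ‖toEuclideanCLM (𝕜 := ℝ)
          ((δ • (1 : Matrix (Fin n) (Fin n) ℝ) - L) *
            (((η ^ 2 + β ^ 2) / δ) • (1 : Matrix (Fin n) (Fin n) ℝ) - L)) w‖ ≤
      (δ + (η ^ 2 + β ^ 2) / δ) *
        ‖toEuclideanCLM (𝕜 := ℝ)
          ((η • (1 : Matrix (Fin n) (Fin n) ℝ) - L) ^ 2 + β ^ 2 • 1) w‖ := by
  intro w
  set γ : ℝ := (η ^ 2 + β ^ 2) / δ with hγ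
  set T : EuclideanSpace ℝ (Fin n) →L[ℝ] EuclideanSpace ℝ (Fin n) :=
    toEuclideanCLM (𝕜 := ℝ) L with hT
  have hδγ : δ * γ = η ^ 2 + β ^ 2 := by
    rw [hγ]; field_simp
  set a : EuclideanSpace ℝ (Fin n) := (η ^ 2 + β ^ 2) • w + T (T w) with ha
  set u : EuclideanSpace ℝ (Fin n) := T w with hu
  have hB : toEuclideanCLM (𝕜 := ℝ)
      ((δ • (1 : Matrix (Fin n) (Fin n) ℝ) - L) *
        (γ • (1 : Matrix (Fin n) (Fin n) ℝ) - L)) w = a - (δ + γ) • u := by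
    rw [_root_.map_mul, map_sub, map_sub, _root_.map_smul, _root_.map_smul, _root_.map_one, ha, hu, ← hT,
      ContinuousLinearMap.mul_apply]
    simp only [ContinuousLinearMap.sub_apply, ContinuousLinearMap.smul_apply,
      ContinuousLinearMap.one_apply, map_sub, _root_.map_smul]
    rw [← hδγ]
    module
  have hA : toEuclideanCLM (𝕜 := ℝ)
      ((η • (1 : Matrix (Fin n) (Fin n) ℝ) - L) ^ 2 + β ^ 2 • 1) w
      = a - (2 * η) • u := by
    rw [map_add, map_pow, map_sub, _root_.map_smul, _root_.map_smul, _root_.map_one, ha, hu, ← hT,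
      sq, ContinuousLinearMap.add_apply, ContinuousLinearMap.mul_apply]
    simp only [ContinuousLinearMap.sub_apply, ContinuousLinearMap.smul_apply,
      ContinuousLinearMap.one_apply, map_sub, _root_.map_smul]
    module
  rw [hB, hA]
  have hau : ⟪a, u⟫ ≤ 0 := by
    rw [ha, hu, inner_add_left, real_inner_smul_left]
    have h1 := hL w
    have h2 := hL (T w)
    have h3 : ⟪T (T w), T w⟫ = ⟪T w, T (T w)⟫ := real_inner_comm _ _
    nlinarith [sq_nonneg η, sq_nonneg β]
  have hst : 2 * η ≤ δ + γ := by
    have h : (2 * η - δ) * δ ≤ η ^ 2 + β ^ 2 := by nlinarith [sq_nonneg (η - δ)]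
    have := (le_div_iff₀ hδ).2 h
    rw [← hγ] at this
    linarith
  exact vec_key a u (δ + γ) (2 * η) (by linarith) hst hau
end

section
/- Let η > 0, δ > 0, β ∈ ℝ, and set γ* := (η² + β²)/δ. Let L be a real n×n matrix satisfying x·(Lx) ≤ 0 for every x ∈ ℝⁿ. Then the matrices δI − L, γ*I − L, and (ηI − L)² + β²I are all invertible, and the preconditioned operator P_{δ,γ*} := (δI − L)⁻¹(γ*I − L)⁻¹[(ηI − L)² + β²I] satisfies the condition number bound κ(P_{δ,γ*}) := ‖P_{δ,γ*}‖₂ · ‖P_{δ,γ*}⁻¹‖₂ ≤ (1/(2η))·(δ + (η² + β²)/δ). -/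
open Matrix
open scoped RealInnerProductSpace

/-- The `ℓ²` operator norm (spectral norm) of a real `n × n` matrix. -/
noncomputable def l2OpNorm {n : ℕ} (A : Matrix (Fin n) (Fin n) ℝ) : ℝ :=
  ‖Matrix.toEuclideanCLM (𝕜 := ℝ) A‖


namespace Stmt4Aux

variable {E : Type*} [NormedAddCommGroup E] [InnerProductSpace ℝ E]

lemma two_eta_le (η δ β γ : ℝ) (hη : 0 < η) (hδ : 0 < δ) (hγ : 0 < γ)
    (hδγ : δ * γ = η ^ 2 + β ^ 2) : 2 * η ≤ δ + γ := by
  nlinarith [sq_nonneg (δ - γ), sq_nonneg β]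

lemma qlower (T : E →L[ℝ] E) (hT : ∀ x, ⟪x, T x⟫ ≤ 0) (η δ β γ : ℝ)
    (hη : 0 < η) (hδ : 0 < δ) (hγ : 0 < γ) (hδγ : δ * γ = η ^ 2 + β ^ 2) (v : E) :
    2 * η * ‖T v‖ ≤ ‖(δ * γ) • v - (2 * η) • T v + T (T v)‖ := by
  set t := T v with ht
  set w := (δ * γ) • v - (2 * η) • t + T t with hw
  have hp : ⟪v, t⟫ ≤ 0 := hT v
  have hq : ⟪T t, t⟫ ≤ 0 := by rw [real_inner_comm]; exact hT t
  have hip : ⟪w, t⟫ = (δ * γ) * ⟪v, t⟫ - (2 * η) * ‖t‖ ^ 2 + ⟪T t, t⟫ := by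
    rw [hw]
    simp [inner_add_left, inner_sub_left, real_inner_smul_left, real_inner_self_eq_norm_sq]
  have hcs : -⟪w, t⟫ ≤ ‖w‖ * ‖t‖ := by
    have h := real_inner_le_norm (-w) t
    simpa [inner_neg_left] using h
  have key : 2 * η * ‖t‖ ^ 2 ≤ ‖w‖ * ‖t‖ := by
    nlinarith [mul_nonneg (mul_pos hδ hγ).le (neg_nonneg.2 hp)]
  rcases eq_or_lt_of_le (norm_nonneg t) with h0 | h0
  · rw [← h0, mul_zero]; exact norm_nonneg w
  · nlinarith

lemma claim1 (T : E →L[ℝ] E) (hT : ∀ x, ⟪x, T x⟫ ≤ 0) (η δ β γ : ℝ)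
    (hη : 0 < η) (hδ : 0 < δ) (hγ : 0 < γ) (hδγ : δ * γ = η ^ 2 + β ^ 2) (v : E) :
    ‖(δ * γ) • v - (2 * η) • T v + T (T v)‖ ≤ ‖(δ * γ) • v - (δ + γ) • T v + T (T v)‖ := by
  set t := T v with ht
  set a := (δ * γ) • v - (δ + γ) • t + T t with ha
  have hc : 0 ≤ δ + γ - 2 * η := by
    have := two_eta_le η δ β γ hη hδ hγ hδγ; linarith
  have he : (δ * γ) • v - (2 * η) • t + T t = a + (δ + γ - 2 * η) • t := by
    rw [ha]; module
  have hp : ⟪v, t⟫ ≤ 0 := hT v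
  have hq : ⟪T t, t⟫ ≤ 0 := by rw [real_inner_comm]; exact hT t
  have hip : ⟪a, t⟫ = (δ * γ) * ⟪v, t⟫ - (δ + γ) * ‖t‖ ^ 2 + ⟪T t, t⟫ := by
    rw [ha]
    simp [inner_add_left, inner_sub_left, real_inner_smul_left, real_inner_self_eq_norm_sq]
  have hsq : ‖a + (δ + γ - 2 * η) • t‖ ^ 2 ≤ ‖a‖ ^ 2 := by
    rw [norm_add_sq_real, real_inner_smul_right]
    have h2 : ‖(δ + γ - 2 * η) • t‖ ^ 2 = (δ + γ - 2 * η) ^ 2 * ‖t‖ ^ 2 := by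
      rw [norm_smul, Real.norm_eq_abs, mul_pow, sq_abs]
    rw [h2, hip]
    nlinarith [mul_nonneg hc (mul_nonneg (mul_pos hδ hγ).le (neg_nonneg.2 hp)),
      mul_nonneg hc (neg_nonneg.2 hq),
      mul_nonneg (mul_nonneg hc (by linarith : (0:ℝ) ≤ δ + γ + 2 * η)) (sq_nonneg ‖t‖)]
  rw [he]
  nlinarith [norm_nonneg (a + (δ + γ - 2 * η) • t), norm_nonneg a]

lemma claim2 (T : E →L[ℝ] E) (hT : ∀ x, ⟪x, T x⟫ ≤ 0) (η δ β γ : ℝ)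
    (hη : 0 < η) (hδ : 0 < δ) (hγ : 0 < γ) (hδγ : δ * γ = η ^ 2 + β ^ 2) (v : E) :
    ‖(δ * γ) • v - (δ + γ) • T v + T (T v)‖ ≤
      ((δ + γ) / (2 * η)) * ‖(δ * γ) • v - (2 * η) • T v + T (T v)‖ := by
  set t := T v with ht
  set w := (δ * γ) • v - (2 * η) • t + T t with hw
  have hc : 0 ≤ δ + γ - 2 * η := by
    have := two_eta_le η δ β γ hη hδ hγ hδγ; linarith
  have he : (δ * γ) • v - (δ + γ) • t + T t = w - (δ + γ - 2 * η) • t := by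
    rw [hw]; module
  have h1 : 2 * η * ‖t‖ ≤ ‖w‖ := qlower T hT η δ β γ hη hδ hγ hδγ v
  rw [he]
  have step1 : ‖w - (δ + γ - 2 * η) • t‖ ≤ ‖w‖ + (δ + γ - 2 * η) * ‖t‖ := by
    refine (norm_sub_le _ _).trans ?_
    rw [norm_smul, Real.norm_eq_abs, abs_of_nonneg hc]
  have ht' : ‖t‖ ≤ ‖w‖ / (2 * η) := by
    rw [le_div_iff₀ (by linarith : (0:ℝ) < 2 * η)]; nlinarith
  have step2 : (δ + γ - 2 * η) * ‖t‖ ≤ (δ + γ - 2 * η) * (‖w‖ / (2 * η)) :=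
    mul_le_mul_of_nonneg_left ht' hc
  have heq : ‖w‖ + (δ + γ - 2 * η) * (‖w‖ / (2 * η)) = (δ + γ) / (2 * η) * ‖w‖ := by
    field_simp; ring
  linarith

lemma injA (T : E →L[ℝ] E) (hT : ∀ x, ⟪x, T x⟫ ≤ 0) (a : ℝ) (ha : 0 < a) (v : E)
    (h : a • v - T v = 0) : v = 0 := by
  have h0 : ⟪v, a • v - T v⟫ = 0 := by rw [h, inner_zero_right]
  have h1 : a * ‖v‖ ^ 2 - ⟪v, T v⟫ = 0 := by
    rw [← h0]; simp [inner_sub_right, real_inner_smul_right, real_inner_self_eq_norm_sq]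
  have h2 := hT v
  have h3 : ‖v‖ = 0 := by
    by_contra hne
    have hpos : 0 < ‖v‖ := lt_of_le_of_ne (norm_nonneg v) (Ne.symm hne)
    nlinarith [mul_pos ha (pow_pos hpos 2)]
  exact norm_eq_zero.mp h3

lemma injQ (T : E →L[ℝ] E) (hT : ∀ x, ⟪x, T x⟫ ≤ 0) (η δ β γ : ℝ)
    (hη : 0 < η) (hδ : 0 < δ) (hγ : 0 < γ) (hδγ : δ * γ = η ^ 2 + β ^ 2) (v : E)
    (h : (δ * γ) • v - (2 * η) • T v + T (T v) = 0) : v = 0 := by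
  have h1 := qlower T hT η δ β γ hη hδ hγ hδγ v
  rw [h, norm_zero] at h1
  have ht0 : T v = 0 := by
    have h2 := norm_nonneg (T v)
    have h3 : ‖T v‖ = 0 := by nlinarith
    exact norm_eq_zero.mp h3
  rw [ht0, map_zero, smul_zero, sub_zero, add_zero] at h
  have := smul_eq_zero.mp h
  rcases this with h' | h'
  · exact absurd h' (by positivity)
  · exact h'

end Stmt4Aux

namespace Stmt4Aux

lemma isUnit_of_inj {n : ℕ} (A : Matrix (Fin n) (Fin n) ℝ)
    (h : ∀ v : EuclideanSpace ℝ (Fin n), toEuclideanCLM (𝕜 := ℝ) A v = 0 → v = 0) :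
    IsUnit A := by
  rw [← Matrix.mulVec_injective_iff_isUnit]
  intro x y hxy
  have h2 : toEuclideanCLM (𝕜 := ℝ) A
      ((WithLp.equiv 2 _).symm x - (WithLp.equiv 2 _).symm y) = 0 := by
    rw [map_sub, WithLp.equiv_symm_apply, Matrix.toEuclideanCLM_toLp, Matrix.toEuclideanCLM_toLp]
    simp only [Matrix.toLin'_apply, hxy, sub_self]
  have h3 := sub_eq_zero.mp (h _ h2)
  exact (WithLp.equiv 2 _).symm.injective h3

lemma inv_comm {n : ℕ} {A B : Matrix (Fin n) (Fin n) ℝ} (hA : IsUnit A)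
    (h : A * B = B * A) : A⁻¹ * B = B * A⁻¹ := by
  have hd : IsUnit A.det := (Matrix.isUnit_iff_isUnit_det A).mp hA
  have h1 : A⁻¹ * A = 1 := Matrix.nonsing_inv_mul A hd
  have h2 : A * A⁻¹ = 1 := Matrix.mul_nonsing_inv A hd
  calc A⁻¹ * B = A⁻¹ * B * (A * A⁻¹) := by rw [h2, mul_one]
    _ = A⁻¹ * (B * A) * A⁻¹ := by simp only [mul_assoc]
    _ = A⁻¹ * (A * B) * A⁻¹ := by rw [h]
    _ = (A⁻¹ * A) * (B * A⁻¹) := by simp only [mul_assoc]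
    _ = B * A⁻¹ := by rw [h1, one_mul]

end Stmt4Aux

namespace Stmt4Aux
lemma clm_mul_apply {n : ℕ} (A B : Matrix (Fin n) (Fin n) ℝ)
    (x : EuclideanSpace ℝ (Fin n)) :
    toEuclideanCLM (𝕜 := ℝ) (A * B) x
      = toEuclideanCLM (𝕜 := ℝ) A (toEuclideanCLM (𝕜 := ℝ) B x) := by
  simp only [_root_.map_mul, ContinuousLinearMap.mul_apply]
lemma clm_one_apply {n : ℕ} (x : EuclideanSpace ℝ (Fin n)) :
    toEuclideanCLM (𝕜 := ℝ) (1 : Matrix (Fin n) (Fin n) ℝ) x = x := by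
  simp only [_root_.map_one, ContinuousLinearMap.one_apply]
end Stmt4Aux

open Stmt4Aux in
set_option maxHeartbeats 1000000 in
/-- Theorem A.1 (upper bound): for `η, δ > 0`, `β ∈ ℝ`, `γ* := (η² + β²)/δ`, and a real
matrix `L` with field of values in the closed left half-plane, the matrices `δI - L`,
`γ* I - L` and `(ηI - L)² + β² I` are invertible and the preconditioned operator
`P = (δI - L)⁻¹ (γ* I - L)⁻¹ [(ηI - L)² + β² I]` has `ℓ²` condition number at most
`(δ + (η² + β²)/δ)/(2η)`. -/
theorem stmt4 {n : ℕ} (η δ β : ℝ) (hη : 0 < η) (hδ : 0 < δ)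
    (L : Matrix (Fin n) (Fin n) ℝ)
    (hL : ∀ x : EuclideanSpace ℝ (Fin n), ⟪x, toEuclideanCLM (𝕜 := ℝ) L x⟫ ≤ 0) :
    IsUnit (δ • (1 : Matrix (Fin n) (Fin n) ℝ) - L) ∧
    IsUnit (((η ^ 2 + β ^ 2) / δ) • (1 : Matrix (Fin n) (Fin n) ℝ) - L) ∧
    IsUnit ((η • (1 : Matrix (Fin n) (Fin n) ℝ) - L) ^ 2 + β ^ 2 • 1) ∧
    l2OpNorm ((δ • (1 : Matrix (Fin n) (Fin n) ℝ) - L)⁻¹ *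
          (((η ^ 2 + β ^ 2) / δ) • (1 : Matrix (Fin n) (Fin n) ℝ) - L)⁻¹ *
          ((η • (1 : Matrix (Fin n) (Fin n) ℝ) - L) ^ 2 + β ^ 2 • 1)) *
      l2OpNorm (((δ • (1 : Matrix (Fin n) (Fin n) ℝ) - L)⁻¹ *
          (((η ^ 2 + β ^ 2) / δ) • (1 : Matrix (Fin n) (Fin n) ℝ) - L)⁻¹ *
          ((η • (1 : Matrix (Fin n) (Fin n) ℝ) - L) ^ 2 + β ^ 2 • 1))⁻¹) ≤
      (1 / (2 * η)) * (δ + (η ^ 2 + β ^ 2) / δ) := by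
  have hηβ : (0:ℝ) < η ^ 2 + β ^ 2 := by positivity
  set γ : ℝ := (η ^ 2 + β ^ 2) / δ with hγdef
  have hγpos : 0 < γ := by rw [hγdef]; positivity
  have hδγ : δ * γ = η ^ 2 + β ^ 2 := by rw [hγdef]; field_simp
  set M : Matrix (Fin n) (Fin n) ℝ := δ • 1 - L with hMdef
  set N : Matrix (Fin n) (Fin n) ℝ := γ • 1 - L with hNdef
  set Q : Matrix (Fin n) (Fin n) ℝ := (η • 1 - L) ^ 2 + β ^ 2 • 1 with hQdef
  -- application lemmas
  have hMap : ∀ v : EuclideanSpace ℝ (Fin n), toEuclideanCLM (𝕜 := ℝ) M v = δ • v - toEuclideanCLM (𝕜 := ℝ) L v := by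
    intro v
    rw [hMdef]
    simp [_root_.map_sub, _root_.map_smul, _root_.map_one, ContinuousLinearMap.sub_apply,
      ContinuousLinearMap.smul_apply, ContinuousLinearMap.one_apply]
  have hNap : ∀ v : EuclideanSpace ℝ (Fin n), toEuclideanCLM (𝕜 := ℝ) N v = γ • v - toEuclideanCLM (𝕜 := ℝ) L v := by
    intro v
    rw [hNdef]
    simp [_root_.map_sub, _root_.map_smul, _root_.map_one, ContinuousLinearMap.sub_apply,
      ContinuousLinearMap.smul_apply, ContinuousLinearMap.one_apply]
  have hQap : ∀ v : EuclideanSpace ℝ (Fin n),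
      toEuclideanCLM (𝕜 := ℝ) Q v = (δ * γ) • v - (2 * η) • toEuclideanCLM (𝕜 := ℝ) L v + toEuclideanCLM (𝕜 := ℝ) L (toEuclideanCLM (𝕜 := ℝ) L v) := by
    intro v
    rw [hQdef, hδγ]
    simp only [_root_.map_add, _root_.map_pow, _root_.map_mul, _root_.map_sub, _root_.map_smul, _root_.map_one, sq,
      ContinuousLinearMap.add_apply, ContinuousLinearMap.mul_apply,
      ContinuousLinearMap.sub_apply, ContinuousLinearMap.smul_apply,
      ContinuousLinearMap.one_apply]
    module
  have hMNap : ∀ v : EuclideanSpace ℝ (Fin n),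
      toEuclideanCLM (𝕜 := ℝ) M (toEuclideanCLM (𝕜 := ℝ) N v) = (δ * γ) • v - (δ + γ) • toEuclideanCLM (𝕜 := ℝ) L v + toEuclideanCLM (𝕜 := ℝ) L (toEuclideanCLM (𝕜 := ℝ) L v) := by
    intro v
    rw [hMdef, hNdef]
    simp only [_root_.map_sub, _root_.map_smul, _root_.map_one, ContinuousLinearMap.sub_apply,
      ContinuousLinearMap.smul_apply, ContinuousLinearMap.one_apply]
    module
  -- invertibility
  have hMu : IsUnit M := isUnit_of_inj M (fun v hv =>
    injA (toEuclideanCLM (𝕜 := ℝ) L) hL δ hδ v (by rw [← hMap v]; exact hv))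
  have hNu : IsUnit N := isUnit_of_inj N (fun v hv =>
    injA (toEuclideanCLM (𝕜 := ℝ) L) hL γ hγpos v (by rw [← hNap v]; exact hv))
  have hQu : IsUnit Q := isUnit_of_inj Q (fun v hv =>
    injQ (toEuclideanCLM (𝕜 := ℝ) L) hL η δ β γ hη hδ hγpos hδγ v (by rw [← hQap v]; exact hv))
  have hMd : IsUnit M.det := (Matrix.isUnit_iff_isUnit_det M).mp hMu
  have hNd : IsUnit N.det := (Matrix.isUnit_iff_isUnit_det N).mp hNu
  have hQd : IsUnit Q.det := (Matrix.isUnit_iff_isUnit_det Q).mp hQu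
  refine ⟨hMu, hNu, hQu, ?_⟩
  -- commutation
  have hcomm : ∀ a b : ℝ, (a • (1 : Matrix (Fin n) (Fin n) ℝ) - L) * (b • 1 - L)
      = (b • 1 - L) * (a • 1 - L) := by
    intro a b
    simp only [sub_mul, mul_sub, smul_mul_assoc, mul_smul_comm, one_mul, mul_one]
    module
  have hMN : M * N = N * M := by rw [hMdef, hNdef]; exact hcomm δ γ
  have cMQ : M * Q = Q * M := by
    have c1 : Commute M (η • (1 : Matrix (Fin n) (Fin n) ℝ) - L) := by
      rw [hMdef]; exact hcomm δ η
    have c2 : Commute M ((β ^ 2 : ℝ) • (1 : Matrix (Fin n) (Fin n) ℝ)) :=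
      (Commute.one_right M).smul_right _
    have h : Commute M Q := by rw [hQdef]; exact (c1.pow_right 2).add_right c2
    exact h.eq
  have cNQ : N * Q = Q * N := by
    have c1 : Commute N (η • (1 : Matrix (Fin n) (Fin n) ℝ) - L) := by
      rw [hNdef]; exact hcomm γ η
    have c2 : Commute N ((β ^ 2 : ℝ) • (1 : Matrix (Fin n) (Fin n) ℝ)) :=
      (Commute.one_right N).smul_right _
    have h : Commute N Q := by rw [hQdef]; exact (c1.pow_right 2).add_right c2
    exact h.eq
  set X : Matrix (Fin n) (Fin n) ℝ := M⁻¹ * N⁻¹ * Q with hXdef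
  have hXQ : X = Q * (M⁻¹ * N⁻¹) := by
    have h1 : N⁻¹ * Q = Q * N⁻¹ := inv_comm hNu cNQ
    have h2 : M⁻¹ * Q = Q * M⁻¹ := inv_comm hMu cMQ
    rw [hXdef]
    calc M⁻¹ * N⁻¹ * Q = M⁻¹ * (N⁻¹ * Q) := by rw [mul_assoc]
      _ = M⁻¹ * (Q * N⁻¹) := by rw [h1]
      _ = M⁻¹ * Q * N⁻¹ := by rw [mul_assoc]
      _ = Q * M⁻¹ * N⁻¹ := by rw [h2]
      _ = Q * (M⁻¹ * N⁻¹) := by rw [mul_assoc]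
  have hXinv : X⁻¹ = N * (M * Q⁻¹) := by
    have h3 : Q⁻¹ * N = N * Q⁻¹ := inv_comm hQu cNQ.symm
    have h4 : Q⁻¹ * M = M * Q⁻¹ := inv_comm hQu cMQ.symm
    rw [hXdef, Matrix.mul_inv_rev, Matrix.mul_inv_rev,
      Matrix.nonsing_inv_nonsing_inv N hNd, Matrix.nonsing_inv_nonsing_inv M hMd]
    calc Q⁻¹ * (N * M) = (Q⁻¹ * N) * M := by rw [mul_assoc]
      _ = (N * Q⁻¹) * M := by rw [h3]
      _ = N * (Q⁻¹ * M) := by rw [mul_assoc]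
      _ = N * (M * Q⁻¹) := by rw [h4]
  have hNN : N * N⁻¹ = 1 := Matrix.mul_nonsing_inv N hNd
  have hQQ : Q * Q⁻¹ = 1 := Matrix.mul_nonsing_inv Q hQd
  have hMNid : M * (N * (M⁻¹ * N⁻¹)) = 1 := by
    have h5 : N * M⁻¹ = M⁻¹ * N := (inv_comm hMu hMN).symm
    calc M * (N * (M⁻¹ * N⁻¹)) = M * ((N * M⁻¹) * N⁻¹) := by rw [← mul_assoc N]
      _ = M * ((M⁻¹ * N) * N⁻¹) := by rw [h5]
      _ = M * (M⁻¹ * (N * N⁻¹)) := by rw [mul_assoc M⁻¹]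
      _ = M * (M⁻¹ * 1) := by rw [hNN]
      _ = 1 := by rw [mul_one, Matrix.mul_nonsing_inv M hMd]
  -- pointwise bounds
  have n1 : ∀ x : EuclideanSpace ℝ (Fin n), ‖toEuclideanCLM (𝕜 := ℝ) X x‖ ≤ ‖x‖ := by
    intro x
    have e1 : toEuclideanCLM (𝕜 := ℝ) X x = toEuclideanCLM (𝕜 := ℝ) Q (toEuclideanCLM (𝕜 := ℝ) (M⁻¹) (toEuclideanCLM (𝕜 := ℝ) (N⁻¹) x)) := by
      rw [hXQ, clm_mul_apply, clm_mul_apply]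
    have e2 : toEuclideanCLM (𝕜 := ℝ) M (toEuclideanCLM (𝕜 := ℝ) N (toEuclideanCLM (𝕜 := ℝ) (M⁻¹) (toEuclideanCLM (𝕜 := ℝ) (N⁻¹) x))) = x := by
      have h := congrArg (fun (A : Matrix (Fin n) (Fin n) ℝ) => toEuclideanCLM (𝕜 := ℝ) A x) hMNid
      simp only [clm_mul_apply, clm_one_apply] at h
      exact h
    rw [e1]
    calc ‖toEuclideanCLM (𝕜 := ℝ) Q (toEuclideanCLM (𝕜 := ℝ) (M⁻¹) (toEuclideanCLM (𝕜 := ℝ) (N⁻¹) x))‖ ≤ ‖toEuclideanCLM (𝕜 := ℝ) M (toEuclideanCLM (𝕜 := ℝ) N (toEuclideanCLM (𝕜 := ℝ) (M⁻¹) (toEuclideanCLM (𝕜 := ℝ) (N⁻¹) x)))‖ := by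
          rw [hQap, hMNap]
          exact claim1 (toEuclideanCLM (𝕜 := ℝ) L) hL η δ β γ hη hδ hγpos hδγ _
      _ = ‖x‖ := by rw [e2]
  have n2 : ∀ x : EuclideanSpace ℝ (Fin n),
      ‖toEuclideanCLM (𝕜 := ℝ) (X⁻¹) x‖ ≤ ((δ + γ) / (2 * η)) * ‖x‖ := by
    intro x
    have e1 : toEuclideanCLM (𝕜 := ℝ) (X⁻¹) x = toEuclideanCLM (𝕜 := ℝ) N (toEuclideanCLM (𝕜 := ℝ) M (toEuclideanCLM (𝕜 := ℝ) (Q⁻¹) x)) := by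
      rw [hXinv, clm_mul_apply, clm_mul_apply]
    have e2 : toEuclideanCLM (𝕜 := ℝ) Q (toEuclideanCLM (𝕜 := ℝ) (Q⁻¹) x) = x := by
      have h := congrArg (fun (A : Matrix (Fin n) (Fin n) ℝ) => toEuclideanCLM (𝕜 := ℝ) A x) hQQ
      simp only [clm_mul_apply, clm_one_apply] at h
      exact h
    have e3 : toEuclideanCLM (𝕜 := ℝ) N (toEuclideanCLM (𝕜 := ℝ) M (toEuclideanCLM (𝕜 := ℝ) (Q⁻¹) x)) = toEuclideanCLM (𝕜 := ℝ) M (toEuclideanCLM (𝕜 := ℝ) N (toEuclideanCLM (𝕜 := ℝ) (Q⁻¹) x)) := by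
      have h := congrArg (fun (A : Matrix (Fin n) (Fin n) ℝ) =>
        toEuclideanCLM (𝕜 := ℝ) A (toEuclideanCLM (𝕜 := ℝ) (Q⁻¹) x)) hMN.symm
      simp only [clm_mul_apply] at h
      exact h
    rw [e1, e3]
    calc ‖toEuclideanCLM (𝕜 := ℝ) M (toEuclideanCLM (𝕜 := ℝ) N (toEuclideanCLM (𝕜 := ℝ) (Q⁻¹) x))‖ ≤ ((δ + γ) / (2 * η)) * ‖toEuclideanCLM (𝕜 := ℝ) Q (toEuclideanCLM (𝕜 := ℝ) (Q⁻¹) x)‖ := by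
          rw [hMNap, hQap]
          exact claim2 (toEuclideanCLM (𝕜 := ℝ) L) hL η δ β γ hη hδ hγpos hδγ _
      _ = ((δ + γ) / (2 * η)) * ‖x‖ := by rw [e2]
  have hk : (0:ℝ) ≤ (δ + γ) / (2 * η) := by positivity
  have b1 : ‖toEuclideanCLM (𝕜 := ℝ) X‖ ≤ 1 :=
    ContinuousLinearMap.opNorm_le_bound _ zero_le_one (fun x => by rw [one_mul]; exact n1 x)
  have b2 : ‖toEuclideanCLM (𝕜 := ℝ) (X⁻¹)‖ ≤ (δ + γ) / (2 * η) :=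
    ContinuousLinearMap.opNorm_le_bound _ hk n2
  calc l2OpNorm X * l2OpNorm (X⁻¹) = ‖toEuclideanCLM (𝕜 := ℝ) X‖ * ‖toEuclideanCLM (𝕜 := ℝ) (X⁻¹)‖ := rfl
    _ ≤ 1 * ((δ + γ) / (2 * η)) := mul_le_mul b1 b2 (norm_nonneg _) zero_le_one
    _ = 1 / (2 * η) * (δ + γ) := by ring
end

section
/- Let η > 0, δ > 0, β ∈ ℝ, set γ* := (η² + β²)/δ and a := √(η² + β²), and let L be the real 3×3 matrix with rows (0, 0, 0), (0, 0, −a), (0, a, 0). Then x·(Lx) ≤ 0 for every x ∈ ℝ³, the matrices δI − L, γ*I − L, and (ηI − L)² + β²I are invertible, and the preconditioned operator P_{δ,γ*} := (δI − L)⁻¹(γ*I − L)⁻¹[(ηI − L)² + β²I] satisfies κ(P_{δ,γ*}) := ‖P_{δ,γ*}‖₂ · ‖P_{δ,γ*}⁻¹‖₂ = (δ + γ*)/(2η). In particular, the bound κ(P_{δ,γ*}) ≤ (1/(2η))(δ + (η² + β²)/δ) is attained, i.e., it is tight over the class of matrices L with field of values in the closed left half-plane. -/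
open Matrix
open scoped RealInnerProductSpace

/-- The `ℓ²` operator norm of a diagonal matrix whose entries are bounded by `m`,
with the bound attained at some index, equals `m`. -/
lemma l2OpNorm_diagonal_eq {n : ℕ} (v : Fin n → ℝ) (m : ℝ)
    (hle : ∀ i, |v i| ≤ m) (i0 : Fin n) (heq : |v i0| = m) :
    ‖toEuclideanCLM (𝕜 := ℝ) (Matrix.diagonal v)‖ = m := by
  have hm : 0 ≤ m := heq ▸ abs_nonneg _
  have happ : ∀ (x : EuclideanSpace ℝ (Fin n)) (i : Fin n),
      (toEuclideanCLM (𝕜 := ℝ) (Matrix.diagonal v) x) i = v i * x i := by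
    intro x i
    show (Matrix.diagonal v *ᵥ (WithLp.equiv _ _ x)) i = _
    simp [Matrix.mulVec_diagonal]
  apply le_antisymm
  · apply ContinuousLinearMap.opNorm_le_bound _ hm
    intro x
    rw [EuclideanSpace.norm_eq, EuclideanSpace.norm_eq]
    rw [← Real.sqrt_sq hm, ← Real.sqrt_mul (by positivity)]
    apply Real.sqrt_le_sqrt
    rw [Finset.mul_sum]
    apply Finset.sum_le_sum
    intro i _
    rw [happ]
    have h1 : |v i * x i| ≤ m * |x i| := by
      rw [abs_mul]
      exact mul_le_mul_of_nonneg_right (hle i) (abs_nonneg _)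
    calc ‖v i * x i‖ ^ 2 = |v i * x i| ^ 2 := by rw [Real.norm_eq_abs]
      _ ≤ (m * |x i|) ^ 2 := by
          apply pow_le_pow_left₀ (abs_nonneg _) h1
      _ = m ^ 2 * ‖x i‖ ^ 2 := by rw [mul_pow, Real.norm_eq_abs]
  · have := (toEuclideanCLM (𝕜 := ℝ) (Matrix.diagonal v)).le_opNorm
      (EuclideanSpace.single i0 1)
    rw [EuclideanSpace.norm_single] at this
    have hnx : ‖toEuclideanCLM (𝕜 := ℝ) (Matrix.diagonal v) (EuclideanSpace.single i0 1)‖ = m := by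
      rw [EuclideanSpace.norm_eq]
      rw [show ∑ i, ‖(toEuclideanCLM (𝕜 := ℝ) (Matrix.diagonal v)
          (EuclideanSpace.single i0 1)) i‖ ^ 2 = m ^ 2 from ?_]
      · exact Real.sqrt_sq hm
      · rw [← heq]
        rw [Finset.sum_eq_single i0]
        · rw [happ]; simp [sq_abs]
        · intro i _ hi
          rw [happ]; simp [EuclideanSpace.single_apply, hi]
        · simp
    rw [hnx] at this
    rw [norm_one, mul_one] at this; exact this

set_option maxHeartbeats 1000000 in
/-- The key matrix product identity: `A⁻¹ B⁻¹ C = diag(1, c, c)` with explicit inverses. -/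
lemma keyProd (a δ η c γ : ℝ) (ha : a ≠ 0) (hδ : δ ≠ 0) (hγ : γ = a^2/δ)
    (hδ2 : δ^2 + a^2 ≠ 0) (hγ2 : γ^2 + a^2 ≠ 0)
    (hc : c = 2*η*δ/(δ^2+a^2)) :
    (!![δ⁻¹,0,0; 0, δ/(δ^2+a^2), -(a/(δ^2+a^2)); 0, a/(δ^2+a^2), δ/(δ^2+a^2)] *
     !![γ⁻¹,0,0; 0, γ/(γ^2+a^2), -(a/(γ^2+a^2)); 0, a/(γ^2+a^2), γ/(γ^2+a^2)] *
     !![a^2,0,0;0,0,2*η*a;0,-(2*η*a),0] : Matrix (Fin 3) (Fin 3) ℝ) =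
    !![1,0,0;0,c,0;0,0,c] := by
  subst hγ hc
  rw [Matrix.mul_fin_three, Matrix.mul_fin_three]
  ext i j
  fin_cases i <;> fin_cases j <;> simp
  all_goals try field_simp
  all_goals try ring
  all_goals tauto

/-- Explicit right inverse of `r • 1 - L` for the skew matrix `L`. -/
lemma rightInv (r a : ℝ) (hr : r ≠ 0) (hr2 : r^2 + a^2 ≠ 0) :
    (!![r,0,0;0,r,a;0,-a,r] : Matrix (Fin 3) (Fin 3) ℝ) *
    !![r⁻¹,0,0; 0, r/(r^2+a^2), -(a/(r^2+a^2)); 0, a/(r^2+a^2), r/(r^2+a^2)] = 1 := by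
  rw [Matrix.mul_fin_three]
  ext i j; fin_cases i <;> fin_cases j <;>
    simp [Matrix.one_apply, Matrix.vecHead, Matrix.vecTail]
  all_goals try field_simp
  all_goals ring

set_option maxHeartbeats 2000000 in
/-- Tightness of the bound of Theorem A.1: for the skew matrix `L` with eigenvalues
`{0, ± i √(η² + β²)}`, the field of values lies in the closed left half-plane, all the
relevant matrices are invertible, and the condition number of the preconditioned operator
equals `(δ + γ*)/(2η)` with `γ* = (η² + β²)/δ`. -/
theorem stmt5 (η δ β : ℝ) (hη : 0 < η) (hδ : 0 < δ) :
    let a : ℝ := Real.sqrt (η ^ 2 + β ^ 2)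
    let γs : ℝ := (η ^ 2 + β ^ 2) / δ
    let L : Matrix (Fin 3) (Fin 3) ℝ := !![0, 0, 0; 0, 0, -a; 0, a, 0]
    (∀ x : EuclideanSpace ℝ (Fin 3), ⟪x, toEuclideanCLM (𝕜 := ℝ) L x⟫ ≤ 0) ∧
    IsUnit (δ • (1 : Matrix (Fin 3) (Fin 3) ℝ) - L) ∧
    IsUnit (γs • (1 : Matrix (Fin 3) (Fin 3) ℝ) - L) ∧
    IsUnit ((η • (1 : Matrix (Fin 3) (Fin 3) ℝ) - L) ^ 2 + β ^ 2 • 1) ∧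
    l2OpNorm ((δ • (1 : Matrix (Fin 3) (Fin 3) ℝ) - L)⁻¹ *
          (γs • (1 : Matrix (Fin 3) (Fin 3) ℝ) - L)⁻¹ *
          ((η • (1 : Matrix (Fin 3) (Fin 3) ℝ) - L) ^ 2 + β ^ 2 • 1)) *
      l2OpNorm (((δ • (1 : Matrix (Fin 3) (Fin 3) ℝ) - L)⁻¹ *
          (γs • (1 : Matrix (Fin 3) (Fin 3) ℝ) - L)⁻¹ *
          ((η • (1 : Matrix (Fin 3) (Fin 3) ℝ) - L) ^ 2 + β ^ 2 • 1))⁻¹) =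
      (δ + γs) / (2 * η) := by
  intro a γs L
  have hpos : (0:ℝ) < η ^ 2 + β ^ 2 := by positivity
  have ha2 : a ^ 2 = η ^ 2 + β ^ 2 := Real.sq_sqrt hpos.le
  have ha : 0 < a := Real.sqrt_pos.mpr hpos
  have hγs : 0 < γs := div_pos hpos hδ
  have hγeq : γs = a ^ 2 / δ := by show (η ^ 2 + β ^ 2)/δ = _; rw [ha2]
  have hδ2 : (0:ℝ) < δ ^ 2 + a ^ 2 := by positivity
  have hγ2 : (0:ℝ) < γs ^ 2 + a ^ 2 := by positivity
  -- matrix literals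
  have hAeq : δ • (1 : Matrix (Fin 3) (Fin 3) ℝ) - L = !![δ,0,0;0,δ,a;0,-a,δ] := by
    show δ • (1 : Matrix (Fin 3) (Fin 3) ℝ) - !![0, 0, 0; 0, 0, -a; 0, a, 0] = _
    ext i j; fin_cases i <;> fin_cases j <;>
      simp [Matrix.one_apply, Matrix.vecHead, Matrix.vecTail]
  have hBeq : γs • (1 : Matrix (Fin 3) (Fin 3) ℝ) - L = !![γs,0,0;0,γs,a;0,-a,γs] := by
    show γs • (1 : Matrix (Fin 3) (Fin 3) ℝ) - !![0, 0, 0; 0, 0, -a; 0, a, 0] = _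
    ext i j; fin_cases i <;> fin_cases j <;>
      simp [Matrix.one_apply, Matrix.vecHead, Matrix.vecTail]
  have hEeq : η • (1 : Matrix (Fin 3) (Fin 3) ℝ) - L = !![η,0,0;0,η,a;0,-a,η] := by
    show η • (1 : Matrix (Fin 3) (Fin 3) ℝ) - !![0, 0, 0; 0, 0, -a; 0, a, 0] = _
    ext i j; fin_cases i <;> fin_cases j <;>
      simp [Matrix.one_apply, Matrix.vecHead, Matrix.vecTail]
  have hCeq : (η • (1 : Matrix (Fin 3) (Fin 3) ℝ) - L) ^ 2 + β ^ 2 • 1 =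
      !![a^2,0,0;0,0,2*η*a;0,-(2*η*a),0] := by
    rw [hEeq, pow_two, Matrix.mul_fin_three]
    ext i j; fin_cases i <;> fin_cases j <;>
      simp [Matrix.one_apply, Matrix.vecHead, Matrix.vecTail]
    all_goals nlinarith [ha2]
  -- determinants / invertibility
  have hA1 : (!![δ,0,0;0,δ,a;0,-a,δ] : Matrix (Fin 3) (Fin 3) ℝ) *
      !![δ⁻¹,0,0; 0, δ/(δ^2+a^2), -(a/(δ^2+a^2)); 0, a/(δ^2+a^2), δ/(δ^2+a^2)] = 1 :=
    rightInv δ a hδ.ne' hδ2.ne'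
  have hB1 : (!![γs,0,0;0,γs,a;0,-a,γs] : Matrix (Fin 3) (Fin 3) ℝ) *
      !![γs⁻¹,0,0; 0, γs/(γs^2+a^2), -(a/(γs^2+a^2)); 0, a/(γs^2+a^2), γs/(γs^2+a^2)] = 1 :=
    rightInv γs a hγs.ne' hγ2.ne'
  have hdetC : (!![a^2,0,0;0,0,2*η*a;0,-(2*η*a),0] : Matrix (Fin 3) (Fin 3) ℝ).det ≠ 0 := by
    have h : (!![a^2,0,0;0,0,2*η*a;0,-(2*η*a),0] : Matrix (Fin 3) (Fin 3) ℝ).det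
        = 4*η^2*a^4 := by
      rw [Matrix.det_fin_three]; simp [Matrix.vecHead, Matrix.vecTail]; ring
    rw [h]; positivity
  have hfov : ∀ x : EuclideanSpace ℝ (Fin 3), ⟪x, toEuclideanCLM (𝕜 := ℝ) L x⟫ ≤ 0 := by
    intro x
    have he : ∀ i, (toEuclideanCLM (𝕜 := ℝ) L x) i
        = ((!![0, 0, 0; 0, 0, -a; 0, a, 0] : Matrix (Fin 3) (Fin 3) ℝ) *ᵥ (WithLp.equiv _ _ x)) i :=
      fun _ => rfl
    have h0 : ∀ i, (WithLp.equiv 2 (Fin 3 → ℝ) x) i = x i := fun _ => rfl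
    simp only [PiLp.inner_apply, RCLike.inner_apply, starRingEnd_apply, star_trivial]
    rw [Fin.sum_univ_three, he, he, he]
    simp [Matrix.mulVec, dotProduct, Fin.sum_univ_three, h0,
      Matrix.vecHead, Matrix.vecTail]
    ring_nf
    simp
  clear_value a γs L
  refine ⟨hfov, ?_, ?_, ?_, ?_⟩
  · rw [hAeq]
    exact (Matrix.isUnit_iff_isUnit_det _).mpr (IsUnit.of_mul_eq_one _
      (by rw [← Matrix.det_mul, hA1, Matrix.det_one]))
  · rw [hBeq]
    exact (Matrix.isUnit_iff_isUnit_det _).mpr (IsUnit.of_mul_eq_one _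
      (by rw [← Matrix.det_mul, hB1, Matrix.det_one]))
  · rw [hCeq]; exact (Matrix.isUnit_iff_isUnit_det _).mpr (isUnit_iff_ne_zero.mpr hdetC)
  · -- the norm computation
    set c : ℝ := 2 * η / (δ + γs) with hc
    have hδγ : 0 < δ + γs := by linarith
    have hcpos : 0 < c := by positivity
    have hc' : c = 2*η*δ/(δ^2+a^2) := by
      rw [hc, hγeq]; field_simp
    have hc1 : c ≤ 1 := by
      rw [hc, div_le_one hδγ, hγeq, ← sub_nonneg]
      have : δ + a ^ 2 / δ - 2 * η = ((δ - η)^2 + β^2) / δ := by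
        field_simp; nlinarith [ha2]
      rw [this]; positivity
    have hAinv : (δ • (1 : Matrix (Fin 3) (Fin 3) ℝ) - L)⁻¹ =
        !![δ⁻¹,0,0; 0, δ/(δ^2+a^2), -(a/(δ^2+a^2)); 0, a/(δ^2+a^2), δ/(δ^2+a^2)] := by
      rw [hAeq]; exact Matrix.inv_eq_right_inv hA1
    have hBinv : (γs • (1 : Matrix (Fin 3) (Fin 3) ℝ) - L)⁻¹ =
        !![γs⁻¹,0,0; 0, γs/(γs^2+a^2), -(a/(γs^2+a^2)); 0, a/(γs^2+a^2), γs/(γs^2+a^2)] := by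
      rw [hBeq]; exact Matrix.inv_eq_right_inv hB1
    have hdiag : (!![1,0,0;0,c,0;0,0,c] : Matrix (Fin 3) (Fin 3) ℝ)
        = Matrix.diagonal ![(1:ℝ), c, c] := by
      ext i j; fin_cases i <;> fin_cases j <;>
        simp [Matrix.diagonal_apply, Matrix.vecHead, Matrix.vecTail]
    have hP : (δ • (1 : Matrix (Fin 3) (Fin 3) ℝ) - L)⁻¹ *
          (γs • (1 : Matrix (Fin 3) (Fin 3) ℝ) - L)⁻¹ *
          ((η • (1 : Matrix (Fin 3) (Fin 3) ℝ) - L) ^ 2 + β ^ 2 • 1) =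
        Matrix.diagonal ![(1:ℝ), c, c] := by
      rw [hAinv, hBinv, hCeq, ← hdiag]
      exact keyProd a δ η c γs ha.ne' hδ.ne' hγeq hδ2.ne' hγ2.ne' hc'
    have hPinv : (Matrix.diagonal ![(1:ℝ), c, c])⁻¹ = Matrix.diagonal ![(1:ℝ), c⁻¹, c⁻¹] := by
      apply Matrix.inv_eq_right_inv
      rw [Matrix.diagonal_mul_diagonal]
      ext i j
      fin_cases i <;> fin_cases j <;>
        simp [Matrix.diagonal_apply, Matrix.one_apply, mul_inv_cancel₀ hcpos.ne']
    rw [hP, hPinv]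
    unfold l2OpNorm
    have h1c : 1 ≤ c⁻¹ := one_le_inv_iff₀.mpr ⟨hcpos, hc1⟩
    have hb1 : ∀ i, |(![(1:ℝ), c, c]) i| ≤ 1 := by
      intro i; fin_cases i
      · simp
      · simpa [abs_of_pos hcpos] using hc1
      · simpa [abs_of_pos hcpos] using hc1
    have hb2 : ∀ i, |(![(1:ℝ), c⁻¹, c⁻¹]) i| ≤ c⁻¹ := by
      intro i; fin_cases i
      · simpa using h1c
      · simp [abs_of_pos (inv_pos.mpr hcpos)]
      · simp [abs_of_pos (inv_pos.mpr hcpos)]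
    have hb3 : |(![(1:ℝ), c⁻¹, c⁻¹]) 1| = c⁻¹ := by
      simp [abs_of_pos (inv_pos.mpr hcpos)]
    rw [l2OpNorm_diagonal_eq ![(1:ℝ), c, c] 1 hb1 0 (by simp),
        l2OpNorm_diagonal_eq ![(1:ℝ), c⁻¹, c⁻¹] c⁻¹ hb2 1 hb3]
    rw [one_mul, inv_div]
end

section
/- Let η > 0, δ > 0, β ∈ ℝ, and set γ* := (η² + β²)/δ. For every γ > 0 with γ ≠ γ*, there exist a dimension n and a real n×n matrix L satisfying x·(Lx) ≤ 0 for every x ∈ ℝⁿ, such that δI − L, γI − L, and (ηI − L)² + β²I are invertible and the preconditioned operator P_{δ,γ} := (δI − L)⁻¹(γI − L)⁻¹[(ηI − L)² + β²I] satisfies κ(P_{δ,γ}) := ‖P_{δ,γ}‖₂ · ‖P_{δ,γ}⁻¹‖₂ > (δ + γ*)/(2η). That is, γ = γ* minimizes the worst-case ℓ² condition number of P_{δ,γ} over all matrices L with field of values in the closed left half-plane. -/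
open Matrix
open scoped RealInnerProductSpace

/-- A `4×4` real matrix representing a pair of complex numbers acting block-diagonally. -/
noncomputable def cmat (z w : ℂ) : Matrix (Fin 4) (Fin 4) ℝ :=
  !![z.re, -z.im, 0, 0; z.im, z.re, 0, 0; 0, 0, w.re, -w.im; 0, 0, w.im, w.re]

lemma cmat_mul (z w z' w' : ℂ) : cmat z w * cmat z' w' = cmat (z * z') (w * w') := by
  ext i j
  fin_cases i <;> fin_cases j <;>
    simp [cmat, Matrix.mul_apply, Fin.sum_univ_four, Complex.mul_re, Complex.mul_im,
      Matrix.vecHead, Matrix.vecTail] <;> ring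

lemma cmat_one : cmat 1 1 = 1 := by
  ext i j
  fin_cases i <;> fin_cases j <;> simp [cmat, Matrix.one_apply, Matrix.vecHead, Matrix.vecTail]

lemma smul_one_eq_cmat (r : ℝ) : r • (1 : Matrix (Fin 4) (Fin 4) ℝ) = cmat r r := by
  ext i j
  fin_cases i <;> fin_cases j <;> simp [cmat, Matrix.one_apply, Matrix.vecHead, Matrix.vecTail]

lemma cmat_sub (z w z' w' : ℂ) : cmat z w - cmat z' w' = cmat (z - z') (w - w') := by
  ext i j
  fin_cases i <;> fin_cases j <;> simp [cmat, Matrix.vecHead, Matrix.vecTail] <;> ring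

lemma cmat_add (z w z' w' : ℂ) : cmat z w + cmat z' w' = cmat (z + z') (w + w') := by
  ext i j
  fin_cases i <;> fin_cases j <;> simp [cmat, Matrix.vecHead, Matrix.vecTail] <;> ring

lemma cmat_pow_two (z w : ℂ) : cmat z w ^ 2 = cmat (z ^ 2) (w ^ 2) := by
  rw [pow_two, cmat_mul, ← pow_two, ← pow_two]

lemma cmat_isUnit {z w : ℂ} (hz : z ≠ 0) (hw : w ≠ 0) : IsUnit (cmat z w) :=
  ⟨⟨cmat z w, cmat z⁻¹ w⁻¹,
    by rw [cmat_mul, mul_inv_cancel₀ hz, mul_inv_cancel₀ hw, cmat_one],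
    by rw [cmat_mul, inv_mul_cancel₀ hz, inv_mul_cancel₀ hw, cmat_one]⟩, rfl⟩

lemma cmat_inv {z w : ℂ} (hz : z ≠ 0) (hw : w ≠ 0) : (cmat z w)⁻¹ = cmat z⁻¹ w⁻¹ :=
  Matrix.inv_eq_right_inv (by
    rw [cmat_mul, mul_inv_cancel₀ hz, mul_inv_cancel₀ hw, cmat_one])

lemma toEuclideanCLM_apply_coord {n : ℕ} (A : Matrix (Fin n) (Fin n) ℝ)
    (x : EuclideanSpace ℝ (Fin n)) (i : Fin n) :
    (toEuclideanCLM (𝕜 := ℝ) A x) i = ∑ j, A i j * x j := rfl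

lemma skew_inner (ω₁ ω₂ : ℝ) (x : EuclideanSpace ℝ (Fin 4)) :
    ⟪x, toEuclideanCLM (𝕜 := ℝ) (cmat (ω₁ * Complex.I) (ω₂ * Complex.I)) x⟫ = 0 := by
  rw [PiLp.inner_apply]
  simp only [toEuclideanCLM_apply_coord, RCLike.inner_apply, starRingEnd_apply, star_trivial]
  simp [cmat, Fin.sum_univ_four, Matrix.vecHead, Matrix.vecTail]
  ring

lemma norm_single_apply {n : ℕ} (A : Matrix (Fin n) (Fin n) ℝ) (i : Fin n) :
    ‖toEuclideanCLM (𝕜 := ℝ) A (EuclideanSpace.single i 1)‖ ≤ l2OpNorm A := by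
  have h := (toEuclideanCLM (𝕜 := ℝ) A).le_opNorm (EuclideanSpace.single i 1)
  rw [EuclideanSpace.norm_single, norm_one, mul_one] at h
  exact h

lemma cmat_norm_ge_fst (z w : ℂ) : ‖z‖ ≤ l2OpNorm (cmat z w) := by
  refine le_trans (le_of_eq ?_) (norm_single_apply (cmat z w) 0)
  rw [EuclideanSpace.norm_eq]
  simp only [toEuclideanCLM_apply_coord]
  rw [Fin.sum_univ_four]
  simp [cmat, Fin.sum_univ_four, Matrix.vecHead, Matrix.vecTail, EuclideanSpace.single_apply]
  rw [Complex.norm_def, Complex.normSq_apply]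
  ring_nf

lemma cmat_norm_ge_snd (z w : ℂ) : ‖w‖ ≤ l2OpNorm (cmat z w) := by
  refine le_trans (le_of_eq ?_) (norm_single_apply (cmat z w) 2)
  rw [EuclideanSpace.norm_eq]
  simp only [toEuclideanCLM_apply_coord]
  rw [Fin.sum_univ_four]
  simp [cmat, Fin.sum_univ_four, Matrix.vecHead, Matrix.vecTail, EuclideanSpace.single_apply]
  rw [Complex.norm_def, Complex.normSq_apply]
  ring_nf

lemma lin_ne_zero {δ : ℝ} (ω : ℝ) (hδ : δ ≠ 0) : ((δ : ℂ) - ω * Complex.I) ≠ 0 := by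
  intro h
  apply hδ
  have := congrArg Complex.re h
  simpa using this

lemma quad_ne_zero {η : ℝ} (β ω : ℝ) (hη : η ≠ 0) :
    (((η : ℂ) - ω * Complex.I) ^ 2 + (β : ℂ) ^ 2) ≠ 0 := by
  have hfac : (((η : ℂ) - ω * Complex.I) ^ 2 + (β : ℂ) ^ 2)
      = (((η : ℂ) - ω * Complex.I) + β * Complex.I)
        * (((η : ℂ) - ω * Complex.I) - β * Complex.I) := by
    linear_combination (β : ℂ) ^ 2 * Complex.I_sq
  rw [hfac]
  refine mul_ne_zero ?_ ?_ <;>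
  · intro h
    apply hη
    have := congrArg Complex.re h
    simpa using this

lemma normSq_lin (δ ω : ℝ) :
    Complex.normSq ((δ : ℂ) - ω * Complex.I) = δ ^ 2 + ω ^ 2 := by
  simp [Complex.normSq_apply]
  ring

lemma normSq_quad (η β ω : ℝ) :
    Complex.normSq (((η : ℂ) - ω * Complex.I) ^ 2 + (β : ℂ) ^ 2)
      = (η ^ 2 - ω ^ 2 + β ^ 2) ^ 2 + (2 * η * ω) ^ 2 := by
  rw [pow_two, pow_two]
  simp [Complex.normSq_apply, Complex.mul_re, Complex.mul_im]
  ring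

/-- Conversion of the real (squared) inequality into the complex-modulus inequality. -/
lemma abs_key (η δ β γ ω₁ ω₂ : ℝ) (hη : 0 < η) (hδ : 0 < δ) (hγ : 0 < γ)
    (hsq : ((δ + (η ^ 2 + β ^ 2) / δ) / (2 * η)) ^ 2 *
        ((δ ^ 2 + ω₂ ^ 2)⁻¹ * (γ ^ 2 + ω₂ ^ 2)⁻¹ *
          ((η ^ 2 - ω₂ ^ 2 + β ^ 2) ^ 2 + (2 * η * ω₂) ^ 2))
      < (δ ^ 2 + ω₁ ^ 2)⁻¹ * (γ ^ 2 + ω₁ ^ 2)⁻¹ *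
          ((η ^ 2 - ω₁ ^ 2 + β ^ 2) ^ 2 + (2 * η * ω₁) ^ 2)) :
    (δ + (η ^ 2 + β ^ 2) / δ) / (2 * η) <
      ‖((δ : ℂ) - ω₁ * Complex.I)⁻¹ * ((γ : ℂ) - ω₁ * Complex.I)⁻¹ *
          (((η : ℂ) - ω₁ * Complex.I) ^ 2 + (β : ℂ) ^ 2)‖ *
        (‖((δ : ℂ) - ω₂ * Complex.I)⁻¹ * ((γ : ℂ) - ω₂ * Complex.I)⁻¹ *
          (((η : ℂ) - ω₂ * Complex.I) ^ 2 + (β : ℂ) ^ 2)‖)⁻¹ := by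
  have hφ₂ : (((δ : ℂ) - ω₂ * Complex.I)⁻¹ * ((γ : ℂ) - ω₂ * Complex.I)⁻¹ *
      (((η : ℂ) - ω₂ * Complex.I) ^ 2 + (β : ℂ) ^ 2)) ≠ 0 :=
    mul_ne_zero (mul_ne_zero (inv_ne_zero (lin_ne_zero ω₂ hδ.ne'))
      (inv_ne_zero (lin_ne_zero ω₂ hγ.ne'))) (quad_ne_zero β ω₂ hη.ne')
  have h₂pos : 0 < ‖((δ : ℂ) - ω₂ * Complex.I)⁻¹ * ((γ : ℂ) - ω₂ * Complex.I)⁻¹ *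
      (((η : ℂ) - ω₂ * Complex.I) ^ 2 + (β : ℂ) ^ 2)‖ := norm_pos_iff.mpr hφ₂
  rw [← div_eq_mul_inv, lt_div_iff₀ h₂pos]
  refine lt_of_pow_lt_pow_left₀ 2 (norm_nonneg _) ?_
  rw [mul_pow, Complex.sq_norm, Complex.sq_norm]
  rw [Complex.normSq_mul, Complex.normSq_mul, Complex.normSq_inv, Complex.normSq_inv,
    Complex.normSq_mul, Complex.normSq_mul, Complex.normSq_inv, Complex.normSq_inv,
    normSq_lin, normSq_lin, normSq_lin, normSq_lin, normSq_quad, normSq_quad]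
  ring_nf
  ring_nf at hsq
  exact hsq

lemma case_lt (η δ β γ w : ℝ) (hη : 0 < η) (hδ : 0 < δ) (hγ : 0 < γ)
    (hw : w ^ 2 = η ^ 2 + β ^ 2) (hlt : γ * δ < η ^ 2 + β ^ 2) :
    ((δ + (η ^ 2 + β ^ 2) / δ) / (2 * η)) ^ 2 *
        ((δ ^ 2 + w ^ 2)⁻¹ * (γ ^ 2 + w ^ 2)⁻¹ *
          ((η ^ 2 - w ^ 2 + β ^ 2) ^ 2 + (2 * η * w) ^ 2))
      < (δ ^ 2 + (0:ℝ) ^ 2)⁻¹ * (γ ^ 2 + (0:ℝ) ^ 2)⁻¹ *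
          ((η ^ 2 - (0:ℝ) ^ 2 + β ^ 2) ^ 2 + (2 * η * 0) ^ 2) := by
  have hs : 0 < η ^ 2 + β ^ 2 := by positivity
  have e1 : (2 * η * w) ^ 2 = 4 * η ^ 2 * (η ^ 2 + β ^ 2) := by
    rw [mul_pow, mul_pow, hw]; ring
  have e2 : η ^ 2 - w ^ 2 + β ^ 2 = 0 := by rw [hw]; ring
  rw [e1, e2, hw]
  have h1 : 0 < δ ^ 2 + (η ^ 2 + β ^ 2) := by positivity
  have h2 : 0 < γ ^ 2 + (η ^ 2 + β ^ 2) := by positivity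
  have lhs_eq : ((δ + (η ^ 2 + β ^ 2) / δ) / (2 * η)) ^ 2 *
      ((δ ^ 2 + (η ^ 2 + β ^ 2))⁻¹ * (γ ^ 2 + (η ^ 2 + β ^ 2))⁻¹ *
        ((0:ℝ) ^ 2 + 4 * η ^ 2 * (η ^ 2 + β ^ 2)))
      = ((η ^ 2 + β ^ 2) * (δ ^ 2 + (η ^ 2 + β ^ 2))) /
          (δ ^ 2 * (γ ^ 2 + (η ^ 2 + β ^ 2))) := by
    field_simp
    ring
  have rhs_eq : (δ ^ 2 + (0:ℝ) ^ 2)⁻¹ * (γ ^ 2 + (0:ℝ) ^ 2)⁻¹ *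
      ((η ^ 2 - (0:ℝ) ^ 2 + β ^ 2) ^ 2 + (2 * η * 0) ^ 2)
      = (η ^ 2 + β ^ 2) ^ 2 / (δ ^ 2 * γ ^ 2) := by
    field_simp
    ring
  rw [lhs_eq, rhs_eq, div_lt_div_iff₀ (by positivity) (by positivity)]
  have hd2 : 0 < δ ^ 2 := by positivity
  have hA : 0 < η ^ 2 + β ^ 2 - γ * δ := by linarith
  have hB : 0 < η ^ 2 + β ^ 2 + γ * δ := by positivity
  nlinarith [mul_pos (mul_pos hs hd2) (mul_pos hA hB)]

lemma case_gt (η δ β γ w v u : ℝ) (hη : 0 < η) (hδ : 0 < δ) (hγ : 0 < γ)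
    (hw : w ^ 2 = η ^ 2 + β ^ 2) (hv : v ^ 2 = u)
    (hu : (η ^ 2 + β ^ 2) * (δ ^ 2 + (η ^ 2 + β ^ 2)) * ((δ ^ 2 + u) * (γ ^ 2 + u))
        < δ ^ 2 * (γ ^ 2 + (η ^ 2 + β ^ 2)) *
            (u ^ 2 + 2 * (η ^ 2 - β ^ 2) * u + (η ^ 2 + β ^ 2) ^ 2)) :
    ((δ + (η ^ 2 + β ^ 2) / δ) / (2 * η)) ^ 2 *
        ((δ ^ 2 + w ^ 2)⁻¹ * (γ ^ 2 + w ^ 2)⁻¹ *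
          ((η ^ 2 - w ^ 2 + β ^ 2) ^ 2 + (2 * η * w) ^ 2))
      < (δ ^ 2 + v ^ 2)⁻¹ * (γ ^ 2 + v ^ 2)⁻¹ *
          ((η ^ 2 - v ^ 2 + β ^ 2) ^ 2 + (2 * η * v) ^ 2) := by
  have hs : 0 < η ^ 2 + β ^ 2 := by positivity
  have hu0 : 0 ≤ u := hv ▸ sq_nonneg v
  have e1 : (2 * η * w) ^ 2 = 4 * η ^ 2 * (η ^ 2 + β ^ 2) := by
    rw [mul_pow, mul_pow, hw]; ring
  have e2 : η ^ 2 - w ^ 2 + β ^ 2 = 0 := by rw [hw]; ring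
  have f1 : (2 * η * v) ^ 2 = 4 * η ^ 2 * u := by rw [mul_pow, mul_pow, hv]; ring
  rw [e1, e2, hw, f1, hv]
  have h1 : 0 < δ ^ 2 + (η ^ 2 + β ^ 2) := by positivity
  have h2 : 0 < γ ^ 2 + (η ^ 2 + β ^ 2) := by positivity
  have h3 : 0 < δ ^ 2 + u := by positivity
  have h4 : 0 < γ ^ 2 + u := by positivity
  have lhs_eq : ((δ + (η ^ 2 + β ^ 2) / δ) / (2 * η)) ^ 2 *
      ((δ ^ 2 + (η ^ 2 + β ^ 2))⁻¹ * (γ ^ 2 + (η ^ 2 + β ^ 2))⁻¹ *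
        ((0:ℝ) ^ 2 + 4 * η ^ 2 * (η ^ 2 + β ^ 2)))
      = ((η ^ 2 + β ^ 2) * (δ ^ 2 + (η ^ 2 + β ^ 2))) /
          (δ ^ 2 * (γ ^ 2 + (η ^ 2 + β ^ 2))) := by
    field_simp
    ring
  have rhs_eq : (δ ^ 2 + u)⁻¹ * (γ ^ 2 + u)⁻¹ *
      ((η ^ 2 - u + β ^ 2) ^ 2 + 4 * η ^ 2 * u)
      = (u ^ 2 + 2 * (η ^ 2 - β ^ 2) * u + (η ^ 2 + β ^ 2) ^ 2) /
          ((δ ^ 2 + u) * (γ ^ 2 + u)) := by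
    rw [eq_div_iff (by positivity)]
    field_simp
    ring
  rw [lhs_eq, rhs_eq, div_lt_div_iff₀ (by positivity) (by positivity)]
  nlinarith [hu, mul_pos h1 h2, mul_pos h3 h4]

lemma exists_u (ε c₁ c₀ : ℝ) (hε : 0 < ε) :
    ∃ u : ℝ, 1 ≤ u ∧ 0 < ε * u ^ 2 + c₁ * u + c₀ := by
  refine ⟨1 + (|c₁| + |c₀|) / ε, le_add_of_nonneg_right (by positivity), ?_⟩
  have hεu : ε * (1 + (|c₁| + |c₀|) / ε) = ε + (|c₁| + |c₀|) := by field_simp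
  set u := 1 + (|c₁| + |c₀|) / ε with hudef
  have hu1 : (1:ℝ) ≤ u := le_add_of_nonneg_right (by positivity)
  have h6 : ε * u * u = (ε + (|c₁| + |c₀|)) * u := by rw [hεu]
  have h5 : 0 ≤ (c₁ + |c₁|) * u := mul_nonneg (by linarith [neg_abs_le c₁]) (by linarith)
  have h7 : |c₀| * 1 ≤ |c₀| * u := mul_le_mul_of_nonneg_left hu1 (abs_nonneg c₀)
  nlinarith [neg_abs_le c₀, abs_nonneg c₁, abs_nonneg c₀, h5, h6, h7, hu1, hε]

/-- Optimality of `γ* = (η² + β²)/δ`: for every `γ > 0` with `γ ≠ γ*` there is a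
dimension `n` and a real matrix `L` with field of values in the closed left half-plane
for which the `ℓ²` condition number of
`P = (δI - L)⁻¹ (γ I - L)⁻¹ [(ηI - L)² + β² I]` exceeds `(δ + γ*)/(2η)`. -/
theorem stmt6 (η δ β : ℝ) (hη : 0 < η) (hδ : 0 < δ)
    (γ : ℝ) (hγ : 0 < γ) (hne : γ ≠ (η ^ 2 + β ^ 2) / δ) :
    ∃ (n : ℕ) (L : Matrix (Fin n) (Fin n) ℝ),
      (∀ x : EuclideanSpace ℝ (Fin n), ⟪x, toEuclideanCLM (𝕜 := ℝ) L x⟫ ≤ 0) ∧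
      IsUnit (δ • (1 : Matrix (Fin n) (Fin n) ℝ) - L) ∧
      IsUnit (γ • (1 : Matrix (Fin n) (Fin n) ℝ) - L) ∧
      IsUnit ((η • (1 : Matrix (Fin n) (Fin n) ℝ) - L) ^ 2 + β ^ 2 • 1) ∧
      (δ + (η ^ 2 + β ^ 2) / δ) / (2 * η) <
        l2OpNorm ((δ • (1 : Matrix (Fin n) (Fin n) ℝ) - L)⁻¹ *
              (γ • (1 : Matrix (Fin n) (Fin n) ℝ) - L)⁻¹ *
              ((η • (1 : Matrix (Fin n) (Fin n) ℝ) - L) ^ 2 + β ^ 2 • 1)) *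
          l2OpNorm (((δ • (1 : Matrix (Fin n) (Fin n) ℝ) - L)⁻¹ *
              (γ • (1 : Matrix (Fin n) (Fin n) ℝ) - L)⁻¹ *
              ((η • (1 : Matrix (Fin n) (Fin n) ℝ) - L) ^ 2 + β ^ 2 • 1))⁻¹) := by
  -- Find frequencies ω₁ ω₂ witnessing the condition-number bound violation.
  obtain ⟨ω₁, ω₂, hkey⟩ : ∃ ω₁ ω₂ : ℝ,
      (δ + (η ^ 2 + β ^ 2) / δ) / (2 * η) <
        ‖((δ : ℂ) - ω₁ * Complex.I)⁻¹ * ((γ : ℂ) - ω₁ * Complex.I)⁻¹ *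
            (((η : ℂ) - ω₁ * Complex.I) ^ 2 + (β : ℂ) ^ 2)‖ *
          (‖((δ : ℂ) - ω₂ * Complex.I)⁻¹ * ((γ : ℂ) - ω₂ * Complex.I)⁻¹ *
            (((η : ℂ) - ω₂ * Complex.I) ^ 2 + (β : ℂ) ^ 2)‖)⁻¹ := by
    have hs : 0 < η ^ 2 + β ^ 2 := by positivity
    have hw : (Real.sqrt (η ^ 2 + β ^ 2)) ^ 2 = η ^ 2 + β ^ 2 := Real.sq_sqrt hs.le
    rcases lt_or_gt_of_ne hne with hlt | hgt
    · -- γ < γ*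
      have hlt' : γ * δ < η ^ 2 + β ^ 2 := by
        rw [lt_div_iff₀ hδ] at hlt
        linarith
      exact ⟨0, Real.sqrt (η ^ 2 + β ^ 2),
        abs_key η δ β γ 0 (Real.sqrt (η ^ 2 + β ^ 2)) hη hδ hγ
          (case_lt η δ β γ (Real.sqrt (η ^ 2 + β ^ 2)) hη hδ hγ hw hlt')⟩
    · -- γ > γ*
      have hgt' : η ^ 2 + β ^ 2 < γ * δ := by
        rw [div_lt_iff₀ hδ] at hgt
        linarith
      have hεpos : 0 < δ ^ 2 * γ ^ 2 - (η ^ 2 + β ^ 2) ^ 2 := by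
        nlinarith [hgt', hs, mul_pos hγ hδ]
      obtain ⟨u, hu1, hpoly⟩ := exists_u (δ ^ 2 * γ ^ 2 - (η ^ 2 + β ^ 2) ^ 2)
        (2 * (δ ^ 2 * (γ ^ 2 + (η ^ 2 + β ^ 2))) * (η ^ 2 - β ^ 2) -
          (η ^ 2 + β ^ 2) * (δ ^ 2 + (η ^ 2 + β ^ 2)) * (δ ^ 2 + γ ^ 2))
        (δ ^ 2 * (γ ^ 2 + (η ^ 2 + β ^ 2)) * (η ^ 2 + β ^ 2) ^ 2 -
          (η ^ 2 + β ^ 2) * (δ ^ 2 + (η ^ 2 + β ^ 2)) * (δ ^ 2 * γ ^ 2)) hεpos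
      have hu0 : (0:ℝ) ≤ u := by linarith
      have hv : (Real.sqrt u) ^ 2 = u := Real.sq_sqrt hu0
      have hu : (η ^ 2 + β ^ 2) * (δ ^ 2 + (η ^ 2 + β ^ 2)) * ((δ ^ 2 + u) * (γ ^ 2 + u))
          < δ ^ 2 * (γ ^ 2 + (η ^ 2 + β ^ 2)) *
              (u ^ 2 + 2 * (η ^ 2 - β ^ 2) * u + (η ^ 2 + β ^ 2) ^ 2) := by
        nlinarith [hpoly]
      exact ⟨Real.sqrt u, Real.sqrt (η ^ 2 + β ^ 2),
        abs_key η δ β γ (Real.sqrt u) (Real.sqrt (η ^ 2 + β ^ 2)) hη hδ hγ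
          (case_gt η δ β γ (Real.sqrt (η ^ 2 + β ^ 2)) (Real.sqrt u) u hη hδ hγ hw hv hu)⟩
  -- Build the 4×4 skew-symmetric witness matrix.
  refine ⟨4, cmat (ω₁ * Complex.I) (ω₂ * Complex.I), fun x => le_of_eq (skew_inner ω₁ ω₂ x),
    ?_, ?_, ?_, ?_⟩
  · rw [smul_one_eq_cmat, cmat_sub]
    exact cmat_isUnit (lin_ne_zero ω₁ hδ.ne') (lin_ne_zero ω₂ hδ.ne')
  · rw [smul_one_eq_cmat, cmat_sub]
    exact cmat_isUnit (lin_ne_zero ω₁ hγ.ne') (lin_ne_zero ω₂ hγ.ne')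
  · rw [smul_one_eq_cmat, cmat_sub, cmat_pow_two, smul_one_eq_cmat, cmat_add]
    refine cmat_isUnit ?_ ?_
    · have := quad_ne_zero (η := η) β ω₁ hη.ne'
      push_cast
      exact this
    · have := quad_ne_zero (η := η) β ω₂ hη.ne'
      push_cast
      exact this
  · have hN : (η • (1 : Matrix (Fin 4) (Fin 4) ℝ) - cmat (ω₁ * Complex.I) (ω₂ * Complex.I)) ^ 2
        + β ^ 2 • 1
        = cmat (((η : ℂ) - ω₁ * Complex.I) ^ 2 + (β : ℂ) ^ 2)
            (((η : ℂ) - ω₂ * Complex.I) ^ 2 + (β : ℂ) ^ 2) := by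
      rw [smul_one_eq_cmat, cmat_sub, cmat_pow_two, smul_one_eq_cmat, cmat_add]
      norm_cast
    have hP : (δ • (1 : Matrix (Fin 4) (Fin 4) ℝ) - cmat (ω₁ * Complex.I) (ω₂ * Complex.I))⁻¹ *
          (γ • (1 : Matrix (Fin 4) (Fin 4) ℝ) - cmat (ω₁ * Complex.I) (ω₂ * Complex.I))⁻¹ *
          ((η • (1 : Matrix (Fin 4) (Fin 4) ℝ) - cmat (ω₁ * Complex.I) (ω₂ * Complex.I)) ^ 2
            + β ^ 2 • 1)
        = cmat
            (((δ : ℂ) - ω₁ * Complex.I)⁻¹ * ((γ : ℂ) - ω₁ * Complex.I)⁻¹ *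
              (((η : ℂ) - ω₁ * Complex.I) ^ 2 + (β : ℂ) ^ 2))
            (((δ : ℂ) - ω₂ * Complex.I)⁻¹ * ((γ : ℂ) - ω₂ * Complex.I)⁻¹ *
              (((η : ℂ) - ω₂ * Complex.I) ^ 2 + (β : ℂ) ^ 2)) := by
      rw [hN, smul_one_eq_cmat, cmat_sub, smul_one_eq_cmat, cmat_sub,
        cmat_inv (lin_ne_zero ω₁ hδ.ne') (lin_ne_zero ω₂ hδ.ne'),
        cmat_inv (lin_ne_zero ω₁ hγ.ne') (lin_ne_zero ω₂ hγ.ne'),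
        cmat_mul, cmat_mul]
    rw [hP]
    have hφ₁ : (((δ : ℂ) - ω₁ * Complex.I)⁻¹ * ((γ : ℂ) - ω₁ * Complex.I)⁻¹ *
        (((η : ℂ) - ω₁ * Complex.I) ^ 2 + (β : ℂ) ^ 2)) ≠ 0 :=
      mul_ne_zero (mul_ne_zero (inv_ne_zero (lin_ne_zero ω₁ hδ.ne'))
        (inv_ne_zero (lin_ne_zero ω₁ hγ.ne'))) (quad_ne_zero β ω₁ hη.ne')
    have hφ₂ : (((δ : ℂ) - ω₂ * Complex.I)⁻¹ * ((γ : ℂ) - ω₂ * Complex.I)⁻¹ *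
        (((η : ℂ) - ω₂ * Complex.I) ^ 2 + (β : ℂ) ^ 2)) ≠ 0 :=
      mul_ne_zero (mul_ne_zero (inv_ne_zero (lin_ne_zero ω₂ hδ.ne'))
        (inv_ne_zero (lin_ne_zero ω₂ hγ.ne'))) (quad_ne_zero β ω₂ hη.ne')
    rw [cmat_inv hφ₁ hφ₂]
    refine lt_of_lt_of_le hkey ?_
    have h1 := cmat_norm_ge_fst
      (((δ : ℂ) - ω₁ * Complex.I)⁻¹ * ((γ : ℂ) - ω₁ * Complex.I)⁻¹ *
        (((η : ℂ) - ω₁ * Complex.I) ^ 2 + (β : ℂ) ^ 2))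
      (((δ : ℂ) - ω₂ * Complex.I)⁻¹ * ((γ : ℂ) - ω₂ * Complex.I)⁻¹ *
        (((η : ℂ) - ω₂ * Complex.I) ^ 2 + (β : ℂ) ^ 2))
    have h2 := cmat_norm_ge_snd
      ((((δ : ℂ) - ω₁ * Complex.I)⁻¹ * ((γ : ℂ) - ω₁ * Complex.I)⁻¹ *
        (((η : ℂ) - ω₁ * Complex.I) ^ 2 + (β : ℂ) ^ 2))⁻¹)
      ((((δ : ℂ) - ω₂ * Complex.I)⁻¹ * ((γ : ℂ) - ω₂ * Complex.I)⁻¹ *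
        (((η : ℂ) - ω₂ * Complex.I) ^ 2 + (β : ℂ) ^ 2))⁻¹)
    rw [norm_inv] at h2
    exact mul_le_mul h1 h2 (by positivity) ((norm_nonneg _).trans h1)
end

section
/- Let η > 0 and β ∈ ℝ, and set γ* := √(η² + β²). Let L be a real n×n matrix satisfying x·(Lx) ≤ 0 for every x ∈ ℝⁿ. Then the matrices γ*I − L and (ηI − L)² + β²I are invertible, and the preconditioned operator P_{γ*} := (γ*I − L)⁻²[(ηI − L)² + β²I] satisfies κ(P_{γ*}) := ‖P_{γ*}‖₂ · ‖P_{γ*}⁻¹‖₂ ≤ √(1 + β²/η²). -/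
open Matrix
open scoped RealInnerProductSpace

set_option maxHeartbeats 2000000
set_option synthInstance.maxHeartbeats 1000000

section Stmt7Aux

variable {n : ℕ}
local notation "E" => EuclideanSpace ℝ (Fin n)

instance stmt7IsScalarTower : IsScalarTower ℝ (E →L[ℝ] E) (E →L[ℝ] E) :=
  ⟨fun r f g => by ext x; simp [smul_eq_mul, ContinuousLinearMap.mul_apply]⟩

instance stmt7SMulCommClass : SMulCommClass ℝ (E →L[ℝ] E) (E →L[ℝ] E) :=
  ⟨fun r f g => by ext x; simp [smul_eq_mul, ContinuousLinearMap.mul_apply, _root_.map_smul]⟩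

lemma stmt7_clm_isUnit_of_injective (f : E →L[ℝ] E) (hf : Function.Injective f) : IsUnit f := by
  have hb : Function.Bijective f :=
    ⟨hf, (LinearMap.injective_iff_surjective (f := (f : E →ₗ[ℝ] E))).mp hf⟩
  let e : E ≃ₗ[ℝ] E := LinearEquiv.ofBijective (f : E →ₗ[ℝ] E) hb
  refine ⟨⟨f, e.symm.toContinuousLinearEquiv.toContinuousLinearMap, ?_, ?_⟩, rfl⟩
  · exact ContinuousLinearMap.ext fun x => e.apply_symm_apply x
  · exact ContinuousLinearMap.ext fun x => e.symm_apply_apply x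

lemma stmt7_normsq_comb (a b : ℝ) (x y z : E) :
    ‖a • x + b • y + z‖ ^ 2 =
      a^2 * ‖x‖^2 + b^2 * ‖y‖^2 + ‖z‖^2 + 2*a*b*⟪x,y⟫ + 2*a*⟪x,z⟫ + 2*b*⟪y,z⟫ := by
  have h : ∀ v : E, ‖v‖ ^ 2 = ⟪v, v⟫ := fun v => (real_inner_self_eq_norm_sq v).symm
  simp only [h, inner_add_left, inner_add_right, real_inner_smul_left, real_inner_smul_right]
  rw [real_inner_comm y x, real_inner_comm z x, real_inner_comm z y]
  ring

lemma stmt7_ineq2 (η γ : ℝ) (hη : 0 < η) (hγ : η ≤ γ) (x x1 x2 : E)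
    (h01 : ⟪x, x1⟫ ≤ 0) (h12 : ⟪x1, x2⟫ ≤ 0) :
    ‖(γ^2) • x + (-(2*η)) • x1 + x2‖ ≤ ‖(γ^2) • x + (-(2*γ)) • x1 + x2‖ := by
  refine le_of_pow_le_pow_left₀ two_ne_zero (norm_nonneg _) ?_
  rw [stmt7_normsq_comb, stmt7_normsq_comb]
  have hd : 0 ≤ γ - η := sub_nonneg.2 hγ
  have h1 : 0 ≤ (γ - η) * γ^2 * (-⟪x, x1⟫) :=
    mul_nonneg (mul_nonneg hd (sq_nonneg γ)) (neg_nonneg.2 h01)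
  have h2 : 0 ≤ (γ - η) * (-⟪x1, x2⟫) := mul_nonneg hd (neg_nonneg.2 h12)
  have h3 : 0 ≤ (γ^2 - η^2) * ‖x1‖^2 := by
    have : 0 ≤ γ^2 - η^2 := by nlinarith
    exact mul_nonneg this (sq_nonneg _)
  nlinarith [h1, h2, h3]

lemma stmt7_ineq3 (η γ : ℝ) (hη : 0 < η) (hγ : η ≤ γ) (x x1 x2 : E)
    (h01 : ⟪x, x1⟫ ≤ 0) (h12 : ⟪x1, x2⟫ ≤ 0) :
    η * ‖(γ^2) • x + (-(2*γ)) • x1 + x2‖ ≤ γ * ‖(γ^2) • x + (-(2*η)) • x1 + x2‖ := by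
  have hγ0 : 0 < γ := lt_of_lt_of_le hη hγ
  have hd : 0 ≤ γ - η := sub_nonneg.2 hγ
  refine le_of_pow_le_pow_left₀ two_ne_zero (by positivity) ?_
  rw [mul_pow, mul_pow, stmt7_normsq_comb, stmt7_normsq_comb]
  have he : 0 ≤ γ^4 * ‖x‖^2 + 2*γ^2*⟪x,x2⟫ + ‖x2‖^2 := by
    have h := sq_nonneg ‖(γ^2) • x + (0:ℝ) • x1 + x2‖
    rw [stmt7_normsq_comb] at h
    nlinarith [h]
  have h1 : 0 ≤ (γ - η) * η * γ^3 * (-⟪x, x1⟫) :=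
    mul_nonneg (mul_nonneg (mul_nonneg hd hη.le) (by positivity)) (neg_nonneg.2 h01)
  have h2 : 0 ≤ (γ - η) * η * γ * (-⟪x1, x2⟫) :=
    mul_nonneg (mul_nonneg (mul_nonneg hd hη.le) hγ0.le) (neg_nonneg.2 h12)
  have h3 : 0 ≤ (γ^2 - η^2) * (γ^4 * ‖x‖^2 + 2*γ^2*⟪x,x2⟫ + ‖x2‖^2) := by
    have : 0 ≤ γ^2 - η^2 := by nlinarith
    exact mul_nonneg this he
  nlinarith [h1, h2, h3]

end Stmt7Aux

/-- Corollary 3.2 -/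
theorem stmt7 {n : ℕ} (η β : ℝ) (hη : 0 < η)
    (L : Matrix (Fin n) (Fin n) ℝ)
    (hL : ∀ x : EuclideanSpace ℝ (Fin n), ⟪x, toEuclideanCLM (𝕜 := ℝ) L x⟫ ≤ 0) :
    IsUnit (Real.sqrt (η ^ 2 + β ^ 2) • (1 : Matrix (Fin n) (Fin n) ℝ) - L) ∧
    IsUnit ((η • (1 : Matrix (Fin n) (Fin n) ℝ) - L) ^ 2 + β ^ 2 • 1) ∧
    l2OpNorm ((Real.sqrt (η ^ 2 + β ^ 2) • (1 : Matrix (Fin n) (Fin n) ℝ) - L)⁻¹ *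
          (Real.sqrt (η ^ 2 + β ^ 2) • (1 : Matrix (Fin n) (Fin n) ℝ) - L)⁻¹ *
          ((η • (1 : Matrix (Fin n) (Fin n) ℝ) - L) ^ 2 + β ^ 2 • 1)) *
      l2OpNorm (((Real.sqrt (η ^ 2 + β ^ 2) • (1 : Matrix (Fin n) (Fin n) ℝ) - L)⁻¹ *
          (Real.sqrt (η ^ 2 + β ^ 2) • (1 : Matrix (Fin n) (Fin n) ℝ) - L)⁻¹ *
          ((η • (1 : Matrix (Fin n) (Fin n) ℝ) - L) ^ 2 + β ^ 2 • 1))⁻¹) ≤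
      Real.sqrt (1 + β ^ 2 / η ^ 2) := by
  set γ : ℝ := Real.sqrt (η ^ 2 + β ^ 2) with hγdef
  have hγpos : 0 < γ := Real.sqrt_pos.mpr (by positivity)
  have hγ2 : γ ^ 2 = η ^ 2 + β ^ 2 := Real.sq_sqrt (by positivity)
  have hγη : η ≤ γ := by nlinarith [hγpos.le, hγ2]
  set T : EuclideanSpace ℝ (Fin n) →L[ℝ] EuclideanSpace ℝ (Fin n) :=
    toEuclideanCLM (𝕜 := ℝ) L with hTdef
  set Mc : EuclideanSpace ℝ (Fin n) →L[ℝ] EuclideanSpace ℝ (Fin n) := γ • 1 - T with hMcdef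
  set Qc : EuclideanSpace ℝ (Fin n) →L[ℝ] EuclideanSpace ℝ (Fin n) :=
    (η • 1 - T) ^ 2 + β ^ 2 • 1 with hQcdef
  have hφM : toEuclideanCLM (𝕜 := ℝ) (γ • (1 : Matrix (Fin n) (Fin n) ℝ) - L) = Mc := by
    rw [hMcdef, hTdef, map_sub, _root_.map_smul, _root_.map_one]
  have hφQ : toEuclideanCLM (𝕜 := ℝ)
      ((η • (1 : Matrix (Fin n) (Fin n) ℝ) - L) ^ 2 + β ^ 2 • 1) = Qc := by
    rw [hQcdef, hTdef, map_add, map_pow, map_sub, _root_.map_smul, _root_.map_one,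
      _root_.map_smul, _root_.map_one]
  have hMMapp : ∀ x : EuclideanSpace ℝ (Fin n),
      Mc (Mc x) = (γ^2) • x + (-(2*γ)) • T x + T (T x) := by
    intro x
    simp only [hMcdef, ContinuousLinearMap.sub_apply, ContinuousLinearMap.smul_apply,
      ContinuousLinearMap.one_apply, map_sub, _root_.map_smul]
    module
  have hQapp : ∀ x : EuclideanSpace ℝ (Fin n),
      Qc x = (γ^2) • x + (-(2*η)) • T x + T (T x) := by
    intro x
    simp only [hQcdef, pow_two, ContinuousLinearMap.add_apply, ContinuousLinearMap.smul_apply,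
      ContinuousLinearMap.one_apply, ContinuousLinearMap.mul_apply, ContinuousLinearMap.sub_apply,
      map_sub, _root_.map_smul, hγ2]
    module
  have hQle : ∀ x, ‖Qc x‖ ≤ ‖Mc (Mc x)‖ := fun x => by
    rw [hQapp x, hMMapp x]
    exact stmt7_ineq2 η γ hη hγη x (T x) (T (T x)) (hL x) (hL (T x))
  have hQge : ∀ x, η * ‖Mc (Mc x)‖ ≤ γ * ‖Qc x‖ := fun x => by
    rw [hQapp x, hMMapp x]
    exact stmt7_ineq3 η γ hη hγη x (T x) (T (T x)) (hL x) (hL (T x))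
  have hMlow : ∀ x : EuclideanSpace ℝ (Fin n), γ * ‖x‖ ≤ ‖Mc x‖ := by
    intro x
    rcases eq_or_ne x 0 with rfl | hx
    · simp
    · have h1 : γ * ‖x‖^2 ≤ ⟪x, Mc x⟫ := by
        simp only [hMcdef, ContinuousLinearMap.sub_apply, ContinuousLinearMap.smul_apply,
          ContinuousLinearMap.one_apply, inner_sub_right, real_inner_smul_right,
          real_inner_self_eq_norm_sq]
        linarith [hL x]
      have h2 := real_inner_le_norm x (Mc x)
      have hx0 : 0 < ‖x‖ := norm_pos_iff.mpr hx
      nlinarith [h1, h2, hx0]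
  have hMinj : Function.Injective Mc := by
    rw [injective_iff_map_eq_zero]
    intro x hx
    have h := hMlow x
    rw [hx, norm_zero] at h
    have h2 : ‖x‖ ≤ 0 := by nlinarith [h, hγpos]
    simpa [norm_le_zero_iff] using h2
  have hMcU : IsUnit Mc := stmt7_clm_isUnit_of_injective Mc hMinj
  have hQinj : Function.Injective Qc := by
    rw [injective_iff_map_eq_zero]
    intro x hx
    have h := hQge x
    rw [hx, norm_zero, mul_zero] at h
    have hMM : Mc (Mc x) = 0 := by
      have h2 : ‖Mc (Mc x)‖ ≤ 0 := by nlinarith [h, norm_nonneg (Mc (Mc x))]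
      simpa [norm_le_zero_iff] using h2
    exact hMinj (hMinj (by simpa using hMM))
  have hQcU : IsUnit Qc := stmt7_clm_isUnit_of_injective Qc hQinj
  set vM := hMcU.unit with hvM
  set vQ := hQcU.unit with hvQ
  have hMU : IsUnit (γ • (1 : Matrix (Fin n) (Fin n) ℝ) - L) := by
    have h : IsUnit (toEuclideanCLM (𝕜 := ℝ) (γ • (1 : Matrix (Fin n) (Fin n) ℝ) - L)) := by
      rw [hφM]; exact hMcU
    simpa using h.map (toEuclideanCLM (𝕜 := ℝ)).symm
  have hQU : IsUnit ((η • (1 : Matrix (Fin n) (Fin n) ℝ) - L) ^ 2 + β ^ 2 • 1) := by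
    have h : IsUnit (toEuclideanCLM (𝕜 := ℝ)
        ((η • (1 : Matrix (Fin n) (Fin n) ℝ) - L) ^ 2 + β ^ 2 • 1)) := by
      rw [hφQ]; exact hQcU
    simpa using h.map (toEuclideanCLM (𝕜 := ℝ)).symm
  refine ⟨hMU, hQU, ?_⟩
  -- cancellation helpers
  have hMcancel : ∀ z, Mc ((↑vM⁻¹ : EuclideanSpace ℝ (Fin n) →L[ℝ] EuclideanSpace ℝ (Fin n)) z) = z := by
    intro z
    rw [← hMcU.unit_spec, ← hvM, ← ContinuousLinearMap.mul_apply, vM.mul_inv,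
      ContinuousLinearMap.one_apply]
  have hQcancel : ∀ z, Qc ((↑vQ⁻¹ : EuclideanSpace ℝ (Fin n) →L[ℝ] EuclideanSpace ℝ (Fin n)) z) = z := by
    intro z
    rw [← hQcU.unit_spec, ← hvQ, ← ContinuousLinearMap.mul_apply, vQ.mul_inv,
      ContinuousLinearMap.one_apply]
  -- commutation
  have hcMQ : Commute Mc Qc := by
    rw [hMcdef, hQcdef]
    have cT : Commute T (η • (1 : EuclideanSpace ℝ (Fin n) →L[ℝ] EuclideanSpace ℝ (Fin n)) - T) :=
      ((Commute.one_right T).smul_right η).sub_right (Commute.refl T)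
    have cγ : Commute (γ • (1 : EuclideanSpace ℝ (Fin n) →L[ℝ] EuclideanSpace ℝ (Fin n)) - T) (η • (1 : EuclideanSpace ℝ (Fin n) →L[ℝ] EuclideanSpace ℝ (Fin n)) - T) :=
      ((Commute.one_left _).smul_left γ).sub_left cT
    exact (cγ.pow_right 2).add_right ((Commute.one_right _).smul_right (β^2))
  have hcMQ' : Commute (↑vM : EuclideanSpace ℝ (Fin n) →L[ℝ] EuclideanSpace ℝ (Fin n)) (↑vQ : EuclideanSpace ℝ (Fin n) →L[ℝ] EuclideanSpace ℝ (Fin n)) := by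
    rw [hvM, hvQ, hMcU.unit_spec, hQcU.unit_spec]; exact hcMQ
  -- matrix inverse image under the equivalence
  have hdetM : IsUnit (γ • (1 : Matrix (Fin n) (Fin n) ℝ) - L).det :=
    (Matrix.isUnit_iff_isUnit_det _).1 hMU
  have hMinv_img : toEuclideanCLM (𝕜 := ℝ)
      ((γ • (1 : Matrix (Fin n) (Fin n) ℝ) - L)⁻¹) = (↑vM⁻¹ : EuclideanSpace ℝ (Fin n) →L[ℝ] EuclideanSpace ℝ (Fin n)) := by
    apply Units.eq_inv_of_mul_eq_one_left
    rw [hvM, hMcU.unit_spec, ← hφM, ← _root_.map_mul, Matrix.mul_nonsing_inv _ hdetM, _root_.map_one]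
  set uM := hMU.unit with huM
  set uQ := hQU.unit with huQ
  have hMinv_mat : (γ • (1 : Matrix (Fin n) (Fin n) ℝ) - L)⁻¹ = (↑uM⁻¹ : Matrix (Fin n) (Fin n) ℝ) := by
    rw [Matrix.nonsing_inv_eq_ringInverse]
    conv_lhs => rw [← hMU.unit_spec, ← huM]
    rw [Ring.inverse_unit]
  set Xmat := (γ • (1 : Matrix (Fin n) (Fin n) ℝ) - L)⁻¹ *
      (γ • (1 : Matrix (Fin n) (Fin n) ℝ) - L)⁻¹ *
      ((η • (1 : Matrix (Fin n) (Fin n) ℝ) - L) ^ 2 + β ^ 2 • 1) with hXmatdef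
  have hXmat_units : Xmat = (↑(uM⁻¹ * uM⁻¹ * uQ) : Matrix (Fin n) (Fin n) ℝ) := by
    rw [hXmatdef, hMinv_mat]
    conv_lhs => rw [← hQU.unit_spec, ← huQ]
    simp [Units.val_mul]
  have hXinv_mat : Xmat⁻¹ = (↑(uQ⁻¹ * uM * uM) : Matrix (Fin n) (Fin n) ℝ) := by
    rw [hXmat_units, Matrix.nonsing_inv_eq_ringInverse, Ring.inverse_unit]
    exact congrArg Units.val (by rw [_root_.mul_inv_rev, _root_.mul_inv_rev, inv_inv, ← mul_assoc])
  have hQinv_img : toEuclideanCLM (𝕜 := ℝ) (↑uQ⁻¹ : Matrix (Fin n) (Fin n) ℝ) = (↑vQ⁻¹ : EuclideanSpace ℝ (Fin n) →L[ℝ] EuclideanSpace ℝ (Fin n)) := by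
    apply Units.eq_inv_of_mul_eq_one_left
    rw [hvQ, hQcU.unit_spec, ← hφQ, ← _root_.map_mul]
    have h2 : ((η • (1 : Matrix (Fin n) (Fin n) ℝ) - L) ^ 2 + β ^ 2 • 1) *
        (↑uQ⁻¹ : Matrix (Fin n) (Fin n) ℝ) = 1 := by
      conv_lhs => rw [← hQU.unit_spec, ← huQ]
      exact uQ.mul_inv
    rw [h2, _root_.map_one]
  have hM_img_unit : toEuclideanCLM (𝕜 := ℝ)
      (↑uM : Matrix (Fin n) (Fin n) ℝ) = (↑vM : EuclideanSpace ℝ (Fin n) →L[ℝ] EuclideanSpace ℝ (Fin n)) := by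
    rw [hvM, hMcU.unit_spec, ← hφM]
    exact congrArg _ (by rw [huM]; exact hMU.unit_spec)
  -- images of the preconditioned operator and its inverse
  have hX_img : toEuclideanCLM (𝕜 := ℝ) Xmat =
      ((↑vM⁻¹ * ↑vM⁻¹ * ↑vQ) : EuclideanSpace ℝ (Fin n) →L[ℝ] EuclideanSpace ℝ (Fin n)) := by
    rw [hXmatdef, _root_.map_mul, _root_.map_mul, hMinv_img, hφQ]
    rw [hvQ, hQcU.unit_spec]
  have hXinv_img : toEuclideanCLM (𝕜 := ℝ) (Xmat⁻¹) =
      ((↑vQ⁻¹ * Mc * Mc) : EuclideanSpace ℝ (Fin n) →L[ℝ] EuclideanSpace ℝ (Fin n)) := by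
    rw [hXinv_mat, Units.val_mul, Units.val_mul, _root_.map_mul, _root_.map_mul,
      hQinv_img, hM_img_unit, hvM, hMcU.unit_spec]
  -- norm bounds
  have hcInv1 : Commute ((↑vM⁻¹ : EuclideanSpace ℝ (Fin n) →L[ℝ] EuclideanSpace ℝ (Fin n))) ((↑vQ : EuclideanSpace ℝ (Fin n) →L[ℝ] EuclideanSpace ℝ (Fin n))) := hcMQ'.units_inv_left
  have hre1 : ((↑vM⁻¹ * ↑vM⁻¹ * ↑vQ) : EuclideanSpace ℝ (Fin n) →L[ℝ] EuclideanSpace ℝ (Fin n)) = ↑vQ * ↑vM⁻¹ * ↑vM⁻¹ := by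
    rw [mul_assoc, hcInv1.eq, ← mul_assoc, hcInv1.eq]
  have hP1 : ‖((↑vM⁻¹ * ↑vM⁻¹ * ↑vQ) : EuclideanSpace ℝ (Fin n) →L[ℝ] EuclideanSpace ℝ (Fin n))‖ ≤ 1 := by
    rw [hre1]
    refine ContinuousLinearMap.opNorm_le_bound _ zero_le_one fun x => ?_
    have happ : ((↑vQ * ↑vM⁻¹ * ↑vM⁻¹ : EuclideanSpace ℝ (Fin n) →L[ℝ] EuclideanSpace ℝ (Fin n))) x =
        Qc ((↑vM⁻¹ : EuclideanSpace ℝ (Fin n) →L[ℝ] EuclideanSpace ℝ (Fin n)) ((↑vM⁻¹ : EuclideanSpace ℝ (Fin n) →L[ℝ] EuclideanSpace ℝ (Fin n)) x)) := by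
      rw [ContinuousLinearMap.mul_apply, ContinuousLinearMap.mul_apply, hvQ, hQcU.unit_spec]
    rw [happ, one_mul]
    calc ‖Qc ((↑vM⁻¹ : EuclideanSpace ℝ (Fin n) →L[ℝ] EuclideanSpace ℝ (Fin n)) ((↑vM⁻¹ : EuclideanSpace ℝ (Fin n) →L[ℝ] EuclideanSpace ℝ (Fin n)) x))‖
        ≤ ‖Mc (Mc ((↑vM⁻¹ : EuclideanSpace ℝ (Fin n) →L[ℝ] EuclideanSpace ℝ (Fin n)) ((↑vM⁻¹ : EuclideanSpace ℝ (Fin n) →L[ℝ] EuclideanSpace ℝ (Fin n)) x)))‖ := hQle _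
      _ = ‖x‖ := by rw [hMcancel, hMcancel]
  have hcInv2 : Commute ((↑vQ⁻¹ : EuclideanSpace ℝ (Fin n) →L[ℝ] EuclideanSpace ℝ (Fin n))) Mc := by
    have h : Commute ((↑vQ : EuclideanSpace ℝ (Fin n) →L[ℝ] EuclideanSpace ℝ (Fin n))) Mc := by
      rw [hvQ, hQcU.unit_spec]; exact hcMQ.symm
    exact h.units_inv_left
  have hre2 : ((↑vQ⁻¹ * Mc * Mc) : EuclideanSpace ℝ (Fin n) →L[ℝ] EuclideanSpace ℝ (Fin n)) = Mc * Mc * ↑vQ⁻¹ := by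
    rw [hcInv2.eq, mul_assoc, hcInv2.eq, ← mul_assoc]
  have hP2 : ‖((↑vQ⁻¹ * Mc * Mc) : EuclideanSpace ℝ (Fin n) →L[ℝ] EuclideanSpace ℝ (Fin n))‖ ≤ γ / η := by
    rw [hre2]
    refine ContinuousLinearMap.opNorm_le_bound _ (le_of_lt (div_pos hγpos hη)) fun x => ?_
    have happ : ((Mc * Mc * ↑vQ⁻¹ : EuclideanSpace ℝ (Fin n) →L[ℝ] EuclideanSpace ℝ (Fin n))) x =
        Mc (Mc ((↑vQ⁻¹ : EuclideanSpace ℝ (Fin n) →L[ℝ] EuclideanSpace ℝ (Fin n)) x)) := by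
      rw [ContinuousLinearMap.mul_apply, ContinuousLinearMap.mul_apply]
    rw [happ]
    have h := hQge ((↑vQ⁻¹ : EuclideanSpace ℝ (Fin n) →L[ℝ] EuclideanSpace ℝ (Fin n)) x)
    rw [hQcancel] at h
    rw [div_mul_eq_mul_div, le_div_iff₀ hη]
    nlinarith [h]
  -- conclusion
  have hsqrt : Real.sqrt (1 + β ^ 2 / η ^ 2) = γ / η := by
    rw [show (1 : ℝ) + β ^ 2 / η ^ 2 = (η ^ 2 + β ^ 2) / η ^ 2 by field_simp,
      Real.sqrt_div (by positivity), Real.sqrt_sq hη.le, hγdef]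
  rw [hsqrt]
  show l2OpNorm Xmat * l2OpNorm (Xmat⁻¹) ≤ γ / η
  rw [l2OpNorm, l2OpNorm, hX_img, hXinv_img]
  calc ‖((↑vM⁻¹ * ↑vM⁻¹ * ↑vQ) : EuclideanSpace ℝ (Fin n) →L[ℝ] EuclideanSpace ℝ (Fin n))‖ * ‖((↑vQ⁻¹ * Mc * Mc) : EuclideanSpace ℝ (Fin n) →L[ℝ] EuclideanSpace ℝ (Fin n))‖
      ≤ 1 * (γ / η) :=
        mul_le_mul hP1 hP2 (norm_nonneg _) zero_le_one
    _ = γ / η := one_mul _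
end

section
/- Let η > 0 and β ∈ ℝ, set γ* := √(η² + β²), and let L be the real 3×3 matrix with rows (0, 0, 0), (0, 0, −γ*), (0, γ*, 0). Then x·(Lx) ≤ 0 for every x ∈ ℝ³, the matrices γ*I − L and (ηI − L)² + β²I are invertible, and the preconditioned operator P_{γ*} := (γ*I − L)⁻²[(ηI − L)² + β²I] satisfies κ(P_{γ*}) := ‖P_{γ*}‖₂ · ‖P_{γ*}⁻¹‖₂ = √(1 + β²/η²). In particular, the bound of Corollary 3.2 is attained with equality. -/
open Matrix
open scoped RealInnerProductSpace

set_option maxHeartbeats 1000000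

private lemma l2OpNorm_diagonal_aux {n : ℕ} (v : Fin n → ℝ) (c : ℝ) (hc : 0 ≤ c)
    (hle : ∀ i, |v i| ≤ c) (hex : ∃ i, |v i| = c) :
    ‖Matrix.toEuclideanCLM (𝕜 := ℝ) (Matrix.diagonal v)‖ = c := by
  have happ : ∀ (x : EuclideanSpace ℝ (Fin n)) (i : Fin n),
      (Matrix.toEuclideanCLM (𝕜 := ℝ) (Matrix.diagonal v) x) i = v i * x i := by
    intro x i
    have := Matrix.ofLp_toEuclideanCLM (𝕜 := ℝ) (Matrix.diagonal v) x
    have h2 := congrFun this i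
    simpa [Matrix.mulVec_diagonal] using h2
  apply le_antisymm
  · apply ContinuousLinearMap.opNorm_le_bound _ hc
    intro x
    rw [EuclideanSpace.norm_eq, EuclideanSpace.norm_eq]
    rw [← Real.sqrt_sq hc, ← Real.sqrt_mul (by positivity)]
    apply Real.sqrt_le_sqrt
    rw [Finset.mul_sum]
    apply Finset.sum_le_sum
    intro i _
    rw [happ]
    have hmm : ‖v i * x i‖ ^ 2 = (v i)^2 * ‖x i‖^2 := by
      rw [norm_mul]; rw [mul_pow]; simp [Real.norm_eq_abs, sq_abs]
    rw [hmm]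
    have hb : (v i)^2 ≤ c^2 := by
      rw [← sq_abs]
      exact pow_le_pow_left₀ (abs_nonneg _) (hle i) 2
    exact mul_le_mul_of_nonneg_right hb (by positivity)
  · obtain ⟨i, hi⟩ := hex
    rw [← hi]
    have h := ContinuousLinearMap.le_opNorm
      (Matrix.toEuclideanCLM (𝕜 := ℝ) (Matrix.diagonal v)) (EuclideanSpace.single i 1)
    simp only [EuclideanSpace.norm_single, norm_one, mul_one] at h
    refine le_trans ?_ h
    have hge : ‖(Matrix.toEuclideanCLM (𝕜 := ℝ) (Matrix.diagonal v))
        (EuclideanSpace.single i 1)‖ ≥ |v i| := by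
      have h2 := EuclideanSpace.norm_eq
        ((Matrix.toEuclideanCLM (𝕜 := ℝ) (Matrix.diagonal v)) (EuclideanSpace.single i 1))
      rw [h2]
      have h3 : ∀ j, ((Matrix.toEuclideanCLM (𝕜 := ℝ) (Matrix.diagonal v))
          (EuclideanSpace.single i 1)) j = v j * (EuclideanSpace.single i (1:ℝ)) j :=
        fun j => happ _ j
      calc |v i| = Real.sqrt (‖v i * (EuclideanSpace.single i (1:ℝ)) i‖^2) := by
            simp [EuclideanSpace.single_apply, Real.sqrt_sq_eq_abs]
        _ ≤ _ := by
            apply Real.sqrt_le_sqrt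
            rw [← h3]
            exact Finset.single_le_sum
              (f := fun j => ‖((Matrix.toEuclideanCLM (𝕜 := ℝ) (Matrix.diagonal v))
                (EuclideanSpace.single i 1)) j‖^2)
              (fun j _ => by positivity) (Finset.mem_univ i)
    linarith

/-- Tightness of Corollary 3.2: for `γ* := √(η² + β²)` and the skew matrix `L` with
eigenvalues `{0, ± i γ*}`, the field of values lies in the closed left half-plane, the
relevant matrices are invertible, and the condition number of
`P = (γ* I - L)⁻² [(ηI - L)² + β² I]` equals `√(1 + β²/η²)`. -/
theorem stmt9 (η β : ℝ) (hη : 0 < η) :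
    let γs : ℝ := Real.sqrt (η ^ 2 + β ^ 2)
    let L : Matrix (Fin 3) (Fin 3) ℝ := !![0, 0, 0; 0, 0, -γs; 0, γs, 0]
    (∀ x : EuclideanSpace ℝ (Fin 3), ⟪x, toEuclideanCLM (𝕜 := ℝ) L x⟫ ≤ 0) ∧
    IsUnit (γs • (1 : Matrix (Fin 3) (Fin 3) ℝ) - L) ∧
    IsUnit ((η • (1 : Matrix (Fin 3) (Fin 3) ℝ) - L) ^ 2 + β ^ 2 • 1) ∧
    l2OpNorm ((γs • (1 : Matrix (Fin 3) (Fin 3) ℝ) - L)⁻¹ *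
          (γs • (1 : Matrix (Fin 3) (Fin 3) ℝ) - L)⁻¹ *
          ((η • (1 : Matrix (Fin 3) (Fin 3) ℝ) - L) ^ 2 + β ^ 2 • 1)) *
      l2OpNorm (((γs • (1 : Matrix (Fin 3) (Fin 3) ℝ) - L)⁻¹ *
          (γs • (1 : Matrix (Fin 3) (Fin 3) ℝ) - L)⁻¹ *
          ((η • (1 : Matrix (Fin 3) (Fin 3) ℝ) - L) ^ 2 + β ^ 2 • 1))⁻¹) =
      Real.sqrt (1 + β ^ 2 / η ^ 2) := by
  intro g L
  have hg2 : g ^ 2 = η ^ 2 + β ^ 2 := Real.sq_sqrt (by positivity)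
  have hg : 0 < g := Real.sqrt_pos.mpr (by positivity)
  have hηg : η ≤ g := by nlinarith [sq_nonneg β]
  set A : Matrix (Fin 3) (Fin 3) ℝ := g • (1 : Matrix (Fin 3) (Fin 3) ℝ) - L with hA
  set Ainv : Matrix (Fin 3) (Fin 3) ℝ :=
    !![1/g, 0, 0; 0, 1/(2*g), -(1/(2*g)); 0, 1/(2*g), 1/(2*g)] with hAinv
  have hAinvA : Ainv * A = 1 := by
    ext i j
    fin_cases i <;> fin_cases j <;>
      simp [hAinv, hA, L, Matrix.mul_apply, Fin.sum_univ_three, Matrix.one_apply,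
        Matrix.vecHead, Matrix.vecTail] <;>
      field_simp <;> ring
  have hB : (η • (1 : Matrix (Fin 3) (Fin 3) ℝ) - L) ^ 2 + (β:ℝ) ^ 2 • 1 =
      !![g^2, 0, 0; 0, 0, 2*η*g; 0, -(2*η*g), 0] := by
    rw [sq]
    ext i j
    fin_cases i <;> fin_cases j <;>
      simp [L, Matrix.mul_apply, Fin.sum_univ_three, Matrix.one_apply,
        Matrix.vecHead, Matrix.vecTail] <;>
      nlinarith [hg2]
  have hP : A⁻¹ * A⁻¹ * ((η • (1 : Matrix (Fin 3) (Fin 3) ℝ) - L) ^ 2 + (β:ℝ) ^ 2 • 1)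
      = Matrix.diagonal ![1, η/g, η/g] := by
    rw [Matrix.inv_eq_left_inv hAinvA, hB]
    ext i j
    fin_cases i <;> fin_cases j <;>
      simp [hAinv, Matrix.mul_apply, Fin.sum_univ_three, Matrix.diagonal_apply, Fin.ext_iff,
        Matrix.vecHead, Matrix.vecTail] <;>
      field_simp <;> ring
  have hPinv : Matrix.diagonal ![(1:ℝ), g/η, g/η] * Matrix.diagonal ![(1:ℝ), η/g, η/g] = 1 := by
    ext i j
    fin_cases i <;> fin_cases j <;>
      simp [Matrix.diagonal_apply, Matrix.one_apply, Matrix.mul_apply,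
        Fin.sum_univ_three, Matrix.vecHead, Matrix.vecTail] <;> field_simp
  refine ⟨?_, ?_, ?_, ?_⟩
  · intro x
    have hcoord : ∀ i, (toEuclideanCLM (𝕜 := ℝ) L x) i = (L *ᵥ (WithLp.equiv 2 _ x)) i :=
      fun i => congrFun (Matrix.ofLp_toEuclideanCLM (𝕜 := ℝ) L x) i
    have hz : ⟪x, toEuclideanCLM (𝕜 := ℝ) L x⟫ = 0 := by
      rw [PiLp.inner_apply]
      simp only [RCLike.inner_apply, conj_trivial, Fin.sum_univ_three]
      rw [hcoord, hcoord, hcoord]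
      simp [L, Matrix.mulVec, dotProduct, Fin.sum_univ_three,
        Matrix.vecHead, Matrix.vecTail]
      try ring
    exact hz.le
  · exact (Matrix.isUnit_iff_isUnit_det _).mpr (Matrix.isUnit_det_of_left_inverse hAinvA)
  · rw [hB, Matrix.isUnit_iff_isUnit_det]
    have : (!![g^2, 0, 0; 0, 0, 2*η*g; 0, -(2*η*g), 0] : Matrix (Fin 3) (Fin 3) ℝ).det
        = g^2 * (2*η*g) * (2*η*g) := by
      rw [Matrix.det_fin_three]
      simp [Matrix.vecHead, Matrix.vecTail]
      try ring
    rw [this]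
    exact (by positivity : (0:ℝ) < g^2 * (2*η*g) * (2*η*g)).ne'.isUnit
  · rw [hP]
    have hinv : (Matrix.diagonal ![(1:ℝ), η/g, η/g])⁻¹ = Matrix.diagonal ![(1:ℝ), g/η, g/η] :=
      Matrix.inv_eq_left_inv hPinv
    rw [hinv]
    have hn1 : l2OpNorm (Matrix.diagonal ![(1:ℝ), η/g, η/g]) = 1 := by
      apply l2OpNorm_diagonal_aux _ _ zero_le_one
      · intro i
        fin_cases i <;>
          simp [Matrix.vecHead, Matrix.vecTail, abs_div, abs_of_pos hη, abs_of_pos hg] <;>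
          try exact (div_le_one hg).mpr hηg
      · exact ⟨0, by simp⟩
    have hn2 : l2OpNorm (Matrix.diagonal ![(1:ℝ), g/η, g/η]) = g/η := by
      have hge1 : (1:ℝ) ≤ g/η := (one_le_div hη).mpr hηg
      apply l2OpNorm_diagonal_aux _ _ (by positivity)
      · intro i
        fin_cases i <;>
          simp [Matrix.vecHead, Matrix.vecTail, abs_div, abs_of_pos hη, abs_of_pos hg] <;>
          try exact hge1
      · exact ⟨1, by simp [Matrix.vecHead, Matrix.vecTail, abs_div, abs_of_pos hη, abs_of_pos hg]⟩
    rw [hn1, hn2, one_mul]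
    have hsq : 1 + β ^ 2 / η ^ 2 = (g/η)^2 := by
      rw [div_pow, hg2]
      field_simp
    rw [hsq, Real.sqrt_sq (by positivity)]
end

section
/- Let B be a real s×s matrix and L a real N×N matrix. Then the Ns×Ns Kronecker-product matrix B ⊗ I_N − I_s ⊗ L is invertible if and only if the N×N matrix p_B(L) is invertible, where p_B is the characteristic polynomial of B (a real polynomial of degree s) and p_B(L) denotes its evaluation at the matrix L. -/
open Matrix Polynomial
open scoped Kronecker

/-- Lemma 3.1 (invertibility): for a real `s × s` matrix `B` and a real `N × N` matrix `L`,
the Kronecker-product matrix `B ⊗ I_N - I_s ⊗ L` is invertible if and only if `p_B(L)` is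
invertible, where `p_B` is the characteristic polynomial of `B` evaluated at `L`. -/
theorem stmt10 {s N : ℕ} (B : Matrix (Fin s) (Fin s) ℝ) (L : Matrix (Fin N) (Fin N) ℝ) :
    IsUnit (B ⊗ₖ (1 : Matrix (Fin N) (Fin N) ℝ) -
        (1 : Matrix (Fin s) (Fin s) ℝ) ⊗ₖ L) ↔
    IsUnit ((Polynomial.aeval L) B.charpoly) := by
  set f : ℝ[X] →ₐ[ℝ] Matrix (Fin N) (Fin N) ℝ := Polynomial.aeval L with hf
  set F : Matrix (Fin s) (Fin s) ℝ[X] →ₐ[ℝ] Matrix (Fin s) (Fin s) (Matrix (Fin N) (Fin N) ℝ) :=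
    f.mapMatrix with hF
  set e : Matrix (Fin s) (Fin s) (Matrix (Fin N) (Fin N) ℝ) ≃ₐ[ℝ]
      Matrix (Fin s × Fin N) (Fin s × Fin N) ℝ :=
    Matrix.compAlgEquiv (Fin s) (Fin N) ℝ ℝ with he
  set D : Matrix (Fin s) (Fin s) ℝ[X] := charmatrix B with hD
  set p : Matrix (Fin N) (Fin N) ℝ := (Polynomial.aeval L) B.charpoly with hp
  have hEiff : ∀ x : Matrix (Fin s) (Fin s) (Matrix (Fin N) (Fin N) ℝ),
      IsUnit (e x) ↔ IsUnit x := fun x =>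
    ⟨fun h => by simpa using h.map e.symm.toAlgHom.toRingHom,
     fun h => h.map e.toAlgHom.toRingHom⟩
  -- the Kronecker matrix is the negation of `e (F D)`
  have hker : B ⊗ₖ (1 : Matrix (Fin N) (Fin N) ℝ) - (1 : Matrix (Fin s) (Fin s) ℝ) ⊗ₖ L
      = - e (F D) := by
    ext ⟨i, k⟩ ⟨j, l⟩
    by_cases hij : i = j
    · subst hij
      simp [he, hF, hD, hf, Matrix.compAlgEquiv_apply, AlgHom.mapMatrix_apply, map_apply,
        charmatrix_apply_eq, one_apply, Algebra.algebraMap_eq_smul_one, Matrix.sub_apply,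
        Matrix.smul_apply, mul_comm, smul_eq_mul]
    · simp [he, hF, hD, hf, Matrix.compAlgEquiv_apply, AlgHom.mapMatrix_apply, map_apply,
        charmatrix_apply_ne _ _ _ hij, one_apply, hij, Algebra.algebraMap_eq_smul_one,
        Matrix.smul_apply, mul_comm, smul_eq_mul]
  rw [hker, IsUnit.neg_iff, hEiff]
  have hdetD : D.det = B.charpoly := rfl
  have hcomm : ∀ a b : ℝ[X], Commute (f a) (f b) := by
    intro a b
    rw [commute_iff_eq, ← _root_.map_mul, ← _root_.map_mul, mul_comm]
  have hFsmul_one : F (B.charpoly • 1) = p • (1 : Matrix (Fin s) (Fin s) (Matrix (Fin N) (Fin N) ℝ)) := by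
    ext i j
    by_cases hij : i = j <;>
      simp [hF, hf, hp, Matrix.one_apply, hij, Matrix.smul_apply]
  have hmulAdj : F D * F (adjugate D) = p • 1 := by
    rw [← _root_.map_mul, Matrix.mul_adjugate, hdetD, hFsmul_one]
  have hAdjMul : F (adjugate D) * F D = p • 1 := by
    rw [← _root_.map_mul, Matrix.adjugate_mul, hdetD, hFsmul_one]
  constructor
  · -- hard direction: IsUnit (F D) → IsUnit p
    intro h
    have hA : IsUnit (e (F D)) := (hEiff _).mpr h
    set A : Matrix (Fin s × Fin N) (Fin s × Fin N) ℝ := e (F D) with hA'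
    have hdet : IsUnit A.det := (Matrix.isUnit_iff_isUnit_det A).mp hA
    set c : ℝ := A.charpoly.coeff 0 with hc
    have hcunit : IsUnit c := by
      rw [isUnit_iff_ne_zero]
      intro h0
      have hds := Matrix.det_eq_sign_charpoly_coeff A
      rw [← hc, h0, mul_zero] at hds
      rw [hds] at hdet
      simpa using hdet
    have hch : A * (Polynomial.aeval A A.charpoly.divX) + c • 1 = 0 := by
      have h1 : Polynomial.aeval A (X * A.charpoly.divX + C c) = 0 := by
        rw [X_mul_divX_add]
        exact Matrix.aeval_self_charpoly A
      rwa [_root_.map_add, _root_.map_mul, Polynomial.aeval_X, Polynomial.aeval_C,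
        Algebra.algebraMap_eq_smul_one] at h1
    set r : ℝ[X] := C (-c⁻¹) * A.charpoly.divX with hr
    have har : Polynomial.aeval A r = (-c⁻¹) • Polynomial.aeval A A.charpoly.divX := by
      rw [hr, _root_.map_mul, Polynomial.aeval_C, Algebra.algebraMap_eq_smul_one, smul_mul_assoc,
        one_mul]
    have hAr : A * Polynomial.aeval A r = 1 := by
      have h2 : A * (Polynomial.aeval A A.charpoly.divX) = -(c • 1) := by
        rw [eq_neg_iff_add_eq_zero]; exact hch
      rw [har, mul_smul_comm, h2]
      simp [smul_smul, inv_mul_cancel₀ (isUnit_iff_ne_zero.mp hcunit)]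
    have hcomA : ∀ u : ℝ[X], A * Polynomial.aeval A u = Polynomial.aeval A u * A := by
      intro u
      calc A * Polynomial.aeval A u = Polynomial.aeval A X * Polynomial.aeval A u := by
            rw [Polynomial.aeval_X]
        _ = Polynomial.aeval A (X * u) := (_root_.map_mul _ _ _).symm
        _ = Polynomial.aeval A (u * X) := by rw [mul_comm]
        _ = Polynomial.aeval A u * Polynomial.aeval A X := _root_.map_mul _ _ _
        _ = Polynomial.aeval A u * A := by rw [Polynomial.aeval_X]
    have hrA : Polynomial.aeval A r * A = 1 := by
      rw [← hcomA r, hAr]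
    -- transfer back through e and F
    have hV : Polynomial.aeval A r = e (F (Polynomial.aeval D r)) := by
      have h1 := Polynomial.aeval_algHom_apply (e.toAlgHom.comp F) D r
      simpa using h1
    set V : Matrix (Fin s) (Fin s) ℝ[X] := Polynomial.aeval D r with hVdef
    have h1 : F (D * V) = 1 := by
      have h0 : e (F (D * V)) = 1 := by rw [_root_.map_mul, _root_.map_mul, ← hV, ← hA', hAr]
      have := congrArg e.symm h0
      simpa using this
    -- push through the quotient by the kernel of f
    set J : Ideal ℝ[X] := RingHom.ker f.toRingHom with hJ
    set π : ℝ[X] →+* ℝ[X] ⧸ J := Ideal.Quotient.mk J with hπ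
    set g : ℝ[X] ⧸ J →+* Matrix (Fin N) (Fin N) ℝ := RingHom.kerLift f.toRingHom with hg
    have hgπ : ∀ x : ℝ[X], g (π x) = f x := fun x => RingHom.kerLift_mk f.toRingHom x
    have hginj : Function.Injective g := RingHom.kerLift_injective f.toRingHom
    have hmap1 : (D * V).map π = 1 := by
      ext i j
      apply hginj
      have hfij : f ((D * V) i j) = (1 : Matrix (Fin s) (Fin s) (Matrix (Fin N) (Fin N) ℝ)) i j := by
        have := congrFun (congrFun h1 i) j
        simpa [hF] using this
      by_cases hij : i = j
      · subst hij
        simpa [map_apply, hgπ, Matrix.one_apply] using hfij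
      · simp [map_apply, hgπ, hfij, Matrix.one_apply, hij]
    have hπunit : IsUnit (π D.det) := by
      apply IsUnit.of_mul_eq_one (π V.det)
      have h2 : π ((D * V).det) = 1 := by
        rw [RingHom.map_det, RingHom.mapMatrix_apply, hmap1, det_one]
      rw [det_mul, _root_.map_mul] at h2
      exact h2
    have hfin : IsUnit (g (π D.det)) := hπunit.map g
    rw [hgπ, hdetD] at hfin
    exact hfin
  · -- easy direction: IsUnit p → IsUnit (F D)
    intro h
    set q : Matrix (Fin N) (Fin N) ℝ := ↑h.unit⁻¹ with hq
    have hqp : q * p = 1 := h.val_inv_mul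
    have hqcomm : ∀ a : ℝ[X], Commute q (f a) := fun a => by
      have hcp : Commute (h.unit : Matrix (Fin N) (Fin N) ℝ) (f a) := by
        rw [IsUnit.unit_spec]
        exact hcomm B.charpoly a
      exact hcp.units_inv_left
    rw [isUnit_iff_exists]
    refine ⟨q • F (adjugate D), ?_, ?_⟩
    · have hmv : F D * (q • F (adjugate D)) = q • (F D * F (adjugate D)) := by
        refine Matrix.ext fun i j => ?_
        simp only [hF, AlgHom.mapMatrix_apply, Matrix.mul_apply, Matrix.smul_apply,
          Matrix.map_apply, smul_eq_mul, Finset.mul_sum]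
        refine Finset.sum_congr rfl fun k _ => ?_
        rw [← mul_assoc, ← (hqcomm (D i k)).eq, mul_assoc]
      rw [hmv, hmulAdj, smul_smul, hqp, one_smul]
    · rw [Matrix.smul_mul, hAdjMul, smul_smul, hqp, one_smul]
end

section
/- Let B be a real s×s matrix and L a real N×N matrix. Then det(B ⊗ I_N − I_s ⊗ L) = (−1)^{sN} · det(p_B(L)), where p_B is the characteristic polynomial of B and p_B(L) denotes its evaluation at the matrix L. -/
open Matrix Polynomial
open scoped Kronecker

variable {N m : ℕ}

/-- The index-splitting equivalence. -/
def splitEquiv (m N : ℕ) : Fin (m + 1) × Fin N ≃ (Fin N ⊕ Fin m × Fin N) where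
  toFun p := if h : p.1 = 0 then Sum.inl p.2 else Sum.inr (p.1.pred h, p.2)
  invFun x := Sum.elim (fun k => (0, k)) (fun q => (q.1.succ, q.2)) x
  left_inv := by rintro ⟨i, k⟩; by_cases h : i = 0 <;> simp [h]
  right_inv := by rintro (k | ⟨i, k⟩) <;> simp [Fin.succ_ne_zero]

@[simp] lemma splitEquiv_symm_inl (k : Fin N) : (splitEquiv m N).symm (Sum.inl k) = (0, k) := rfl
@[simp] lemma splitEquiv_symm_inr (q : Fin m × Fin N) :
    (splitEquiv m N).symm (Sum.inr q) = (q.1.succ, q.2) := rfl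

variable {K : Type*} [CommRing K]

lemma fact_det (C : Matrix (Fin (m + 1)) (Fin (m + 1)) K) (L : Matrix (Fin N) (Fin N) K)
    (hC : ∀ j, j ≠ 0 → C j 0 = 0) :
    (C ⊗ₖ (1 : Matrix (Fin N) (Fin N) K) - 1 ⊗ₖ L).det =
      (C 0 0 • (1 : Matrix (Fin N) (Fin N) K) - L).det *
        ((C.submatrix Fin.succ Fin.succ) ⊗ₖ (1 : Matrix (Fin N) (Fin N) K) - 1 ⊗ₖ L).det := by
  rw [← Matrix.det_reindex_self (splitEquiv m N) (C ⊗ₖ 1 - 1 ⊗ₖ L)]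
  have hre : (Matrix.reindex (splitEquiv m N) (splitEquiv m N)) (C ⊗ₖ (1 : Matrix (Fin N) (Fin N) K) - 1 ⊗ₖ L) =
      Matrix.fromBlocks (C 0 0 • (1 : Matrix (Fin N) (Fin N) K) - L)
        (Matrix.of fun k (q : Fin m × Fin N) => C 0 q.1.succ * (1 : Matrix (Fin N) (Fin N) K) k q.2)
        0
        ((C.submatrix Fin.succ Fin.succ) ⊗ₖ (1 : Matrix (Fin N) (Fin N) K) - 1 ⊗ₖ L) := by
    ext x y
    rcases x with k | ⟨i, k⟩ <;> rcases y with l | ⟨j, l⟩ <;>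
      simp [Matrix.reindex_apply, Matrix.submatrix_apply, Matrix.kroneckerMap_apply,
        Matrix.one_apply, Fin.succ_ne_zero, (Fin.succ_ne_zero _).symm, Fin.succ_inj,
        hC _ (Fin.succ_ne_zero _), smul_ite, mul_comm]
  rw [hre, Matrix.det_fromBlocks_zero₂₁]

lemma fact_charpoly (C : Matrix (Fin (m + 1)) (Fin (m + 1)) K)
    (hC : ∀ j, j ≠ 0 → C j 0 = 0) :
    C.charpoly = (X - Polynomial.C (C 0 0)) * (C.submatrix Fin.succ Fin.succ).charpoly := by
  have hsub : (charmatrix C).submatrix Fin.succ Fin.succ =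
      charmatrix (C.submatrix Fin.succ Fin.succ) := by
    ext i j
    by_cases h : i = j <;>
      simp [h, Matrix.submatrix_apply, charmatrix_apply_eq, charmatrix_apply_ne,
        fun hne : i ≠ j => (Fin.succ_inj.not.mpr hne : ¬ i.succ = j.succ)]
  rw [Matrix.charpoly, Matrix.det_succ_column_zero]
  rw [Finset.sum_eq_single 0]
  · simp [charmatrix_apply_eq, hsub, Matrix.charpoly]
  · intro i _ hi
    rw [charmatrix_apply_ne _ _ _ hi, hC i hi]
    simp
  · simp

section FieldPart


variable {N m s : ℕ} {F : Type*} [Field F]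

lemma conj_det (B P : Matrix (Fin s) (Fin s) F) (L : Matrix (Fin N) (Fin N) F)
    (h : IsUnit P.det) :
    ((P⁻¹ * B * P) ⊗ₖ (1 : Matrix (Fin N) (Fin N) F) - 1 ⊗ₖ L).det =
      (B ⊗ₖ (1 : Matrix (Fin N) (Fin N) F) - 1 ⊗ₖ L).det := by
  have key : (P⁻¹ * B * P) ⊗ₖ (1 : Matrix (Fin N) (Fin N) F) - 1 ⊗ₖ L =
      (P⁻¹ ⊗ₖ 1) * (B ⊗ₖ (1 : Matrix (Fin N) (Fin N) F) - 1 ⊗ₖ L) * (P ⊗ₖ 1) := by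
    simp only [Matrix.mul_sub, Matrix.sub_mul, ← Matrix.mul_kronecker_mul, Matrix.one_mul,
      Matrix.mul_one, Matrix.nonsing_inv_mul _ h]
  have hP : P⁻¹.det * P.det = 1 := by
    rw [← Matrix.det_mul, Matrix.nonsing_inv_mul _ h, Matrix.det_one]
  rw [key, Matrix.det_mul, Matrix.det_mul, Matrix.det_kronecker, Matrix.det_kronecker]
  simp only [Matrix.det_one, one_pow, mul_one]
  rw [mul_right_comm, ← mul_pow, hP, one_pow, one_mul]

lemma conj_charpoly (B P : Matrix (Fin s) (Fin s) F) (h : IsUnit P.det) :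
    (P⁻¹ * B * P).charpoly = B.charpoly := by
  have key : (P.map Polynomial.C) * charmatrix (P⁻¹ * B * P) =
      charmatrix B * (P.map Polynomial.C) := by
    rw [charmatrix, charmatrix, Matrix.mul_sub, Matrix.sub_mul]
    congr 1
    · exact (Matrix.scalar_commute (X : F[X]) (fun r => Commute.all _ _) (P.map Polynomial.C)).symm
    · have hB : P * (P⁻¹ * B * P) = B * P := by
        rw [← Matrix.mul_assoc, ← Matrix.mul_assoc, Matrix.mul_nonsing_inv _ h, Matrix.one_mul]
      have hmul : ∀ (M M' : Matrix (Fin s) (Fin s) F),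
          (M * M').map (Polynomial.C : F → F[X]) = M.map Polynomial.C * M'.map Polynomial.C := by
        intro M M'
        have := _root_.map_mul ((Polynomial.C : F →+* F[X]).mapMatrix) M M'
        simpa [RingHom.mapMatrix_apply] using this
      simp only [RingHom.mapMatrix_apply]
      rw [← hmul, ← hmul, hB]
  have hdet := congrArg Matrix.det key
  rw [Matrix.det_mul, Matrix.det_mul] at hdet
  have hPC : (P.map Polynomial.C).det = Polynomial.C P.det := by
    rw [← RingHom.mapMatrix_apply, ← RingHom.map_det]
  rw [hPC] at hdet
  have hC0 : (Polynomial.C P.det : F[X]) ≠ 0 := by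
    simp only [ne_eq, Polynomial.C_eq_zero]
    exact fun hh => by simp [hh] at h
  exact mul_left_cancel₀ hC0 (hdet.trans (mul_comm _ _))




lemma perm_det (B : Matrix (Fin s) (Fin s) F) (L : Matrix (Fin N) (Fin N) F)
    (σ : Equiv.Perm (Fin s)) :
    ((B.submatrix σ σ) ⊗ₖ (1 : Matrix (Fin N) (Fin N) F) - 1 ⊗ₖ L).det =
      (B ⊗ₖ (1 : Matrix (Fin N) (Fin N) F) - 1 ⊗ₖ L).det := by
  have key : (B.submatrix σ σ) ⊗ₖ (1 : Matrix (Fin N) (Fin N) F) - 1 ⊗ₖ L =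
      (B ⊗ₖ (1 : Matrix (Fin N) (Fin N) F) - 1 ⊗ₖ L).submatrix
        (Equiv.prodCongr σ (Equiv.refl (Fin N))) (Equiv.prodCongr σ (Equiv.refl (Fin N))) := by
    ext ⟨i, k⟩ ⟨j, l⟩
    simp [Matrix.kroneckerMap_apply, Matrix.one_apply, Matrix.submatrix_apply,
      EmbeddingLike.apply_eq_iff_eq]
  rw [key, Matrix.det_submatrix_equiv_self]

lemma perm_charpoly (B : Matrix (Fin s) (Fin s) F) (σ : Equiv.Perm (Fin s)) :
    (B.submatrix σ σ).charpoly = B.charpoly := by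
  rw [← Matrix.charpoly_reindex σ.symm B]
  simp [Matrix.reindex_apply]
end FieldPart




lemma eigen_reduce (B : Matrix (Fin (m + 1)) (Fin (m + 1)) ℂ) :
    ∃ C : Matrix (Fin (m + 1)) (Fin (m + 1)) ℂ,
      (∀ j, j ≠ 0 → C j 0 = 0) ∧ C.charpoly = B.charpoly ∧
      ∀ (L : Matrix (Fin N) (Fin N) ℂ),
        (C ⊗ₖ (1 : Matrix (Fin N) (Fin N) ℂ) - 1 ⊗ₖ L).det =
          (B ⊗ₖ (1 : Matrix (Fin N) (Fin N) ℂ) - 1 ⊗ₖ L).det := by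
  obtain ⟨μ, hμ⟩ := Module.End.exists_eigenvalue
    (Matrix.toLin' B : Module.End ℂ (Fin (m + 1) → ℂ))
  obtain ⟨v, hv⟩ := hμ.exists_hasEigenvector
  have hBv : B.mulVec v = μ • v := by
    have := hv.apply_eq_smul
    simpa [Matrix.toLin'_apply] using this
  obtain ⟨i₀, hi₀⟩ : ∃ i, v i ≠ 0 := by
    by_contra hcon
    push_neg at hcon
    exact hv.2 (funext fun i => hcon i)
  set P : Matrix (Fin (m + 1)) (Fin (m + 1)) ℂ :=
    (1 : Matrix (Fin (m + 1)) (Fin (m + 1)) ℂ).updateCol i₀ v with hPdef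
  have hdetP : P.det = v i₀ := by
    have := Matrix.cramer_apply (1 : Matrix (Fin (m + 1)) (Fin (m + 1)) ℂ) v i₀
    rw [Matrix.cramer_one] at this
    exact this.symm
  have hP : IsUnit P.det := by
    rw [hdetP]; exact isUnit_iff_ne_zero.mpr hi₀
  have hPv : P.mulVec (Pi.single i₀ 1) = v := by
    funext j
    rw [Matrix.mulVec_single]
    simp [hPdef, Matrix.updateCol_self]
  set A := P⁻¹ * B * P with hAdef
  have hAcol : A.mulVec (Pi.single i₀ 1) = μ • (Pi.single i₀ 1 : Fin (m + 1) → ℂ) := by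
    rw [hAdef, ← Matrix.mulVec_mulVec, ← Matrix.mulVec_mulVec, hPv, hBv,
      Matrix.mulVec_smul, ← hPv, Matrix.mulVec_mulVec, Matrix.nonsing_inv_mul _ hP,
      Matrix.one_mulVec]
  have hAe : ∀ j, A j i₀ = μ * (Pi.single i₀ (1 : ℂ) : Fin (m + 1) → ℂ) j := by
    intro j
    have h1 : A.mulVec (Pi.single i₀ 1) j = A j i₀ := by
      rw [Matrix.mulVec_single]; simp
    rw [← h1, hAcol]
    simp [Pi.smul_apply]
  set σ : Equiv.Perm (Fin (m + 1)) := Equiv.swap 0 i₀ with hσ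
  refine ⟨A.submatrix σ σ, ?_, ?_, ?_⟩
  · intro j hj
    have hσ0 : σ 0 = i₀ := Equiv.swap_apply_left 0 i₀
    have : A.submatrix σ σ j 0 = A (σ j) i₀ := by simp [Matrix.submatrix_apply, hσ0]
    rw [this, hAe]
    have : σ j ≠ i₀ := by
      rw [← hσ0]
      exact fun hc => hj (σ.injective hc)
    simp [Pi.single_eq_of_ne this]
  · rw [perm_charpoly, conj_charpoly _ _ hP]
  · intro L
    rw [perm_det, conj_det _ _ _ hP]

theorem keyC : ∀ (s : ℕ) (B : Matrix (Fin s) (Fin s) ℂ) (L : Matrix (Fin N) (Fin N) ℂ),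
    (B ⊗ₖ (1 : Matrix (Fin N) (Fin N) ℂ) - 1 ⊗ₖ L).det =
      (-1) ^ (s * N) * ((Polynomial.aeval L) B.charpoly).det := by
  intro s
  induction s with
  | zero =>
    intro B L
    haveI : IsEmpty (Fin 0 × Fin N) := ⟨fun p => p.1.elim0⟩
    have hB : B.charpoly = 1 := Matrix.det_isEmpty
    rw [Matrix.det_isEmpty, hB]
    simp
  | succ m ih =>
    intro B L
    obtain ⟨C, hC0, hCch, hCdet⟩ := eigen_reduce (N := N) B
    rw [← hCdet L, fact_det C L hC0, ih (C.submatrix Fin.succ Fin.succ) L, ← hCch,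
      fact_charpoly C hC0]
    rw [_root_.map_mul]
    have haev : (Polynomial.aeval L) (X - Polynomial.C (C 0 0)) =
        L - C 0 0 • (1 : Matrix (Fin N) (Fin N) ℂ) := by
      simp [Algebra.algebraMap_eq_smul_one]
    rw [haev, Matrix.det_mul]
    have hneg : (C 0 0 • (1 : Matrix (Fin N) (Fin N) ℂ) - L).det =
        (-1) ^ N * (L - C 0 0 • (1 : Matrix (Fin N) (Fin N) ℂ)).det := by
      rw [← neg_sub, Matrix.det_neg]
      simp
    rw [hneg]
    rw [Nat.succ_mul, pow_add]
    ring
section Transfer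

variable {s N : ℕ}

lemma map_big (B : Matrix (Fin s) (Fin s) ℝ) (L : Matrix (Fin N) (Fin N) ℝ) :
    (B ⊗ₖ (1 : Matrix (Fin N) (Fin N) ℝ) - 1 ⊗ₖ L).map (algebraMap ℝ ℂ) =
      (B.map (algebraMap ℝ ℂ)) ⊗ₖ (1 : Matrix (Fin N) (Fin N) ℂ) -
        1 ⊗ₖ (L.map (algebraMap ℝ ℂ)) := by
  ext ⟨i, k⟩ ⟨j, l⟩
  simp [Matrix.map_apply, Matrix.sub_apply, Matrix.kroneckerMap_apply, Matrix.one_apply,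
    apply_ite (algebraMap ℝ ℂ)]
  split_ifs <;> simp

lemma map_aeval (L : Matrix (Fin N) (Fin N) ℝ) (p : ℝ[X]) :
    ((Polynomial.aeval L) p).map (algebraMap ℝ ℂ) =
      (Polynomial.aeval (L.map (algebraMap ℝ ℂ))) (p.map (algebraMap ℝ ℂ)) := by
  have h1 := Polynomial.aeval_algHom_apply
    ((Algebra.ofId ℝ ℂ).mapMatrix : Matrix (Fin N) (Fin N) ℝ →ₐ[ℝ] Matrix (Fin N) (Fin N) ℂ) L p
  have h2 : ((Algebra.ofId ℝ ℂ).mapMatrix : Matrix (Fin N) (Fin N) ℝ →ₐ[ℝ] _) L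
      = L.map (algebraMap ℝ ℂ) := rfl
  rw [h2] at h1
  rw [Polynomial.aeval_map_algebraMap, h1]
  rfl

end Transfer

/-- The determinant identity underlying Lemma 3.1: for a real `s × s` matrix `B` and a real
`N × N` matrix `L`, `det (B ⊗ I_N - I_s ⊗ L) = (-1)^(s N) * det (p_B(L))`, where `p_B` is
the characteristic polynomial of `B` evaluated at `L`. -/
theorem stmt11 {s N : ℕ} (B : Matrix (Fin s) (Fin s) ℝ) (L : Matrix (Fin N) (Fin N) ℝ) :
    (B ⊗ₖ (1 : Matrix (Fin N) (Fin N) ℝ) -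
        (1 : Matrix (Fin s) (Fin s) ℝ) ⊗ₖ L).det =
      (-1) ^ (s * N) * ((Polynomial.aeval L) B.charpoly).det := by
  apply (algebraMap ℝ ℂ).injective
  rw [RingHom.map_det, RingHom.mapMatrix_apply, map_big, keyC]
  rw [_root_.map_mul, map_pow, map_neg, _root_.map_one, RingHom.map_det, RingHom.mapMatrix_apply,
    map_aeval, ← Matrix.charpoly_map]
end

section
/- Let L be a real symmetric n×n matrix satisfying x·(Lx) ≤ 0 for every x ∈ ℝⁿ (i.e., L is negative semidefinite), let η > 0 and β ∈ ℝ. Then ηI − L is invertible and the preconditioned operator P := (ηI − L)⁻²[(ηI − L)² + β²I] satisfies κ(P) := ‖P‖₂ · ‖P⁻¹‖₂ ≤ 1 + β²/η². -/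
open Matrix
open scoped RealInnerProductSpace

set_option maxHeartbeats 1000000
set_option synthInstance.maxHeartbeats 400000

private lemma auxIsUnit {n : ℕ} (A : Matrix (Fin n) (Fin n) ℝ) (c : ℝ) (hc : 0 < c)
    (h : ∀ x : EuclideanSpace ℝ (Fin n), c * ‖x‖ ^ 2 ≤ ⟪x, toEuclideanCLM (𝕜 := ℝ) A x⟫) :
    IsUnit A := by
  have hinj : Function.Injective (toEuclideanCLM (𝕜 := ℝ) A) := by
    intro a b hab
    have h0 : toEuclideanCLM (𝕜 := ℝ) A (a - b) = 0 := by rw [map_sub, hab, sub_self]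
    have h1 := h (a - b)
    rw [h0, inner_zero_right] at h1
    have h2 : ‖a - b‖ = 0 := by
      by_contra hne
      have hpos : 0 < ‖a - b‖ := lt_of_le_of_ne (norm_nonneg _) (Ne.symm hne)
      nlinarith [mul_pos hc (pow_pos hpos 2)]
    exact sub_eq_zero.mp (norm_eq_zero.mp h2)
  rw [← Matrix.mulVec_injective_iff_isUnit]
  intro x y hxy
  have h2 := hinj (a₁ := (WithLp.equiv 2 _).symm x) (a₂ := (WithLp.equiv 2 _).symm y) ?_
  · simpa using congrArg (WithLp.equiv 2 _) h2
  · simp [Matrix.toEuclideanCLM_toLp, Matrix.toLin'_apply, hxy]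

private lemma auxNormBound {n : ℕ} (c : ℝ) (hc : 0 < c)
    (T S : EuclideanSpace ℝ (Fin n) →L[ℝ] EuclideanSpace ℝ (Fin n))
    (hT : ∀ x, c * ‖x‖ ^ 2 ≤ ⟪x, T x⟫) (hTS : ∀ y, T (S y) = y) : ‖S‖ ≤ c⁻¹ := by
  apply ContinuousLinearMap.opNorm_le_bound _ (by positivity)
  intro y
  have h1 := hT (S y)
  rw [hTS y] at h1
  have h2 : ⟪S y, y⟫ ≤ ‖S y‖ * ‖y‖ := real_inner_le_norm _ _
  rcases eq_or_lt_of_le (norm_nonneg (S y)) with h0 | h0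
  · rw [← h0]; positivity
  · rw [inv_mul_eq_div, le_div_iff₀ hc]
    nlinarith

/-- For a real symmetric negative-semidefinite matrix `L` and `η > 0`, `β ∈ ℝ`, the
matrix `ηI - L` is invertible and the naive preconditioned operator
`P = (ηI - L)⁻² [(ηI - L)² + β² I]` has `ℓ²` condition number at most `1 + β²/η²`. -/
theorem stmt14 {n : ℕ} (η β : ℝ) (hη : 0 < η)
    (L : Matrix (Fin n) (Fin n) ℝ) (hsym : L.IsSymm)
    (hL : ∀ x : EuclideanSpace ℝ (Fin n), ⟪x, toEuclideanCLM (𝕜 := ℝ) L x⟫ ≤ 0) :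
    IsUnit (η • (1 : Matrix (Fin n) (Fin n) ℝ) - L) ∧
    l2OpNorm ((η • (1 : Matrix (Fin n) (Fin n) ℝ) - L)⁻¹ *
          (η • (1 : Matrix (Fin n) (Fin n) ℝ) - L)⁻¹ *
          ((η • (1 : Matrix (Fin n) (Fin n) ℝ) - L) ^ 2 + β ^ 2 • 1)) *
      l2OpNorm (((η • (1 : Matrix (Fin n) (Fin n) ℝ) - L)⁻¹ *
          (η • (1 : Matrix (Fin n) (Fin n) ℝ) - L)⁻¹ *
          ((η • (1 : Matrix (Fin n) (Fin n) ℝ) - L) ^ 2 + β ^ 2 • 1))⁻¹) ≤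
      1 + β ^ 2 / η ^ 2 := by
  set A : Matrix (Fin n) (Fin n) ℝ := η • (1 : Matrix (Fin n) (Fin n) ℝ) - L with hAdef
  -- coercivity of A
  have happly : ∀ x : EuclideanSpace ℝ (Fin n),
      toEuclideanCLM (𝕜 := ℝ) A x = η • x - toEuclideanCLM (𝕜 := ℝ) L x := by
    intro x; rw [hAdef]; simp [map_sub, _root_.map_smul]
  have hcoT : ∀ x : EuclideanSpace ℝ (Fin n),
      η * ‖x‖ ^ 2 ≤ ⟪x, toEuclideanCLM (𝕜 := ℝ) A x⟫ := by
    intro x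
    rw [happly x, inner_sub_right, real_inner_smul_right, real_inner_self_eq_norm_sq]
    linarith [hL x]
  have hAunit : IsUnit A := auxIsUnit A η hη hcoT
  refine ⟨hAunit, ?_⟩
  have hdet : IsUnit A.det := (Matrix.isUnit_iff_isUnit_det A).mp hAunit
  have hBA : A⁻¹ * A = 1 := Matrix.nonsing_inv_mul A hdet
  have hAB : A * A⁻¹ = 1 := Matrix.mul_nonsing_inv A hdet
  -- the matrix identity P = 1 + β² B²
  have h1 : A⁻¹ * A⁻¹ * A ^ 2 = 1 := by
    rw [pow_two, mul_assoc, ← mul_assoc A⁻¹ A A, hBA, one_mul, hBA]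
  have hPform : A⁻¹ * A⁻¹ * (A ^ 2 + β ^ 2 • 1) = 1 + β ^ 2 • (A⁻¹ * A⁻¹) := by
    rw [mul_add, h1, mul_smul_comm, mul_one]
  -- T S = id
  have hTS : ∀ y : EuclideanSpace ℝ (Fin n),
      toEuclideanCLM (𝕜 := ℝ) A (toEuclideanCLM (𝕜 := ℝ) A⁻¹ y) = y := by
    intro y
    have := congrArg (fun M => toEuclideanCLM (𝕜 := ℝ) M y) hAB
    simpa [_root_.map_mul, ContinuousLinearMap.mul_apply] using this
  have hSnorm : ‖toEuclideanCLM (𝕜 := ℝ) A⁻¹‖ ≤ η⁻¹ :=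
    auxNormBound η hη _ _ hcoT hTS
  -- φ P = 1 + β² S²
  have hPclm : toEuclideanCLM (𝕜 := ℝ) (n := Fin n) (A⁻¹ * A⁻¹ * (A ^ 2 + β ^ 2 • 1))
      = 1 + β ^ 2 • (toEuclideanCLM (𝕜 := ℝ) A⁻¹ * toEuclideanCLM (𝕜 := ℝ) A⁻¹) := by
    rw [hPform]
    simp [map_add, _root_.map_mul, _root_.map_smul, _root_.map_one]
  -- norm of φ P
  have hPnorm : ‖toEuclideanCLM (𝕜 := ℝ) (n := Fin n) (A⁻¹ * A⁻¹ * (A ^ 2 + β ^ 2 • 1))‖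
      ≤ 1 + β ^ 2 / η ^ 2 := by
    rw [hPclm]
    refine le_trans (norm_add_le _ _) ?_
    have e1 : ‖(1 : EuclideanSpace ℝ (Fin n) →L[ℝ] EuclideanSpace ℝ (Fin n))‖ ≤ 1 :=
      ContinuousLinearMap.norm_id_le
    have e2 : ‖β ^ 2 • (toEuclideanCLM (𝕜 := ℝ) A⁻¹ * toEuclideanCLM (𝕜 := ℝ) A⁻¹)‖
        ≤ β ^ 2 * (η⁻¹ * η⁻¹) := by
      refine le_trans (ContinuousLinearMap.opNorm_smul_le (β ^ 2) _) ?_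
      rw [Real.norm_eq_abs, abs_of_nonneg (sq_nonneg β)]
      refine mul_le_mul_of_nonneg_left ?_ (sq_nonneg β)
      refine le_trans (norm_mul_le _ _) ?_
      exact mul_le_mul hSnorm hSnorm (norm_nonneg _) (by positivity)
    have e3 : β ^ 2 * (η⁻¹ * η⁻¹) = β ^ 2 / η ^ 2 := by
      rw [div_eq_mul_inv, pow_two η, mul_inv]
    linarith
  -- symmetry of A
  have hAsymm : A.IsSymm := by
    rw [hAdef, Matrix.IsSymm, Matrix.transpose_sub, Matrix.transpose_smul,
      Matrix.transpose_one, hsym.eq]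
  have hherm : A.IsHermitian := by
    rwa [Matrix.IsHermitian, Matrix.conjTranspose_eq_transpose_of_trivial]
  have hsymT : ∀ x y : EuclideanSpace ℝ (Fin n),
      ⟪toEuclideanCLM (𝕜 := ℝ) A x, y⟫ = ⟪x, toEuclideanCLM (𝕜 := ℝ) A y⟫ := by
    intro x y
    have := (Matrix.isHermitian_iff_isSymmetric.mp hherm) x y
    exact this
  -- coercivity of φ P with constant 1
  have hcoP : ∀ x : EuclideanSpace ℝ (Fin n),
      (1 : ℝ) * ‖x‖ ^ 2
        ≤ ⟪x, toEuclideanCLM (𝕜 := ℝ) (n := Fin n) (A⁻¹ * A⁻¹ * (A ^ 2 + β ^ 2 • 1)) x⟫ := by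
    intro x
    have hPx : toEuclideanCLM (𝕜 := ℝ) (n := Fin n) (A⁻¹ * A⁻¹ * (A ^ 2 + β ^ 2 • 1)) x
        = x + β ^ 2 • (toEuclideanCLM (𝕜 := ℝ) A⁻¹ (toEuclideanCLM (𝕜 := ℝ) A⁻¹ x)) := by
      rw [hPclm]
      simp [ContinuousLinearMap.add_apply, ContinuousLinearMap.smul_apply,
        ContinuousLinearMap.mul_apply]
    have hx : toEuclideanCLM (𝕜 := ℝ) A (toEuclideanCLM (𝕜 := ℝ) A⁻¹ x) = x := hTS x
    have key : ⟪x, toEuclideanCLM (𝕜 := ℝ) A⁻¹ (toEuclideanCLM (𝕜 := ℝ) A⁻¹ x)⟫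
        = ‖toEuclideanCLM (𝕜 := ℝ) A⁻¹ x‖ ^ 2 := by
      calc ⟪x, toEuclideanCLM (𝕜 := ℝ) A⁻¹ (toEuclideanCLM (𝕜 := ℝ) A⁻¹ x)⟫
          = ⟪toEuclideanCLM (𝕜 := ℝ) A (toEuclideanCLM (𝕜 := ℝ) A⁻¹ x),
              toEuclideanCLM (𝕜 := ℝ) A⁻¹ (toEuclideanCLM (𝕜 := ℝ) A⁻¹ x)⟫ := by rw [hx]
        _ = ⟪toEuclideanCLM (𝕜 := ℝ) A⁻¹ x,
              toEuclideanCLM (𝕜 := ℝ) A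
                (toEuclideanCLM (𝕜 := ℝ) A⁻¹ (toEuclideanCLM (𝕜 := ℝ) A⁻¹ x))⟫ := hsymT _ _
        _ = ⟪toEuclideanCLM (𝕜 := ℝ) A⁻¹ x, toEuclideanCLM (𝕜 := ℝ) A⁻¹ x⟫ := by
              rw [hTS (toEuclideanCLM (𝕜 := ℝ) A⁻¹ x)]
        _ = ‖toEuclideanCLM (𝕜 := ℝ) A⁻¹ x‖ ^ 2 := real_inner_self_eq_norm_sq _
    rw [hPx, inner_add_right, real_inner_smul_right, real_inner_self_eq_norm_sq, key]
    nlinarith [sq_nonneg (‖toEuclideanCLM (𝕜 := ℝ) A⁻¹ x‖), sq_nonneg β]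
  have hPunit : IsUnit (A⁻¹ * A⁻¹ * (A ^ 2 + β ^ 2 • 1)) := auxIsUnit _ 1 one_pos hcoP
  have hPdet : IsUnit (A⁻¹ * A⁻¹ * (A ^ 2 + β ^ 2 • 1)).det :=
    (Matrix.isUnit_iff_isUnit_det _).mp hPunit
  have hPQ : (A⁻¹ * A⁻¹ * (A ^ 2 + β ^ 2 • 1)) * (A⁻¹ * A⁻¹ * (A ^ 2 + β ^ 2 • 1))⁻¹ = 1 :=
    Matrix.mul_nonsing_inv _ hPdet
  have hTSP : ∀ y : EuclideanSpace ℝ (Fin n),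
      toEuclideanCLM (𝕜 := ℝ) (n := Fin n) (A⁻¹ * A⁻¹ * (A ^ 2 + β ^ 2 • 1))
        (toEuclideanCLM (𝕜 := ℝ) (n := Fin n) (A⁻¹ * A⁻¹ * (A ^ 2 + β ^ 2 • 1))⁻¹ y) = y := by
    intro y
    have := congrArg (fun M => toEuclideanCLM (𝕜 := ℝ) M y) hPQ
    simpa [_root_.map_mul, ContinuousLinearMap.mul_apply] using this
  have hQnorm : ‖toEuclideanCLM (𝕜 := ℝ) (n := Fin n) (A⁻¹ * A⁻¹ * (A ^ 2 + β ^ 2 • 1))⁻¹‖ ≤ 1 := by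
    have := auxNormBound 1 one_pos _ _ hcoP hTSP
    rwa [inv_one] at this
  show l2OpNorm _ * l2OpNorm _ ≤ _
  unfold l2OpNorm
  calc ‖toEuclideanCLM (𝕜 := ℝ) (n := Fin n) (A⁻¹ * A⁻¹ * (A ^ 2 + β ^ 2 • 1))‖ *
        ‖toEuclideanCLM (𝕜 := ℝ) (n := Fin n) (A⁻¹ * A⁻¹ * (A ^ 2 + β ^ 2 • 1))⁻¹‖
      ≤ (1 + β ^ 2 / η ^ 2) * 1 :=
        mul_le_mul hPnorm hQnorm (norm_nonneg _) (by positivity)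
    _ = 1 + β ^ 2 / η ^ 2 := mul_one _
end

section
/- Let η > 0, δ > 0, β ∈ ℝ, and set γ* := (η² + β²)/δ. Let L be a real n×n matrix satisfying x·(Lx) ≤ 0 for every x ∈ ℝⁿ, and suppose L is singular, i.e., there exists w ≠ 0 with Lw = 0. Then the preconditioned operator P_{δ,γ*} := (δI − L)⁻¹(γ*I − L)⁻¹[(ηI − L)² + β²I] is well defined and its ℓ² operator norm satisfies ‖P_{δ,γ*}‖₂ = 1. -/
open Matrix
open scoped RealInnerProductSpace

lemma aux_isUnit {n : ℕ} (M : Matrix (Fin n) (Fin n) ℝ)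
    (h : Function.Injective (toEuclideanCLM (𝕜 := ℝ) M)) : IsUnit M := by
  rw [← Matrix.mulVec_injective_iff_isUnit]
  intro x y hxy
  have h2 : toEuclideanCLM (𝕜 := ℝ) M ((WithLp.equiv _ _).symm x)
      = toEuclideanCLM (𝕜 := ℝ) M ((WithLp.equiv _ _).symm y) := by
    change WithLp.toLp 2 (M *ᵥ x) = WithLp.toLp 2 (M *ᵥ y)
    exact congrArg _ hxy
  exact (WithLp.equiv _ _).symm.injective (h h2)

lemma aux_unit {n : ℕ} (α : ℝ) (hα : 0 < α) (L : Matrix (Fin n) (Fin n) ℝ)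
    (hL : ∀ x : EuclideanSpace ℝ (Fin n), ⟪x, toEuclideanCLM (𝕜 := ℝ) L x⟫ ≤ 0) :
    IsUnit (α • (1 : Matrix (Fin n) (Fin n) ℝ) - L) := by
  apply aux_isUnit
  rw [injective_iff_map_eq_zero]
  intro x hx
  have hx' : α • x - toEuclideanCLM (𝕜 := ℝ) L x = 0 := by
    simpa [_root_.map_sub, _root_.map_smul, sub_eq_zero] using hx
  have h1 : ⟪x, α • x - toEuclideanCLM (𝕜 := ℝ) L x⟫ = (0:ℝ) := by rw [hx']; simp
  rw [inner_sub_right, real_inner_smul_right, real_inner_self_eq_norm_sq] at h1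
  have h2 := hL x
  have h3 : ‖x‖ ^ 2 ≤ 0 := by nlinarith
  have h4 : ‖x‖ = 0 := by nlinarith [norm_nonneg x, sq_nonneg ‖x‖]
  exact norm_eq_zero.mp h4

lemma aux_ineq {n : ℕ} (a b u : EuclideanSpace ℝ (Fin n)) (s1 s2 c : ℝ)
    (h1 : 0 ≤ s2) (h2 : s2 ≤ s1) (hc : 0 ≤ c)
    (hab : ⟪a, b⟫ ≤ 0) (hub : ⟪u, b⟫ ≤ 0) :
    ‖a - s2 • b + c • u‖ ≤ ‖a - s1 • b + c • u‖ := by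
  have key : ‖a - s2 • b + c • u‖ ^ 2 ≤ ‖a - s1 • b + c • u‖ ^ 2 := by
    rw [← real_inner_self_eq_norm_sq, ← real_inner_self_eq_norm_sq]
    simp only [inner_sub_left, inner_sub_right, inner_add_left, inner_add_right,
      real_inner_smul_left, real_inner_smul_right]
    have hba : ⟪b, a⟫ = ⟪a, b⟫ := real_inner_comm a b
    have hbu : ⟪b, u⟫ = ⟪u, b⟫ := real_inner_comm u b
    rw [hba, hbu]
    have hbb : (0:ℝ) ≤ ⟪b, b⟫ := real_inner_self_nonneg
    nlinarith [mul_nonneg (mul_nonneg (sub_nonneg.mpr h2) (by linarith : (0:ℝ) ≤ s1 + s2)) hbb,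
      mul_nonneg (sub_nonneg.mpr h2) (neg_nonneg.mpr hab),
      mul_nonneg (mul_nonneg (sub_nonneg.mpr h2) hc) (neg_nonneg.mpr hub)]
  nlinarith [norm_nonneg (a - s2 • b + c • u), norm_nonneg (a - s1 • b + c • u)]

lemma aux_cancel {n : ℕ} (A B Q : Matrix (Fin n) (Fin n) ℝ) (hA : IsUnit A) (hB : IsUnit B)
    (hAB : Commute A B) (hQA : Commute Q A) (hQB : Commute Q B) :
    (A⁻¹ * B⁻¹ * Q) * (A * B) = Q := by
  have hdA := Matrix.isUnit_iff_isUnit_det A |>.mp hA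
  have hdB := Matrix.isUnit_iff_isUnit_det B |>.mp hB
  have hAA : A⁻¹ * A = 1 := Matrix.nonsing_inv_mul A hdA
  have hBB : B⁻¹ * B = 1 := Matrix.nonsing_inv_mul B hdB
  have hBB' : B * B⁻¹ = 1 := Matrix.mul_nonsing_inv B hdB
  have hBiA : B⁻¹ * A = A * B⁻¹ := by
    calc B⁻¹ * A = B⁻¹ * A * (B * B⁻¹) := by rw [hBB', mul_one]
    _ = B⁻¹ * (A * B) * B⁻¹ := by simp only [Matrix.mul_assoc]
    _ = (B⁻¹ * B) * (A * B⁻¹) := by rw [hAB.eq]; simp only [Matrix.mul_assoc]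
    _ = A * B⁻¹ := by rw [hBB, one_mul]
  calc A⁻¹ * B⁻¹ * Q * (A * B) = A⁻¹ * B⁻¹ * (Q * A * B) := by
        simp only [Matrix.mul_assoc]
  _ = A⁻¹ * (B⁻¹ * A) * (B * Q) := by rw [hQA.eq]; simp only [Matrix.mul_assoc, hQB.eq]
  _ = (A⁻¹ * A) * ((B⁻¹ * B) * Q) := by rw [hBiA]; simp only [Matrix.mul_assoc]
  _ = Q := by rw [hAA, hBB, one_mul, one_mul]

set_option maxHeartbeats 1000000 in
/-- If `L` has field of values in the closed left half-plane and is singular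
(`L w = 0` for some `w ≠ 0`), then with `γ* := (η² + β²)/δ` the preconditioned operator
`P = (δI - L)⁻¹ (γ* I - L)⁻¹ [(ηI - L)² + β² I]` is well defined and its `ℓ²` operator
norm equals `1`. -/
theorem stmt16 {n : ℕ} (η δ β : ℝ) (hη : 0 < η) (hδ : 0 < δ)
    (L : Matrix (Fin n) (Fin n) ℝ)
    (hL : ∀ x : EuclideanSpace ℝ (Fin n), ⟪x, toEuclideanCLM (𝕜 := ℝ) L x⟫ ≤ 0)
    (hsing : ∃ w : EuclideanSpace ℝ (Fin n), w ≠ 0 ∧ toEuclideanCLM (𝕜 := ℝ) L w = 0) :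
    IsUnit (δ • (1 : Matrix (Fin n) (Fin n) ℝ) - L) ∧
    IsUnit (((η ^ 2 + β ^ 2) / δ) • (1 : Matrix (Fin n) (Fin n) ℝ) - L) ∧
    l2OpNorm ((δ • (1 : Matrix (Fin n) (Fin n) ℝ) - L)⁻¹ *
        (((η ^ 2 + β ^ 2) / δ) • (1 : Matrix (Fin n) (Fin n) ℝ) - L)⁻¹ *
        ((η • (1 : Matrix (Fin n) (Fin n) ℝ) - L) ^ 2 + β ^ 2 • 1)) = 1 := by
  have hc : (0:ℝ) < η ^ 2 + β ^ 2 := by positivity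
  set c : ℝ := η ^ 2 + β ^ 2 with hcdef
  set γ : ℝ := c / δ with hγdef
  have hγ : 0 < γ := by positivity
  have hδγ : δ * γ = c := by rw [hγdef]; field_simp
  set A : Matrix (Fin n) (Fin n) ℝ := δ • 1 - L with hAdef
  set B : Matrix (Fin n) (Fin n) ℝ := γ • 1 - L with hBdef
  set Q : Matrix (Fin n) (Fin n) ℝ := (η • 1 - L) ^ 2 + β ^ 2 • 1 with hQdef
  have hAunit : IsUnit A := aux_unit δ hδ L hL
  have hBunit : IsUnit B := aux_unit γ hγ L hL
  refine ⟨hAunit, hBunit, ?_⟩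
  -- matrix identities
  have hQid : Q = L * L - (2*η) • L + c • 1 := by
    rw [hQdef, hcdef]
    simp only [sq, sub_mul, mul_sub, smul_mul_assoc, mul_smul_comm, mul_one, one_mul, smul_smul]
    module
  have hSid : A * B = L * L - (δ+γ) • L + c • 1 := by
    rw [hAdef, hBdef, ← hδγ]
    simp only [sub_mul, mul_sub, smul_mul_assoc, mul_smul_comm, mul_one, one_mul, smul_smul]
    module
  have hLA : Commute L A := by
    rw [hAdef]; exact ((Commute.one_right L).smul_right δ).sub_right (Commute.refl L)
  have hLB : Commute L B := by
    rw [hBdef]; exact ((Commute.one_right L).smul_right γ).sub_right (Commute.refl L)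
  have hAB : Commute A B := by
    rw [hBdef]
    exact ((Commute.one_right A).smul_right γ).sub_right hLA.symm
  have hQA : Commute Q A := by
    rw [hQid]
    exact ((hLA.mul_left hLA).sub_left (hLA.smul_left (2*η))).add_left
      ((Commute.one_left A).smul_left c)
  have hQB : Commute Q B := by
    rw [hQid]
    exact ((hLB.mul_left hLB).sub_left (hLB.smul_left (2*η))).add_left
      ((Commute.one_left B).smul_left c)
  set T := toEuclideanCLM (𝕜 := ℝ) L with hT
  have hdA := Matrix.isUnit_iff_isUnit_det A |>.mp hAunit
  have hdB := Matrix.isUnit_iff_isUnit_det B |>.mp hBunit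
  have happ : ∀ (M N : Matrix (Fin n) (Fin n) ℝ) (x : EuclideanSpace ℝ (Fin n)),
      toEuclideanCLM (𝕜 := ℝ) (M * N) x
        = toEuclideanCLM (𝕜 := ℝ) M (toEuclideanCLM (𝕜 := ℝ) N x) := by
    intro M N x; rw [_root_.map_mul]; rfl
  have hQapp : ∀ u : EuclideanSpace ℝ (Fin n),
      toEuclideanCLM (𝕜 := ℝ) Q u = T (T u) - (2*η) • T u + c • u := by
    intro u
    rw [hQid]
    simp only [_root_.map_add, _root_.map_sub, _root_.map_smul, _root_.map_mul, _root_.map_one,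
      ContinuousLinearMap.add_apply, ContinuousLinearMap.sub_apply,
      ContinuousLinearMap.coe_smul', Pi.smul_apply, ContinuousLinearMap.one_apply,
      ContinuousLinearMap.mul_apply, hT]
  have hSapp : ∀ u : EuclideanSpace ℝ (Fin n),
      toEuclideanCLM (𝕜 := ℝ) (A * B) u = T (T u) - (δ+γ) • T u + c • u := by
    intro u
    rw [hSid]
    simp only [_root_.map_add, _root_.map_sub, _root_.map_smul, _root_.map_mul, _root_.map_one,
      ContinuousLinearMap.add_apply, ContinuousLinearMap.sub_apply,
      ContinuousLinearMap.coe_smul', Pi.smul_apply, ContinuousLinearMap.one_apply,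
      ContinuousLinearMap.mul_apply, hT]
  have hkey : ∀ u : EuclideanSpace ℝ (Fin n),
      ‖toEuclideanCLM (𝕜 := ℝ) Q u‖ ≤ ‖toEuclideanCLM (𝕜 := ℝ) (A * B) u‖ := by
    intro u
    rw [hQapp u, hSapp u]
    refine aux_ineq _ _ _ _ _ _ (by positivity) ?_ hc.le ?_ (hL u)
    · nlinarith [sq_nonneg (δ - η), sq_nonneg β, hδ, hδγ, hcdef]
    · have h := hL (T u)
      rwa [real_inner_comm] at h
  show ‖toEuclideanCLM (𝕜 := ℝ) (A⁻¹ * B⁻¹ * Q)‖ = 1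
  apply le_antisymm
  · apply ContinuousLinearMap.opNorm_le_bound _ zero_le_one
    intro x
    rw [one_mul]
    set u := toEuclideanCLM (𝕜 := ℝ) (B⁻¹ * A⁻¹) x with hu
    have hABid : (A * B) * (B⁻¹ * A⁻¹) = 1 := by
      calc (A*B)*(B⁻¹*A⁻¹) = A * (B * B⁻¹) * A⁻¹ := by simp only [Matrix.mul_assoc]
      _ = 1 := by rw [Matrix.mul_nonsing_inv B hdB, mul_one, Matrix.mul_nonsing_inv A hdA]
    have hxu : toEuclideanCLM (𝕜 := ℝ) (A * B) u = x := by
      rw [hu, ← happ, hABid, _root_.map_one, ContinuousLinearMap.one_apply]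
    have hPx : toEuclideanCLM (𝕜 := ℝ) (A⁻¹ * B⁻¹ * Q) x = toEuclideanCLM (𝕜 := ℝ) Q u := by
      conv_lhs => rw [← hxu]
      rw [← happ, aux_cancel A B Q hAunit hBunit hAB hQA hQB]
    rw [hPx, ← hxu]
    exact hkey u
  · obtain ⟨w, hw0, hw⟩ := hsing
    have hγ0 : γ ≠ 0 := ne_of_gt hγ
    have hδ0 : δ ≠ 0 := ne_of_gt hδ
    have hQw : toEuclideanCLM (𝕜 := ℝ) Q w = c • w := by
      rw [hQapp w, hw]; simp
    have hAw' : toEuclideanCLM (𝕜 := ℝ) A w = δ • w := by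
      rw [hAdef, _root_.map_sub, _root_.map_smul, _root_.map_one, ContinuousLinearMap.sub_apply,
        ContinuousLinearMap.coe_smul', Pi.smul_apply, ContinuousLinearMap.one_apply, ← hT, hw,
        sub_zero]
    have hAw : toEuclideanCLM (𝕜 := ℝ) A⁻¹ w = δ⁻¹ • w := by
      calc toEuclideanCLM (𝕜 := ℝ) A⁻¹ w
          = toEuclideanCLM (𝕜 := ℝ) A⁻¹ (δ⁻¹ • (δ • w)) := by
            rw [smul_smul, inv_mul_cancel₀ hδ0, one_smul]
        _ = δ⁻¹ • toEuclideanCLM (𝕜 := ℝ) A⁻¹ (toEuclideanCLM (𝕜 := ℝ) A w) := by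
            rw [_root_.map_smul, hAw']
        _ = δ⁻¹ • w := by
            rw [← happ, Matrix.nonsing_inv_mul A hdA, _root_.map_one,
              ContinuousLinearMap.one_apply]
    have hBw' : toEuclideanCLM (𝕜 := ℝ) B w = γ • w := by
      rw [hBdef, _root_.map_sub, _root_.map_smul, _root_.map_one, ContinuousLinearMap.sub_apply,
        ContinuousLinearMap.coe_smul', Pi.smul_apply, ContinuousLinearMap.one_apply, ← hT, hw,
        sub_zero]
    have hBw : toEuclideanCLM (𝕜 := ℝ) B⁻¹ w = γ⁻¹ • w := by
      calc toEuclideanCLM (𝕜 := ℝ) B⁻¹ w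
          = toEuclideanCLM (𝕜 := ℝ) B⁻¹ (γ⁻¹ • (γ • w)) := by
            rw [smul_smul, inv_mul_cancel₀ hγ0, one_smul]
        _ = γ⁻¹ • toEuclideanCLM (𝕜 := ℝ) B⁻¹ (toEuclideanCLM (𝕜 := ℝ) B w) := by
            rw [_root_.map_smul, hBw']
        _ = γ⁻¹ • w := by
            rw [← happ, Matrix.nonsing_inv_mul B hdB, _root_.map_one,
              ContinuousLinearMap.one_apply]
    have hPw : toEuclideanCLM (𝕜 := ℝ) (A⁻¹ * B⁻¹ * Q) w = w := by
      rw [happ (A⁻¹ * B⁻¹) Q w, happ A⁻¹ B⁻¹, hQw, _root_.map_smul, hBw, _root_.map_smul,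
        _root_.map_smul, hAw, smul_smul, smul_smul]
      have hone : c * (γ⁻¹ * δ⁻¹) = 1 := by
        rw [← hδγ]; field_simp
      rw [mul_assoc, hone, one_smul]
    have hle := ContinuousLinearMap.le_opNorm (toEuclideanCLM (𝕜 := ℝ) (A⁻¹ * B⁻¹ * Q)) w
    rw [hPw] at hle
    have hwpos : 0 < ‖w‖ := norm_pos_iff.mpr hw0
    exact le_of_mul_le_mul_right (by rw [one_mul]; exact hle) hwpos
end

section
/- Let η > 0, δ > 0, β ∈ ℝ, and set γ* := (η² + β²)/δ and a := √(η² + β²) = √(δγ*). Let L be a real n×n matrix satisfying x·(Lx) ≤ 0 for every x ∈ ℝⁿ, and suppose the complexification of L has ia as an eigenvalue, i.e., there exists a nonzero w ∈ ℂⁿ with Lw = (ia)·w. Then the preconditioned operator P_{δ,γ*} := (δI − L)⁻¹(γ*I − L)⁻¹[(ηI − L)² + β²I] is invertible and ‖P_{δ,γ*}⁻¹‖₂ = (δ + γ*)/(2η). -/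
open Matrix
open scoped RealInnerProductSpace

lemma sq_norm_sub_smul {n : ℕ} (V y : EuclideanSpace ℝ (Fin n)) (c : ℝ) :
    ‖V - c • y‖ ^ 2 = ‖V‖ ^ 2 - 2 * c * ⟪V, y⟫ + c ^ 2 * ‖y‖ ^ 2 := by
  rw [norm_sub_sq_real, real_inner_smul_right, norm_smul]
  simp [Real.norm_eq_abs, mul_pow, sq_abs]
  ring

lemma key_ineq {n : ℕ} (f : EuclideanSpace ℝ (Fin n) →L[ℝ] EuclideanSpace ℝ (Fin n))
    (hf : ∀ x, ⟪x, f x⟫ ≤ 0) {η s a : ℝ} (hη : 0 < η) (hs : 2 * η ≤ s)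
    (u : EuclideanSpace ℝ (Fin n)) :
    ‖(f (f u) + a ^ 2 • u) - s • f u‖ ≤
      (s / (2 * η)) * ‖(f (f u) + a ^ 2 • u) - (2 * η) • f u‖ := by
  set V := f (f u) + a ^ 2 • u with hV
  have hr : ⟪V, f u⟫ ≤ 0 := by
    have h1 := hf (f u)
    have h2 := hf u
    have h3 : ⟪f (f u), f u⟫ = ⟪f u, f (f u)⟫ := real_inner_comm _ _
    rw [hV, inner_add_left, real_inner_smul_left]
    nlinarith [sq_nonneg a]
  have e1 := sq_norm_sub_smul V (f u) s
  have e2 := sq_norm_sub_smul V (f u) (2 * η)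
  have hspos : (0:ℝ) < s := by linarith
  have hsq : ((2 * η) * ‖V - s • f u‖) ^ 2 ≤ (s * ‖V - (2 * η) • f u‖) ^ 2 := by
    rw [mul_pow ((2:ℝ) * η), mul_pow s, e1, e2]
    have h1 : (0:ℝ) ≤ s ^ 2 - (2 * η) ^ 2 := by nlinarith
    have h2 : (0:ℝ) ≤ 4 * η * s * (s - 2 * η) := by
      have : (0:ℝ) ≤ s - 2 * η := by linarith
      positivity
    nlinarith [mul_nonneg h1 (sq_nonneg ‖V‖), mul_nonneg h2 (neg_nonneg.mpr hr)]
  have hlin : (2 * η) * ‖V - s • f u‖ ≤ s * ‖V - (2 * η) • f u‖ := by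
    have h0 : (0:ℝ) ≤ (2 * η) * ‖V - s • f u‖ := by positivity
    have h0' : (0:ℝ) ≤ s * ‖V - (2 * η) • f u‖ := by positivity
    nlinarith
  rw [div_mul_eq_mul_div, le_div_iff₀ (by positivity)]
  linarith [hlin]

set_option maxHeartbeats 1600000 in
/-- If `L` has field of values in the closed left half-plane and its complexification has
the eigenvalue `i √(η² + β²) = i √(δ γ*)` (with `γ* := (η² + β²)/δ`), then the
preconditioned operator `P = (δI - L)⁻¹ (γ* I - L)⁻¹ [(ηI - L)² + β² I]` is invertible
and `‖P⁻¹‖₂ = (δ + γ*)/(2η)`. -/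
theorem stmt17 {n : ℕ} (η δ β : ℝ) (hη : 0 < η) (hδ : 0 < δ)
    (L : Matrix (Fin n) (Fin n) ℝ)
    (hL : ∀ x : EuclideanSpace ℝ (Fin n), ⟪x, toEuclideanCLM (𝕜 := ℝ) L x⟫ ≤ 0)
    (heig : ∃ w : EuclideanSpace ℂ (Fin n), w ≠ 0 ∧
      toEuclideanCLM (𝕜 := ℂ) (L.map Complex.ofReal) w =
        ((Real.sqrt (η ^ 2 + β ^ 2) : ℂ) * Complex.I) • w) :
    IsUnit ((δ • (1 : Matrix (Fin n) (Fin n) ℝ) - L)⁻¹ *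
        (((η ^ 2 + β ^ 2) / δ) • (1 : Matrix (Fin n) (Fin n) ℝ) - L)⁻¹ *
        ((η • (1 : Matrix (Fin n) (Fin n) ℝ) - L) ^ 2 + β ^ 2 • 1)) ∧
    l2OpNorm (((δ • (1 : Matrix (Fin n) (Fin n) ℝ) - L)⁻¹ *
        (((η ^ 2 + β ^ 2) / δ) • (1 : Matrix (Fin n) (Fin n) ℝ) - L)⁻¹ *
        ((η • (1 : Matrix (Fin n) (Fin n) ℝ) - L) ^ 2 + β ^ 2 • 1))⁻¹) =
      (δ + (η ^ 2 + β ^ 2) / δ) / (2 * η) := by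
  classical
  obtain ⟨w, hw0, hw⟩ := heig
  have hδ0 : δ ≠ 0 := ne_of_gt hδ
  set a : ℝ := Real.sqrt (η ^ 2 + β ^ 2) with haDef
  have hab : a ^ 2 = η ^ 2 + β ^ 2 := Real.sq_sqrt (by positivity)
  have ha0 : 0 < a := Real.sqrt_pos.mpr (by positivity)
  set γ : ℝ := (η ^ 2 + β ^ 2) / δ with hγ
  have hγpos : 0 < γ := by rw [hγ]; positivity
  have hγδ : γ * δ = η ^ 2 + β ^ 2 := by rw [hγ]; field_simp
  set s : ℝ := δ + γ with hsDef
  have hs : 2 * η ≤ s := by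
    rw [hsDef, hγ, ← sub_nonneg]
    have h : δ + (η ^ 2 + β ^ 2) / δ - 2 * η = ((δ - η) ^ 2 + β ^ 2) / δ := by
      field_simp; ring
    rw [h]; positivity
  have hspos : (0:ℝ) < s := by linarith
  set f := toEuclideanCLM (𝕜 := ℝ) L with hfDef
  set A : Matrix (Fin n) (Fin n) ℝ := δ • 1 - L with hA
  set B : Matrix (Fin n) (Fin n) ℝ := γ • 1 - L with hB
  set M : Matrix (Fin n) (Fin n) ℝ := (η • 1 - L) ^ 2 + β ^ 2 • 1 with hM
  -- polynomial identities
  have hMX : M = L * L - (2 * η) • L + a ^ 2 • 1 := by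
    rw [hM, sq, hab]
    simp only [sub_mul, mul_sub, smul_mul_assoc, mul_smul_comm, mul_one, one_mul, smul_smul]
    module
  have hBA : B * A = L * L - s • L + a ^ 2 • 1 := by
    rw [hB, hA, hsDef, hab, ← hγδ]
    simp only [sub_mul, mul_sub, smul_mul_assoc, mul_smul_comm, mul_one, one_mul, smul_smul]
    module
  have hBAM : B * A = M + (2 * η - s) • L := by rw [hMX, hBA]; module
  have cLM : Commute L M := by
    rw [hMX]
    exact (((Commute.refl L).mul_right (Commute.refl L)).sub_right
      ((Commute.refl L).smul_right _)).add_right ((Commute.one_right L).smul_right _)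
  have cMBA : Commute M (B * A) := by
    rw [hBAM]
    exact (Commute.refl M).add_right (cLM.symm.smul_right _)
  -- injectivity criterion
  have unit_of : ∀ X : Matrix (Fin n) (Fin n) ℝ,
      (∀ x : EuclideanSpace ℝ (Fin n), toEuclideanCLM (𝕜 := ℝ) X x = 0 → x = 0) →
      IsUnit X := by
    intro X h
    rw [← Matrix.mulVec_injective_iff_isUnit]
    intro y z hyz
    have h0 : X.mulVec (y - z) = 0 := by rw [Matrix.mulVec_sub, hyz, sub_self]
    have h1 : toEuclideanCLM (𝕜 := ℝ) X ((WithLp.equiv 2 _).symm (y - z)) = 0 := by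
      show (WithLp.equiv 2 _).symm (X.mulVec (y - z)) = 0
      rw [h0]; rfl
    have h2 := h _ h1
    have h3 : y - z = 0 := by
      have := congrArg (WithLp.equiv 2 (Fin n → ℝ)) h2
      simpa using this
    exact sub_eq_zero.mp h3
  -- applied formulas
  have hφM : ∀ x : EuclideanSpace ℝ (Fin n),
      toEuclideanCLM (𝕜 := ℝ) M x = f (f x) - (2 * η) • f x + a ^ 2 • x := by
    intro x
    rw [hMX]
    simp [map_sub, map_add, _root_.map_smul, _root_.map_mul, ContinuousLinearMap.sub_apply,
      ContinuousLinearMap.add_apply, ContinuousLinearMap.smul_apply,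
      ContinuousLinearMap.mul_apply, ContinuousLinearMap.one_apply]
    rfl
  have hφBA : ∀ x : EuclideanSpace ℝ (Fin n),
      toEuclideanCLM (𝕜 := ℝ) (B * A) x = f (f x) - s • f x + a ^ 2 • x := by
    intro x
    rw [hBA]
    simp [map_sub, map_add, _root_.map_smul, _root_.map_mul, ContinuousLinearMap.sub_apply,
      ContinuousLinearMap.add_apply, ContinuousLinearMap.smul_apply,
      ContinuousLinearMap.mul_apply, ContinuousLinearMap.one_apply]
    rfl
  -- units
  have hUA : IsUnit A := by
    apply unit_of
    intro x hx
    have hAx : toEuclideanCLM (𝕜 := ℝ) A x = δ • x - f x := by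
      rw [hA]
      simp [map_sub, _root_.map_smul, ContinuousLinearMap.sub_apply,
        ContinuousLinearMap.smul_apply, ContinuousLinearMap.one_apply]
      rfl
    have hfx : f x = δ • x := by
      have h2 : δ • x - f x = 0 := hAx.symm.trans hx
      have := sub_eq_zero.mp h2
      exact this.symm
    have h1 := hL x
    rw [hfx, real_inner_smul_right, real_inner_self_eq_norm_sq] at h1
    have h2 : ‖x‖ ^ 2 = 0 := le_antisymm (by nlinarith) (sq_nonneg _)
    have h3 : ‖x‖ = 0 := (pow_eq_zero_iff (by norm_num : (2:ℕ) ≠ 0)).mp h2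
    exact norm_eq_zero.mp h3
  -- B is a unit
  have hUB : IsUnit B := by
    apply unit_of
    intro x hx
    have hBx : toEuclideanCLM (𝕜 := ℝ) B x = γ • x - f x := by
      rw [hB]
      simp [map_sub, _root_.map_smul, ContinuousLinearMap.sub_apply,
        ContinuousLinearMap.smul_apply, ContinuousLinearMap.one_apply]
      rfl
    have hfx : f x = γ • x := (sub_eq_zero.mp (hBx.symm.trans hx)).symm
    have h1 := hL x
    rw [hfx, real_inner_smul_right, real_inner_self_eq_norm_sq] at h1
    have h2 : ‖x‖ ^ 2 = 0 := le_antisymm (by nlinarith) (sq_nonneg _)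
    exact norm_eq_zero.mp ((pow_eq_zero_iff (by norm_num : (2:ℕ) ≠ 0)).mp h2)
  -- M is a unit
  have hUM : IsUnit M := by
    apply unit_of
    intro x hx
    have e : f (f x) - (2 * η) • f x + a ^ 2 • x = 0 := (hφM x).symm.trans hx
    have h3 : ⟪f x, f (f x) - (2 * η) • f x + a ^ 2 • x⟫ = 0 := by
      rw [e, inner_zero_right]
    rw [inner_add_right, inner_sub_right, real_inner_smul_right, real_inner_smul_right,
      real_inner_self_eq_norm_sq] at h3
    have h4 : ⟪f x, x⟫ ≤ 0 := by rw [real_inner_comm]; exact hL x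
    have h1 := hL (f x)
    have h5 : ‖f x‖ ^ 2 = 0 := by
      refine le_antisymm ?_ (sq_nonneg _)
      nlinarith [mul_nonpos_of_nonneg_of_nonpos (sq_nonneg a) h4]
    have hfx : f x = 0 :=
      norm_eq_zero.mp ((pow_eq_zero_iff (by norm_num : (2:ℕ) ≠ 0)).mp h5)
    rw [hfx, map_zero, smul_zero, sub_zero, zero_add] at e
    have ha2 : a ^ 2 ≠ 0 := by positivity
    exact (smul_eq_zero.mp e).resolve_left ha2
  have hdA : IsUnit A.det := (Matrix.isUnit_iff_isUnit_det A).mp hUA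
  have hdB : IsUnit B.det := (Matrix.isUnit_iff_isUnit_det B).mp hUB
  have hdM : IsUnit M.det := (Matrix.isUnit_iff_isUnit_det M).mp hUM
  constructor
  · exact ((Matrix.isUnit_nonsing_inv_iff.mpr hUA).mul
      (Matrix.isUnit_nonsing_inv_iff.mpr hUB)).mul hUM
  -- the inverse
  have hPinv : (A⁻¹ * B⁻¹ * M)⁻¹ = M⁻¹ * (B * A) := by
    rw [Matrix.mul_inv_rev, Matrix.mul_inv_rev, Matrix.nonsing_inv_nonsing_inv _ hdB,
      Matrix.nonsing_inv_nonsing_inv _ hdA]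
  set N : Matrix (Fin n) (Fin n) ℝ := M⁻¹ * (B * A) with hN
  have hNM : N * M = B * A := by
    calc N * M = M⁻¹ * ((B * A) * M) := by rw [hN, Matrix.mul_assoc]
    _ = M⁻¹ * (M * (B * A)) := by rw [cMBA.eq]
    _ = (M⁻¹ * M) * (B * A) := by rw [Matrix.mul_assoc]
    _ = B * A := by rw [Matrix.nonsing_inv_mul _ hdM, Matrix.one_mul]
  set g := toEuclideanCLM (𝕜 := ℝ) N with hg
  have hgm : ∀ x : EuclideanSpace ℝ (Fin n),
      g (toEuclideanCLM (𝕜 := ℝ) M x) = toEuclideanCLM (𝕜 := ℝ) (B * A) x := by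
    intro x
    rw [← hNM, _root_.map_mul]
    rfl
  rw [hPinv]
  show ‖g‖ = s / (2 * η)
  apply le_antisymm
  · -- upper bound
    apply ContinuousLinearMap.opNorm_le_bound _ (by positivity)
    intro x
    set u : EuclideanSpace ℝ (Fin n) := toEuclideanCLM (𝕜 := ℝ) M⁻¹ x with hu
    have hmu : toEuclideanCLM (𝕜 := ℝ) M u = x := by
      have h1 : toEuclideanCLM (𝕜 := ℝ) (M * M⁻¹) x = x := by
        rw [Matrix.mul_nonsing_inv _ hdM, _root_.map_one]
        rfl
      rw [hu, ← ContinuousLinearMap.mul_apply, ← _root_.map_mul]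
      exact h1
    have hgx : g x = (f (f u) + a ^ 2 • u) - s • f u := by
      rw [← hmu, hgm u, hφBA u]
      abel
    have hxu : x = (f (f u) + a ^ 2 • u) - (2 * η) • f u := by
      rw [← hmu, hφM u]
      abel
    rw [hgx]
    calc ‖(f (f u) + a ^ 2 • u) - s • f u‖
        ≤ (s / (2 * η)) * ‖(f (f u) + a ^ 2 • u) - (2 * η) • f u‖ :=
          key_ineq f hL hη hs u
      _ = (s / (2 * η)) * ‖x‖ := by rw [← hxu]
  · -- lower bound via the eigenvector
    set u0 : EuclideanSpace ℝ (Fin n) := (WithLp.equiv 2 _).symm (fun j => (w j).re) with hu0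
    set v0 : EuclideanSpace ℝ (Fin n) := (WithLp.equiv 2 _).symm (fun j => (w j).im) with hv0
    have hwj : ∀ j, (∑ k, (L j k : ℂ) * w k) = (↑a * Complex.I) * w j := by
      intro j
      have h1 := congrFun (congrArg (WithLp.equiv 2 (Fin n → ℂ)) hw) j
      have h2 : (WithLp.equiv 2 (Fin n → ℂ))
          (toEuclideanCLM (𝕜 := ℂ) (L.map Complex.ofReal) w) j
          = ∑ k, (L j k : ℂ) * w k := by
        show ((L.map Complex.ofReal).mulVec (WithLp.equiv 2 (Fin n → ℂ) w)) j
          = ∑ k, (L j k : ℂ) * w k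
        simp [Matrix.mulVec, dotProduct, Matrix.map_apply]
      rw [h2] at h1
      rw [h1]
      rfl
    have hrei : ∀ j, (∑ k, L j k * (w k).re = -(a * (w j).im)) ∧
        (∑ k, L j k * (w k).im = a * (w j).re) := by
      intro j
      have h := hwj j
      rw [Complex.ext_iff] at h
      obtain ⟨h1, h2⟩ := h
      simp only [Complex.re_sum, Complex.im_sum, Complex.mul_re, Complex.mul_im,
        Complex.I_re, Complex.I_im, Complex.ofReal_re, Complex.ofReal_im,
        mul_zero, mul_one, zero_mul, sub_zero, zero_sub, add_zero, zero_add] at h1 h2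
      constructor
      · rw [← h1]
      · rw [← h2]
    have hre : ∀ j, ∑ k, L j k * (w k).re = -(a * (w j).im) := fun j => (hrei j).1
    have him : ∀ j, ∑ k, L j k * (w k).im = a * (w j).re := fun j => (hrei j).2
    have hfu : f u0 = (-a) • v0 := by
      apply (WithLp.equiv 2 (Fin n → ℝ)).injective
      funext j
      show (L.mulVec (fun k => (w k).re)) j = -a * (w j).im
      simpa [Matrix.mulVec, dotProduct] using hre j
    have hfv : f v0 = a • u0 := by
      apply (WithLp.equiv 2 (Fin n → ℝ)).injective
      funext j
      show (L.mulVec (fun k => (w k).im)) j = a * (w j).re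
      simpa [Matrix.mulVec, dotProduct] using him j
    have key2 : ∀ (x y : EuclideanSpace ℝ (Fin n)) (c d : ℝ), c ≠ 0 → c * d = -(a ^ 2) →
        f x = c • y → f y = d • x → g y = (s / (2 * η)) • y := by
      intro x y c d hc hcd hx hy
      have hffx : f (f x) = (-(a ^ 2)) • x := by
        rw [hx, _root_.map_smul, hy, smul_smul, hcd]
      have e1 : toEuclideanCLM (𝕜 := ℝ) M x = (-(2 * η * c)) • y := by
        rw [hφM x, hffx, hx]
        module
      have e2 : toEuclideanCLM (𝕜 := ℝ) (B * A) x = (-(s * c)) • y := by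
        rw [hφBA x, hffx, hx]
        module
      have e3 : g ((-(2 * η * c)) • y) = (-(s * c)) • y := by rw [← e1, hgm x, e2]
      rw [ContinuousLinearMap.map_smul] at e3
      have hc2 : (-(2 * η * c)) ≠ 0 := by
        intro hzero
        apply hc
        have : 2 * η * c = 0 := by linarith [neg_eq_zero.mp hzero]
        rcases mul_eq_zero.mp this with h | h
        · nlinarith
        · exact h
      have h4 : g y = ((-(2 * η * c))⁻¹ * (-(s * c))) • y := by
        rw [← smul_smul, ← e3, smul_smul, inv_mul_cancel₀ hc2, one_smul]
      rw [h4]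
      congr 1
      field_simp
    have hcases : u0 ≠ 0 ∨ v0 ≠ 0 := by
      by_contra h
      push_neg at h
      obtain ⟨h1, h2⟩ := h
      apply hw0
      apply (WithLp.equiv 2 (Fin n → ℂ)).injective
      funext j
      apply Complex.ext
      · have := congrFun (congrArg (WithLp.equiv 2 (Fin n → ℝ)) h1) j
        simpa [hu0] using this
      · have := congrFun (congrArg (WithLp.equiv 2 (Fin n → ℝ)) h2) j
        simpa [hv0] using this
    have bound : ∀ x0 : EuclideanSpace ℝ (Fin n), x0 ≠ 0 →
        g x0 = (s / (2 * η)) • x0 → s / (2 * η) ≤ ‖g‖ := by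
      intro x0 h0 hgx
      have h1 := g.le_opNorm x0
      rw [hgx, norm_smul, Real.norm_eq_abs, abs_of_nonneg (by positivity)] at h1
      have hn : 0 < ‖x0‖ := norm_pos_iff.mpr h0
      exact le_of_mul_le_mul_right h1 hn
    rcases hcases with h | h
    · exact bound u0 h (key2 v0 u0 a (-a) (ne_of_gt ha0) (by ring) hfv hfu)
    · exact bound v0 h (key2 u0 v0 (-a) a (by simpa using ne_of_gt ha0) (by ring) hfu hfv)
end
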